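/- arXiv:1904.12060 — 9 statements merged into one kernel-verified Lean document; each statement's English description precedes it below -/
import Mathlib

section
/- Let H be a finite simple graph with a list assignment L, let γ be a proper partial L-coloring of H with domain D, and let S ⊆ D be a clique of H. Suppose the color shifting graph H_{S,γ} contains a directed cycle x_1 → x_2 → ⋯ → x_n → x_1 with pairwise distinct vertices. Then there exists a proper partial L-coloring γ' of H with the same domain D such that the set of elements on which γ' differs from γ is exactly S ∩ {x_1, …, x_n}. -/
/-- The set of colors available for `x` once `S` is uncolored: the list of `x` minus the
colors of the already-colored neighbors of `x` lying outside `S`. -/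
def availColors {V : Type*} [DecidableEq V] (H : SimpleGraph V) [DecidableRel H.Adj]
    (L : V → Finset ℕ) (D S : Finset V) (γ : V → ℕ) (x : V) : Finset ℕ :=
  L x \ ((D \ S).filter (fun w => H.Adj w x)).image γ

/-- The vertex set of the color shifting graph `H_{S,γ}`: the elements of `S` together with
one vertex `s_α` for each color `α` available for some element of `S`. -/
def csgVerts {V : Type*} [DecidableEq V] (H : SimpleGraph V) [DecidableRel H.Adj]
    (L : V → Finset ℕ) (D S : Finset V) (γ : V → ℕ) : Finset (V ⊕ ℕ) :=
  S.image Sum.inl ∪ (S.biUnion (availColors H L D S γ)).image Sum.inr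

/-- The arc relation of the color shifting graph `H_{S,γ}`. -/
def csgArc {V : Type*} [DecidableEq V] (H : SimpleGraph V) [DecidableRel H.Adj]
    (L : V → Finset ℕ) (D S : Finset V) (γ : V → ℕ) : V ⊕ ℕ → V ⊕ ℕ → Prop
  | Sum.inl x, Sum.inl y => x ≠ y ∧ γ x ∈ availColors H L D S γ y
  | Sum.inr α, Sum.inl x => α ∈ availColors H L D S γ x ∧ α ∉ S.image γ
  | Sum.inl _, Sum.inr _ => True
  | Sum.inr α, Sum.inr β => α ≠ β

/-- The color carried to position `i` of the cycle by its predecessor: the old color of a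
predecessor vertex, or the color of a predecessor color-node. -/
def prevColor {V : Type*} (γ : V → ℕ) {n : ℕ} (x : Fin (n + 1) → V ⊕ ℕ)
    (i : Fin (n + 1)) : ℕ :=
  Sum.elim γ id (x (i - 1))

/-- If the color shifting graph of a properly colored clique `S` contains a directed cycle
with pairwise distinct vertices, then one can recolor: there is a proper partial coloring
with the same domain differing from `γ` exactly on the elements of `S` on the cycle. -/
theorem csg_recolor {V : Type*} [DecidableEq V] (H : SimpleGraph V) [DecidableRel H.Adj]
    (L : V → Finset ℕ) (D : Finset V) (γ : V → ℕ)
    (hγL : ∀ v ∈ D, γ v ∈ L v)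
    (hγproper : ∀ v ∈ D, ∀ w ∈ D, H.Adj v w → γ v ≠ γ w)
    (S : Finset V) (hSD : S ⊆ D)
    (hclique : ∀ x ∈ S, ∀ y ∈ S, x ≠ y → H.Adj x y)
    (n : ℕ) (x : Fin (n + 1) → V ⊕ ℕ)
    (hmem : ∀ i, x i ∈ csgVerts H L D S γ)
    (hinj : Function.Injective x)
    (hcyc : ∀ i, csgArc H L D S γ (x i) (x (i + 1))) :
    ∃ γ' : V → ℕ,
      (∀ v ∈ D, γ' v ∈ L v) ∧
      (∀ v ∈ D, ∀ w ∈ D, H.Adj v w → γ' v ≠ γ' w) ∧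
      (∀ v ∈ D, (γ' v ≠ γ v ↔ v ∈ S ∧ ∃ i, x i = Sum.inl v)) := by
  classical
  have hsub : ∀ i : Fin (n + 1), i - 1 + 1 = i := fun i => sub_add_cancel i 1
  -- inl-vertices on the cycle lie in S
  have hS : ∀ (i : Fin (n + 1)) (v : V), x i = Sum.inl v → v ∈ S := by
    intro i v hv
    have h := hmem i
    rw [hv] at h
    simp only [csgVerts, Finset.mem_union, Finset.mem_image] at h
    rcases h with ⟨a, ha, hae⟩ | ⟨a, _, hae⟩
    · exact Sum.inl.inj hae ▸ ha
    · exact absurd hae (by simp)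
  -- no loops on the cycle
  have hne : ∀ i : Fin (n + 1), x (i - 1) ≠ x i := by
    intro i heq
    have h := hcyc (i - 1)
    rw [hsub i, heq] at h
    cases hx : x i with
    | inl v => rw [hx] at h; exact h.1 rfl
    | inr α => rw [hx] at h; exact h rfl
  -- the shifted color is available
  have key1 : ∀ (i : Fin (n + 1)) (v : V), x i = Sum.inl v →
      prevColor γ x i ∈ availColors H L D S γ v := by
    intro i v hv
    have h := hcyc (i - 1)
    rw [hsub i, hv] at h
    cases hx : x (i - 1) with
    | inl u =>
      rw [hx] at h
      have : prevColor γ x i = γ u := by simp [prevColor, hx]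
      rw [this]; exact h.2
    | inr α =>
      rw [hx] at h
      have : prevColor γ x i = α := by simp [prevColor, hx]
      rw [this]; exact h.1
  -- if the shifted color at i equals the old color of some w ∈ S, then w is the predecessor
  have key2 : ∀ (i : Fin (n + 1)) (v : V), x i = Sum.inl v → ∀ w ∈ S,
      prevColor γ x i = γ w → x (i - 1) = Sum.inl w := by
    intro i v hv w hw hpw
    have h := hcyc (i - 1)
    rw [hsub i, hv] at h
    cases hx : x (i - 1) with
    | inl u =>
      have hprev : prevColor γ x i = γ u := by simp [prevColor, hx]
      have hu : u ∈ S := hS (i - 1) u hx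
      have huw : u = w := by
        by_contra hne'
        exact hγproper u (hSD hu) w (hSD hw) (hclique u hu w hw hne')
          ((hprev.symm.trans hpw))
      exact congrArg Sum.inl huw
    | inr α =>
      rw [hx] at h
      have hprev : prevColor γ x i = α := by simp [prevColor, hx]
      exact absurd (Finset.mem_image.mpr ⟨w, hw, (hprev.symm.trans hpw).symm⟩) h.2
  -- shifted colors at distinct cycle positions (carrying inl-vertices) are distinct
  have key3 : ∀ (i j : Fin (n + 1)) (v w : V), x i = Sum.inl v → x j = Sum.inl w →
      prevColor γ x i = prevColor γ x j → i = j := by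
    intro i j v w hv hw hpp
    have hij : i - 1 = j - 1 → i = j := by
      intro h
      have := congrArg (· + 1) h
      simpa [hsub] using this
    cases hxj : x (j - 1) with
    | inl u =>
      have hu : u ∈ S := hS _ _ hxj
      have h1 : prevColor γ x i = γ u := by
        rw [hpp]; simp [prevColor, hxj]
      have h2 := key2 i v hv u hu h1
      exact hij (hinj (h2.trans hxj.symm))
    | inr β =>
      cases hxi : x (i - 1) with
      | inl u =>
        have hu : u ∈ S := hS _ _ hxi
        have h1 : prevColor γ x j = γ u := by
          rw [← hpp]; simp [prevColor, hxi]
        have h2 := key2 j w hw u hu h1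
        rw [hxj] at h2
        exact absurd h2 (by simp)
      | inr α =>
        have h1 : prevColor γ x i = α := by simp [prevColor, hxi]
        have h2 : prevColor γ x j = β := by simp [prevColor, hxj]
        have hab : α = β := by rw [← h1, ← h2, hpp]
        have : x (i - 1) = x (j - 1) := by rw [hxi, hxj, hab]
        exact hij (hinj this)
  -- the recoloring
  set γ' : V → ℕ := fun v =>
    if h : ∃ i, x i = Sum.inl v then prevColor γ x h.choose else γ v with hγ'def
  have hon : ∀ (i : Fin (n + 1)) (v : V), x i = Sum.inl v →
      γ' v = prevColor γ x i := by
    intro i v hv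
    have he : ∃ j, x j = Sum.inl v := ⟨i, hv⟩
    have hch : he.choose = i := hinj (he.choose_spec.trans hv.symm)
    simp only [hγ'def, dif_pos he, hch]
  have hoff : ∀ v : V, (¬∃ i, x i = Sum.inl v) → γ' v = γ v := by
    intro v hv
    simp only [hγ'def, dif_neg hv]
  -- shifted color avoids colors of outside neighbors
  have hout : ∀ (i : Fin (n + 1)) (v : V), x i = Sum.inl v →
      ∀ w ∈ D, w ∉ S → H.Adj w v → prevColor γ x i ≠ γ w := by
    intro i v hv w hwD hwS hadj heq
    have hav := Finset.mem_sdiff.mp (key1 i v hv)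
    exact hav.2 (Finset.mem_image.mpr ⟨w,
      Finset.mem_filter.mpr ⟨Finset.mem_sdiff.mpr ⟨hwD, hwS⟩, hadj⟩, heq.symm⟩)
  -- mixed properness: changed vs unchanged
  have hmix : ∀ v, ∀ w ∈ D, H.Adj v w → (∃ i, x i = Sum.inl v) →
      (¬∃ j, x j = Sum.inl w) → γ' v ≠ γ' w := by
    intro v w hwD hadj ⟨i, hi⟩ hno heq
    rw [hon i v hi, hoff w hno] at heq
    by_cases hwS : w ∈ S
    · exact hno ⟨i - 1, key2 i v hi w hwS heq⟩
    · exact hout i v hi w hwD hwS hadj.symm heq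
  refine ⟨γ', ?_, ?_, ?_⟩
  · intro v hv
    by_cases h : ∃ i, x i = Sum.inl v
    · obtain ⟨i, hi⟩ := h
      rw [hon i v hi]
      exact (Finset.mem_sdiff.mp (key1 i v hi)).1
    · rw [hoff v h]; exact hγL v hv
  · intro v hv w hw hadj
    by_cases h1 : ∃ i, x i = Sum.inl v <;> by_cases h2 : ∃ j, x j = Sum.inl w
    · obtain ⟨i, hi⟩ := h1
      obtain ⟨j, hj⟩ := h2
      rw [hon i v hi, hon j w hj]
      intro heq
      have := key3 i j v w hi hj heq
      rw [this, hj] at hi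
      exact hadj.ne (Sum.inl.inj hi).symm
    · exact hmix v w hw hadj h1 h2
    · exact (hmix w v hv hadj.symm h2 h1).symm
    · rw [hoff v h1, hoff w h2]
      exact hγproper v hv w hw hadj
  · intro v hv
    constructor
    · intro hne'
      by_cases h : ∃ i, x i = Sum.inl v
      · exact ⟨hS h.choose v h.choose_spec, h⟩
      · exact absurd (hoff v h) hne'
    · rintro ⟨hvS, i, hi⟩
      rw [hon i v hi]
      intro heq
      exact hne i ((key2 i v hi v hvS heq).trans hi.symm)
end

section
/- Every finite nonempty simple digraph has a strong component C such that |C| > d⁻(x) for every vertex x ∈ C, i.e., the size of C strictly exceeds the in-degree of each of its vertices. -/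
/-- Every finite nonempty simple digraph (an irreflexive relation `r` on a finite nonempty
vertex type, with an arc from `y` to `x` when `r y x`) has a strong component `C`
(an equivalence class of the mutual-reachability relation) whose size strictly exceeds the
in-degree of each of its vertices. -/
theorem exists_strongComponent_card_gt_indegree {V : Type*} [Fintype V] [Nonempty V]
    (r : V → V → Prop) (hr : Irreflexive r) :
    ∃ C : Set V,
      (∃ v : V, C = {w | Relation.ReflTransGen r v w ∧ Relation.ReflTransGen r w v}) ∧
      ∀ x ∈ C, {y | r y x}.ncard < C.ncard := by
  classical
  obtain ⟨v, hv⟩ := Finite.exists_max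
    (fun v => ({w | Relation.ReflTransGen r v w}).toFinset.card)
  refine ⟨{w | Relation.ReflTransGen r v w ∧ Relation.ReflTransGen r w v}, ⟨v, rfl⟩, ?_⟩
  have key : ∀ w, Relation.ReflTransGen r w v → Relation.ReflTransGen r v w := by
    intro w hwv
    have hsub : ({w' | Relation.ReflTransGen r v w'}).toFinset ⊆
        ({w' | Relation.ReflTransGen r w w'}).toFinset := by
      intro z hz
      simp only [Set.mem_toFinset, Set.mem_setOf_eq] at *
      exact hwv.trans hz
    have heq := Finset.eq_of_subset_of_card_le hsub (hv w)
    have : w ∈ ({w' | Relation.ReflTransGen r v w'}).toFinset := by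
      rw [heq]; simpa using Relation.ReflTransGen.refl
    simpa using this
  intro x hx
  have hsub : {y | r y x} ⊆
      {w | Relation.ReflTransGen r v w ∧ Relation.ReflTransGen r w v} \ {x} := by
    intro y hy
    have hyx : Relation.ReflTransGen r y x := Relation.ReflTransGen.single hy
    have hyv : Relation.ReflTransGen r y v := hyx.trans hx.2
    refine ⟨⟨key y hyv, hyv⟩, ?_⟩
    rintro rfl; exact hr _ hy
  calc {y | r y x}.ncard
      ≤ _ := Set.ncard_le_ncard hsub (Set.toFinite _)
    _ < _ := Set.ncard_diff_singleton_lt_of_mem hx (Set.toFinite _)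
end

section
/- Let H be a finite simple graph with a list assignment L, let γ be a proper partial L-coloring of H with domain D, and let S ⊆ D be a clique of H. Then in the color shifting graph H_{S,γ}, the in-degree of every vertex x ∈ S equals |x̂| − 1, and the in-degree of every color vertex s_α equals the total number of vertices of H_{S,γ} minus 1. -/
/-- The in-degree of a vertex of the color shifting graph: the number of its predecessors
among the vertices of the color shifting graph. -/
noncomputable def csgIndeg {V : Type*} [DecidableEq V] (H : SimpleGraph V)
    [DecidableRel H.Adj] (L : V → Finset ℕ) (D S : Finset V) (γ : V → ℕ) (z : V ⊕ ℕ) : ℕ :=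
  {y : V ⊕ ℕ | y ∈ csgVerts H L D S γ ∧ csgArc H L D S γ y z}.ncard

/-- In the color shifting graph of a properly colored clique `S`, every vertex `x ∈ S` has
in-degree `|x̂| - 1`, and every color vertex `s_α` has in-degree the number of vertices of the
color shifting graph minus one. -/
theorem csg_indeg {V : Type*} [DecidableEq V] (H : SimpleGraph V) [DecidableRel H.Adj]
    (L : V → Finset ℕ) (D : Finset V) (γ : V → ℕ)
    (hγL : ∀ v ∈ D, γ v ∈ L v)
    (hγproper : ∀ v ∈ D, ∀ w ∈ D, H.Adj v w → γ v ≠ γ w)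
    (S : Finset V) (hSD : S ⊆ D)
    (hclique : ∀ x ∈ S, ∀ y ∈ S, x ≠ y → H.Adj x y) :
    (∀ x ∈ S, csgIndeg H L D S γ (Sum.inl x) = (availColors H L D S γ x).card - 1) ∧
    (∀ α : ℕ, Sum.inr α ∈ csgVerts H L D S γ →
      csgIndeg H L D S γ (Sum.inr α) = (csgVerts H L D S γ).card - 1) := by
  classical
  set T := S.biUnion (availColors H L D S γ) with hT
  have hinj : ∀ y ∈ S, ∀ z ∈ S, γ y = γ z → y = z := by
    intro y hy z hz h
    by_contra hne
    exact hγproper y (hSD hy) z (hSD hz) (hclique y hy z hz hne) h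
  have hγav : ∀ x ∈ S, γ x ∈ availColors H L D S γ x := by
    intro x hx
    simp only [availColors, Finset.mem_sdiff, Finset.mem_image, Finset.mem_filter,
      Finset.mem_sdiff]
    refine ⟨hγL x (hSD hx), ?_⟩
    rintro ⟨w, ⟨⟨hwD, hwS⟩, hadj⟩, heq⟩
    exact hγproper w hwD x (hSD hx) hadj heq
  have hdisj : Disjoint (S.image (Sum.inl : V → V ⊕ ℕ)) (T.image Sum.inr) := by
    simp [Finset.disjoint_left]
  have hindeg : ∀ z, csgIndeg H L D S γ z =
      ((csgVerts H L D S γ).filter (fun y => csgArc H L D S γ y z)).card := by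
    intro z
    rw [csgIndeg, ← Set.ncard_coe_finset]
    congr 1
    ext y
    simp
  have hvcard : (csgVerts H L D S γ).card = S.card + T.card := by
    rw [csgVerts, Finset.card_union_of_disjoint hdisj,
      Finset.card_image_of_injective _ Sum.inl_injective,
      Finset.card_image_of_injective _ Sum.inr_injective]
  constructor
  · intro x hx
    rw [hindeg, csgVerts, Finset.filter_union,
      Finset.card_union_of_disjoint
        (hdisj.mono (Finset.filter_subset _ _) (Finset.filter_subset _ _))]
    have h1 : (S.image Sum.inl).filter (fun y => csgArc H L D S γ y (Sum.inl x)) =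
        (S.filter (fun y => y ≠ x ∧ γ y ∈ availColors H L D S γ x)).image Sum.inl := by
      ext y
      cases y with
      | inl a => simp [csgArc]
      | inr b => simp [csgArc]
    have h2 : (T.image Sum.inr).filter (fun y => csgArc H L D S γ y (Sum.inl x)) =
        ((availColors H L D S γ x \ S.image γ)).image Sum.inr := by
      ext y
      cases y with
      | inl a => simp [csgArc]
      | inr b =>
        simp only [Finset.mem_filter, Finset.mem_image, Finset.mem_sdiff, csgArc,
          Sum.inr.injEq, exists_eq_right]
        constructor
        · rintro ⟨-, h1, h2⟩; exact ⟨h1, h2⟩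
        · rintro ⟨h1', h2'⟩
          exact ⟨Finset.mem_biUnion.mpr ⟨x, hx, h1'⟩, h1', h2'⟩
    have himg : (S.filter (fun y => y ≠ x ∧ γ y ∈ availColors H L D S γ x)).image γ
        = (availColors H L D S γ x ∩ S.image γ).erase (γ x) := by
      ext α
      simp only [Finset.mem_image, Finset.mem_filter, Finset.mem_erase, Finset.mem_inter]
      constructor
      · rintro ⟨y, ⟨hyS, hyx, hyav⟩, rfl⟩
        exact ⟨fun h => hyx (hinj y hyS x hx h), hyav, ⟨y, hyS, rfl⟩⟩
      · rintro ⟨hne, hav, y, hyS, rfl⟩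
        exact ⟨y, ⟨hyS, fun h => hne (by rw [h]), hav⟩, rfl⟩
    have hc1 : (S.filter (fun y => y ≠ x ∧ γ y ∈ availColors H L D S γ x)).card =
        (availColors H L D S γ x ∩ S.image γ).card - 1 := by
      rw [← Finset.card_image_of_injOn (f := γ) (fun y hy z hz h =>
        hinj y (Finset.mem_filter.mp hy).1 z (Finset.mem_filter.mp hz).1 h), himg,
        Finset.card_erase_of_mem
          (Finset.mem_inter.mpr ⟨hγav x hx, Finset.mem_image_of_mem γ hx⟩)]
    rw [h1, h2, Finset.card_image_of_injective _ Sum.inl_injective,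
      Finset.card_image_of_injective _ Sum.inr_injective, hc1]
    have hkey := Finset.card_inter_add_card_sdiff (availColors H L D S γ x) (S.image γ)
    have hne : 0 < (availColors H L D S γ x ∩ S.image γ).card :=
      Finset.card_pos.mpr ⟨γ x, Finset.mem_inter.mpr ⟨hγav x hx, Finset.mem_image_of_mem γ hx⟩⟩
    omega
  · intro α hα
    have hαT : α ∈ T := by
      rw [csgVerts] at hα
      rcases Finset.mem_union.mp hα with h | h
      · simp at h
      · exact Finset.mem_biUnion.mpr (by simpa using h)
    rw [hindeg, csgVerts, Finset.filter_union,
      Finset.card_union_of_disjoint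
        (hdisj.mono (Finset.filter_subset _ _) (Finset.filter_subset _ _))]
    have hA : (S.image Sum.inl).filter (fun y => csgArc H L D S γ y (Sum.inr α)) =
        S.image Sum.inl := by
      apply Finset.filter_true_of_mem
      intro y hy
      obtain ⟨b, -, rfl⟩ := Finset.mem_image.mp hy
      trivial
    have hB : (T.image Sum.inr).filter (fun y => csgArc H L D S γ y (Sum.inr α)) =
        (T.erase α).image Sum.inr := by
      ext y
      cases y with
      | inl a => simp [csgArc]
      | inr b => simp [csgArc, and_comm]
    rw [hA, hB, Finset.card_image_of_injective _ Sum.inl_injective,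
      Finset.card_image_of_injective _ Sum.inr_injective,
      Finset.card_erase_of_mem hαT, ← hT, Finset.card_union_of_disjoint hdisj,
      Finset.card_image_of_injective _ Sum.inl_injective,
      Finset.card_image_of_injective _ Sum.inr_injective]
    have : 0 < T.card := Finset.card_pos.mpr ⟨α, hαT⟩
    omega
end

section
/- Let n ≥ 3 and let G be the graph with vertex set {u, v_1, …, v_n} whose edges are the cycle edges v_iv_{i+1} for 1 ≤ i ≤ n−1 and v_nv_1, together with the two edges uv_1 and uv_n. Let L be a list assignment with |L(x)| ≥ 2 for every vertex x of G. If |L(v_1)| ≥ 3, or if n is even and L(v_1) ≠ L(u), then G has a proper L-coloring. -/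
/-- The "frying pan" graph: a cycle `v_1 ⋯ v_n v_1` (here `some ⟨0⟩, …, some ⟨n-1⟩`)
together with an extra vertex `u` (here `none`) adjacent to `v_1` and `v_n`. -/
def fryingPan (n : ℕ) : SimpleGraph (Option (Fin n)) :=
  SimpleGraph.fromRel (fun a b =>
    match a, b with
    | some i, some j => j.val = i.val + 1 ∨ (i.val = n - 1 ∧ j.val = 0)
    | none, some j => j.val = 0 ∨ j.val = n - 1
    | _, _ => False)


def chainOn (K : ℕ → Finset ℕ) (m f g : ℕ) : Prop :=
  ∃ y : ℕ → ℕ, y 0 = f ∧ y m = g ∧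
    ∀ i, 1 ≤ i → i ≤ m → K i = {y (i-1), y i} ∧ y (i-1) ≠ y i

lemma chainOn_eq_all {K : ℕ → Finset ℕ} {m f : ℕ} {y y' : ℕ → ℕ}
    (hy0 : y 0 = f) (hy : ∀ i, 1 ≤ i → i ≤ m → K i = {y (i-1), y i} ∧ y (i-1) ≠ y i)
    (hy'0 : y' 0 = f) (hy' : ∀ i, 1 ≤ i → i ≤ m → K i = {y' (i-1), y' i} ∧ y' (i-1) ≠ y' i) :
    ∀ i, i ≤ m → y i = y' i := by
  intro i
  induction i with
  | zero => intro _; rw [hy0, hy'0]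
  | succ k ih =>
    intro hk
    have hyk : y k = y' k := ih (by omega)
    have h1 := hy (k+1) (by omega) hk
    have h2 := hy' (k+1) (by omega) hk
    simp only [Nat.add_sub_cancel] at h1 h2
    have hmem : y' (k+1) ∈ ({y k, y (k+1)} : Finset ℕ) := by
      rw [← h1.1, h2.1]; simp
    rcases Finset.mem_insert.mp hmem with h3 | h3
    · exact absurd (h3.trans hyk).symm h2.2
    · exact (Finset.mem_singleton.mp h3).symm

lemma chainOn_func {K : ℕ → Finset ℕ} {m f g g' : ℕ}
    (h : chainOn K m f g) (h' : chainOn K m f g') : g = g' := by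
  obtain ⟨y, hy0, hym, hy⟩ := h
  obtain ⟨y', hy'0, hy'm, hy'⟩ := h'
  rw [← hym, ← hy'm]
  exact chainOn_eq_all hy0 hy hy'0 hy' m le_rfl

lemma chainOn_eq_all' {K : ℕ → Finset ℕ} {m g : ℕ} {y y' : ℕ → ℕ}
    (hym : y m = g) (hy : ∀ i, 1 ≤ i → i ≤ m → K i = {y (i-1), y i} ∧ y (i-1) ≠ y i)
    (hy'm : y' m = g) (hy' : ∀ i, 1 ≤ i → i ≤ m → K i = {y' (i-1), y' i} ∧ y' (i-1) ≠ y' i) :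
    ∀ j, j ≤ m → y (m - j) = y' (m - j) := by
  intro j
  induction j with
  | zero => intro _; simpa using hym.trans hy'm.symm
  | succ k ih =>
    intro hk
    have ihk := ih (by omega)
    have h1 := hy (m - k) (by omega) (by omega)
    have h2 := hy' (m - k) (by omega) (by omega)
    have e1 : m - k - 1 = m - (k+1) := by omega
    rw [e1] at h1 h2
    have hmem : y' (m - (k+1)) ∈ ({y (m-(k+1)), y (m-k)} : Finset ℕ) := by
      rw [← h1.1, h2.1]; simp
    rcases Finset.mem_insert.mp hmem with h3 | h3
    · exact h3.symm
    · exfalso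
      apply h2.2
      rw [Finset.mem_singleton] at h3
      rw [h3, ihk]

lemma chainOn_inj {K : ℕ → Finset ℕ} {m f f' g : ℕ}
    (h : chainOn K m f g) (h' : chainOn K m f' g) : f = f' := by
  obtain ⟨y, hy0, hym, hy⟩ := h
  obtain ⟨y', hy'0, hy'm, hy'⟩ := h'
  rw [← hy0, ← hy'0]
  have := chainOn_eq_all' hym hy hy'm hy' m le_rfl
  simpa using this

lemma chainOn_parity {K : ℕ → Finset ℕ} {m f g h : ℕ} (hm : m % 2 = 0)
    (h1 : chainOn K m f g) (h2 : chainOn K m g h) : f = g := by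
  by_contra hfg
  obtain ⟨y, hy0, hym, hy⟩ := h1
  obtain ⟨y', hy'0, hy'm, hy'⟩ := h2
  have key : ∀ i, i ≤ m →
      ((i % 2 = 0 → y i = f ∧ y' i = g) ∧ (i % 2 = 1 → y i = g ∧ y' i = f)) := by
    intro i
    induction i with
    | zero => intro _; exact ⟨fun _ => ⟨hy0, hy'0⟩, fun hh => by omega⟩
    | succ k ih =>
      intro hk
      obtain ⟨e1, e2⟩ := ih (by omega)
      have hA := hy (k+1) (by omega) hk
      have hB := hy' (k+1) (by omega) hk
      simp only [Nat.add_sub_cancel] at hA hB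
      have hne : y k ≠ y' k := by
        rcases Nat.mod_two_eq_zero_or_one k with hp | hp
        · obtain ⟨u1, u2⟩ := e1 hp; rw [u1, u2]; exact hfg
        · obtain ⟨u1, u2⟩ := e2 hp; rw [u1, u2]; exact fun hh => hfg hh.symm
      have hy'k_mem : y' k ∈ ({y k, y (k+1)} : Finset ℕ) := by
        rw [← hA.1, hB.1]; simp
      have hyk_mem : y k ∈ ({y' k, y' (k+1)} : Finset ℕ) := by
        rw [← hB.1, hA.1]; simp
      have hy1 : y (k+1) = y' k := by
        rcases Finset.mem_insert.mp hy'k_mem with h3 | h3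
        · exact absurd h3.symm hne
        · exact (Finset.mem_singleton.mp h3).symm
      have hy2 : y' (k+1) = y k := by
        rcases Finset.mem_insert.mp hyk_mem with h3 | h3
        · exact absurd h3 hne
        · exact (Finset.mem_singleton.mp h3).symm
      constructor
      · intro hp
        obtain ⟨u1, u2⟩ := e2 (by omega)
        exact ⟨by rw [hy1, u2], by rw [hy2, u1]⟩
      · intro hp
        obtain ⟨u1, u2⟩ := e1 (by omega)
        exact ⟨by rw [hy1, u2], by rw [hy2, u1]⟩
  have hend := (key m le_rfl).1 hm
  exact hfg (hend.1.symm.trans hym)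

lemma path_color (K : ℕ → Finset ℕ) :
    ∀ m, 1 ≤ m → (∀ i, 1 ≤ i → i ≤ m → 2 ≤ (K i).card) → ∀ f g,
    (∃ c : ℕ → ℕ, (∀ i, 1 ≤ i → i ≤ m → c i ∈ K i) ∧
      (∀ i, 1 ≤ i → i < m → c i ≠ c (i+1)) ∧ c 1 ≠ f ∧ c m ≠ g)
    ∨ chainOn K m f g := by
  intro m
  induction m with
  | zero => intro h; omega
  | succ m ih =>
    intro _ hK f g
    by_cases hm : m = 0
    · subst hm
      by_cases hex : ∃ t ∈ K 1, t ≠ f ∧ t ≠ g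
      · obtain ⟨t, ht, htf, htg⟩ := hex
        left
        refine ⟨fun _ => t, ?_, ?_, htf, htg⟩
        · intro i h1 h2
          have : i = 1 := by omega
          subst this; exact ht
        · intro i h1 h2; omega
      · right
        push_neg at hex
        have hsub : K 1 ⊆ {f, g} := by
          intro s hs
          by_cases hsf : s = f
          · simp [hsf]
          · have := hex s hs hsf
            simp [this]
        have hcard : ({f, g} : Finset ℕ).card ≤ 2 := by
          apply le_trans (Finset.card_insert_le _ _); simp
        have hKeq : K 1 = {f, g} :=
          Finset.eq_of_subset_of_card_le hsub (le_trans hcard (hK 1 le_rfl le_rfl))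
        have hfg : f ≠ g := by
          intro hh
          have := hK 1 le_rfl le_rfl
          rw [hKeq, hh] at this
          simp at this
        exact ⟨fun i => if i = 0 then f else g, by simp, by simp, by
          intro i h1 h2
          have : i = 1 := by omega
          subst this
          simp [hKeq, hfg]⟩
    · have hm1 : 1 ≤ m := by omega
      have hK' : ∀ i, 1 ≤ i → i ≤ m → 2 ≤ (K i).card := fun i a b => hK i a (by omega)
      by_cases hall : ∀ t ∈ K (m+1), t ≠ g → chainOn K m f t
      · -- right disjunct
        have hcard := hK (m+1) (by omega) le_rfl
        obtain ⟨t₁, ht₁, t₂, ht₂, hne⟩ :=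
          Finset.one_lt_card.mp (show 1 < (K (m+1)).card by omega)
        have hex : ∃ t ∈ K (m+1), t ≠ g := by
          by_cases h1 : t₁ = g
          · exact ⟨t₂, ht₂, by rw [← h1]; exact fun hh => hne hh.symm⟩
          · exact ⟨t₁, ht₁, h1⟩
        obtain ⟨t, ht, htg⟩ := hex
        have hch := hall t ht htg
        have hsub : K (m+1) ⊆ {t, g} := by
          intro s hs
          by_cases hsg : s = g
          · simp [hsg]
          · have := chainOn_func (hall s hs hsg) hch
            simp [this]
        have hc2 : ({t, g} : Finset ℕ).card ≤ 2 := by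
          apply le_trans (Finset.card_insert_le _ _); simp
        have hKeq : K (m+1) = {t, g} :=
          Finset.eq_of_subset_of_card_le hsub (le_trans hc2 hcard)
        right
        obtain ⟨y, hy0, hym, hy⟩ := hch
        refine ⟨fun i => if i = m+1 then g else y i, by simp [hy0], by simp, ?_⟩
        intro i h1 h2
        by_cases him : i = m+1
        · subst him
          have e : m + 1 - 1 = m := by omega
          constructor
          · show K (m+1) = {if m+1-1 = m+1 then g else y (m+1-1),
              if m+1 = m+1 then g else y (m+1)}
            rw [if_pos rfl, if_neg (show ¬ m+1-1 = m+1 by omega), e, hym, hKeq]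
          · show (if m+1-1 = m+1 then g else y (m+1-1)) ≠
              (if m+1 = m+1 then g else y (m+1))
            rw [if_pos rfl, if_neg (show ¬ m+1-1 = m+1 by omega), e, hym]
            exact htg
        · have hi : i ≤ m := by omega
          simp only [if_neg him, if_neg (show ¬ (i - 1 = m + 1) by omega)]
          exact hy i h1 hi
      · push_neg at hall
        obtain ⟨t, ht, htg, hnch⟩ := hall
        rcases ih hm1 hK' f t with ⟨c, hcmem, hcadj, hc1, hcm⟩ | hchain
        · left
          refine ⟨fun i => if i = m+1 then t else c i, ?_, ?_, ?_, ?_⟩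
          · intro i h1 h2
            by_cases him : i = m+1
            · subst him; simpa using ht
            · simp only [if_neg him]; exact hcmem i h1 (by omega)
          · intro i h1 h2
            by_cases him : i = m
            · simp only [if_neg (show ¬ i = m+1 by omega),
                if_pos (show i + 1 = m+1 by omega)]
              rw [him]; exact hcm
            · simp only [if_neg (show ¬ i = m+1 by omega),
                if_neg (show ¬ i+1 = m+1 by omega)]
              exact hcadj i h1 (by omega)
          · simp only [if_neg (show ¬ 1 = m+1 by omega)]; exact hc1
          · simpa using htg
        · exact absurd hchain hnch


lemma select (Lu L0 L1 : Finset ℕ) (hu : 2 ≤ Lu.card) (h0 : 2 ≤ L0.card)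
    (h1 : 2 ≤ L1.card) (ch : ℕ → ℕ → Prop)
    (func : ∀ {z b b'}, ch z b → ch z b' → b = b')
    (inj : ∀ {z z' b}, ch z b → ch z' b → z = z')
    (hcond : 3 ≤ L0.card ∨ ((∀ {z b c}, ch z b → ch b c → z = b) ∧ L0 ≠ Lu)) :
    ∃ z ∈ L0, ∃ b ∈ L1, ∃ a ∈ Lu, z ≠ b ∧ a ≠ b ∧ a ≠ z ∧ ¬ ch z b := by
  by_contra hcon
  push_neg at hcon
  have luEq : ∀ z b : ℕ, Lu ⊆ {z, b} → Lu = {z, b} ∧ z ≠ b ∧ z ∈ Lu ∧ b ∈ Lu := by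
    intro z b hsub
    have hc2 : ({z, b} : Finset ℕ).card ≤ 2 := by
      apply le_trans (Finset.card_insert_le _ _); simp
    have heq := Finset.eq_of_subset_of_card_le hsub (le_trans hc2 hu)
    refine ⟨heq, ?_, by rw [heq]; simp, by rw [heq]; simp⟩
    intro hh
    subst hh
    rw [heq] at hu
    simp at hu
  have failAll : ∀ z ∈ L0, ∀ b ∈ L1, z = b ∨ ch z b ∨ Lu ⊆ {z, b} := by
    intro z hz b hb
    by_cases hzb : z = b
    · exact Or.inl hzb
    by_cases hch : ch z b
    · exact Or.inr (Or.inl hch)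
    right; right
    intro x hx
    by_contra hxm
    simp only [Finset.mem_insert, Finset.mem_singleton, not_or] at hxm
    exact hch (hcon z hz b hb x hx hzb hxm.2 hxm.1)
  -- Case A : 3 ≤ L0.card
  by_cases hA : 3 ≤ L0.card
  · obtain ⟨b₁, hb₁, b₂, hb₂, hbne⟩ :=
      Finset.one_lt_card.mp (show 1 < L1.card by omega)
    obtain ⟨x₁, hx₁, x₂, hx₂, x₃, hx₃, h12, h13, h23⟩ :=
      Finset.two_lt_card.mp (show 2 < L0.card by omega)
    obtain ⟨zs, w₁, w₂, hzs, hw₁, hw₂, hzw₁, hzw₂, hw12, hzb₁, hzb₂⟩ :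
        ∃ zs w₁ w₂ : ℕ, zs ∈ L0 ∧ w₁ ∈ L0 ∧ w₂ ∈ L0 ∧ zs ≠ w₁ ∧ zs ≠ w₂ ∧
          w₁ ≠ w₂ ∧ zs ≠ b₁ ∧ zs ≠ b₂ := by
      by_cases c1 : x₁ ≠ b₁ ∧ x₁ ≠ b₂
      · exact ⟨x₁, x₂, x₃, hx₁, hx₂, hx₃, h12, h13, h23, c1.1, c1.2⟩
      by_cases c2 : x₂ ≠ b₁ ∧ x₂ ≠ b₂
      · exact ⟨x₂, x₁, x₃, hx₂, hx₁, hx₃, fun h => h12 h.symm, h23, h13, c2.1, c2.2⟩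
      · refine ⟨x₃, x₁, x₂, hx₃, hx₁, hx₂, fun h => h13 h.symm, fun h => h23 h.symm,
          h12, ?_, ?_⟩ <;> (push_neg at c1 c2; omega)
    have finishA : ∀ b b', b ∈ L1 → b' ∈ L1 → b ≠ b' → zs ≠ b' → Lu = {zs, b} →
        ch zs b' → False := by
      intro b b' hb hb' hbb' hzsb' hLu hchb'
      -- for w₁ w₂ : reasons vs b'
      have hw : ∀ w, w ∈ L0 → zs ≠ w → w = b' ∨ ch w b' := by
        intro w hw hzw
        rcases failAll w hw b' hb' with h | h | h
        · exact Or.inl h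
        · exact Or.inr h
        · exfalso
          have : zs ∈ ({w, b'} : Finset ℕ) := h (by rw [hLu]; simp)
          simp only [Finset.mem_insert, Finset.mem_singleton] at this
          rcases this with h' | h'
          · exact hzw h'
          · exact hzsb' h'
      rcases hw w₁ hw₁ hzw₁ with hh1 | hh1 <;> rcases hw w₂ hw₂ hzw₂ with hh2 | hh2
      · exact hw12 (hh1.trans hh2.symm)
      · exact hzw₂ (inj hchb' hh2)
      · exact hzw₁ (inj hchb' hh1)
      · exact hzw₁ (inj hchb' hh1)
    rcases failAll zs hzs b₁ hb₁ with h | h | h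
    · exact hzb₁ h
    · -- ch zs b₁; look at b₂
      rcases failAll zs hzs b₂ hb₂ with h' | h' | h'
      · exact hzb₂ h'
      · exact hbne (func h h')
      · exact finishA b₂ b₁ hb₂ hb₁ (fun hh => hbne hh.symm) hzb₁ (luEq zs b₂ h').1 h
    · -- Lu = {zs, b₁}; look at b₂
      have hLu := (luEq zs b₁ h).1
      rcases failAll zs hzs b₂ hb₂ with h' | h' | h'
      · exact hzb₂ h'
      · exact finishA b₁ b₂ hb₁ hb₂ hbne hzb₂ hLu h'
      · -- Lu ⊆ {zs, b₂} : b₁ ∈ Lu ⇒ b₁ = zs ∨ b₁ = b₂ : contra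
        have : b₁ ∈ ({zs, b₂} : Finset ℕ) := h' (by rw [hLu]; simp)
        simp only [Finset.mem_insert, Finset.mem_singleton] at this
        rcases this with h'' | h''
        · exact hzb₁ h''.symm
        · exact hbne h''
  · -- Case B
    rcases hcond with h3 | ⟨hpar, hne⟩
    · exact hA h3
    by_cases hsub : ∀ x ∈ L0, x ∈ Lu
    · -- B2 : L0 ⊆ Lu, get a₀ ∈ Lu \ L0
      have hss : L0 ⊂ Lu := Finset.ssubset_iff_subset_ne.mpr ⟨fun x hx => hsub x hx, hne⟩
      obtain ⟨a₀, ha₀u, ha₀0⟩ := Finset.exists_of_ssubset hss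
      have h0' : L0.card = 2 := by omega
      obtain ⟨z₁, z₂, hz12, hL0⟩ := Finset.card_eq_two.mp h0'
      have hz₁ : z₁ ∈ L0 := by rw [hL0]; simp
      have hz₂ : z₂ ∈ L0 := by rw [hL0]; simp
      have key1 : ∀ b ∈ L1, b ≠ a₀ → (b = z₁ ∧ ch z₂ b) ∨ (b = z₂ ∧ ch z₁ b) := by
        intro b hb hba
        have noLu : ∀ z, z ∈ L0 → ¬ Lu ⊆ {z, b} := by
          intro z hz hLu
          have : a₀ ∈ ({z, b} : Finset ℕ) := hLu ha₀u
          simp only [Finset.mem_insert, Finset.mem_singleton] at this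
          rcases this with h' | h'
          · exact ha₀0 (h' ▸ hz)
          · exact hba h'.symm
        have r1 : z₁ = b ∨ ch z₁ b := by
          rcases failAll z₁ hz₁ b hb with h | h | h
          · exact Or.inl h
          · exact Or.inr h
          · exact absurd h (noLu z₁ hz₁)
        have r2 : z₂ = b ∨ ch z₂ b := by
          rcases failAll z₂ hz₂ b hb with h | h | h
          · exact Or.inl h
          · exact Or.inr h
          · exact absurd h (noLu z₂ hz₂)
        rcases r1 with h | h <;> rcases r2 with h' | h'
        · exact absurd (h.trans h'.symm) hz12
        · exact Or.inl ⟨h.symm, h'⟩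
        · exact Or.inr ⟨h'.symm, h⟩
        · exact absurd (inj h h') hz12
      by_cases htwo : ∃ b b', b ∈ L1 ∧ b' ∈ L1 ∧ b ≠ b' ∧ b ≠ a₀ ∧ b' ≠ a₀
      · obtain ⟨b, b', hb, hb', hbb', hba, hb'a⟩ := htwo
        rcases key1 b hb hba with ⟨e1, c1⟩ | ⟨e1, c1⟩ <;>
          rcases key1 b' hb' hb'a with ⟨e2, c2⟩ | ⟨e2, c2⟩
        · exact hbb' (e1.trans e2.symm)
        · exact hz12 (hpar (e1 ▸ c1) (e2 ▸ c2)).symm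
        · exact hz12 (hpar (e1 ▸ c1) (e2 ▸ c2))
        · exact hbb' (e1.trans e2.symm)
      · -- L1 = {a₀, b} with b ≠ a₀
        obtain ⟨c₁, hc₁, c₂, hc₂, hcne⟩ :=
          Finset.one_lt_card.mp (show 1 < L1.card by omega)
        obtain ⟨ha₀L1, b, hbL1, hba⟩ : a₀ ∈ L1 ∧ ∃ b ∈ L1, b ≠ a₀ := by
          by_cases e1 : c₁ = a₀
          · exact ⟨e1 ▸ hc₁, c₂, hc₂, fun h => hcne (e1 ▸ h ▸ rfl)⟩
          by_cases e2 : c₂ = a₀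
          · exact ⟨e2 ▸ hc₂, c₁, hc₁, e1⟩
          · exact absurd ⟨c₁, c₂, hc₁, hc₂, hcne, e1, e2⟩ htwo
        rcases key1 b hbL1 hba with ⟨e1, c1⟩ | ⟨e1, c1⟩
        · -- b = z₁, ch z₂ z₁
          subst e1
          rcases failAll b hz₁ a₀ ha₀L1 with h | h | h
          · exact ha₀0 (h ▸ hz₁)
          · exact hz12 (hpar c1 h).symm
          · have : z₂ ∈ ({b, a₀} : Finset ℕ) := h (hsub z₂ hz₂)
            simp only [Finset.mem_insert, Finset.mem_singleton] at this
            rcases this with h' | h'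
            · exact hz12 h'.symm
            · exact ha₀0 (h' ▸ hz₂)
        · -- b = z₂, ch z₁ z₂
          subst e1
          rcases failAll b hz₂ a₀ ha₀L1 with h | h | h
          · exact ha₀0 (h ▸ hz₂)
          · exact hz12 (hpar c1 h)
          · have : z₁ ∈ ({b, a₀} : Finset ℕ) := h (hsub z₁ hz₁)
            simp only [Finset.mem_insert, Finset.mem_singleton] at this
            rcases this with h' | h'
            · exact hz12 h'
            · exact ha₀0 (h' ▸ hz₁)
    · -- B1 : ∃ z₀ ∈ L0, z₀ ∉ Lu
      push_neg at hsub
      obtain ⟨z₀, hz₀, hz₀u⟩ := hsub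
      have noLu : ∀ b : ℕ, ¬ Lu ⊆ {z₀, b} := by
        intro b hLu
        exact hz₀u (luEq z₀ b hLu).2.2.1
      have hb' : ∀ b ∈ L1, b = z₀ ∨ ch z₀ b := by
        intro b hb
        rcases failAll z₀ hz₀ b hb with h | h | h
        · exact Or.inl h.symm
        · exact Or.inr h
        · exact absurd h (noLu b)
      obtain ⟨b₁, hb₁, b₂, hb₂, hbne⟩ :=
        Finset.one_lt_card.mp (show 1 < L1.card by omega)
      obtain ⟨hz₀L1, β, hβ, hchβ⟩ : z₀ ∈ L1 ∧ ∃ β ∈ L1, ch z₀ β := by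
        rcases hb' b₁ hb₁ with h | h <;> rcases hb' b₂ hb₂ with h' | h'
        · exact absurd (h.trans h'.symm) hbne
        · exact ⟨h ▸ hb₁, b₂, hb₂, h'⟩
        · exact ⟨h' ▸ hb₂, b₁, hb₁, h⟩
        · exact absurd (func h h') hbne
      obtain ⟨z₁, hz₁, hz₁0⟩ := Finset.exists_mem_ne (show 1 < L0.card by omega) z₀
      rcases failAll z₁ hz₁ z₀ hz₀L1 with h | h | h
      · exact hz₁0 h
      · exact hz₁0 (hpar h hchβ)
      · exact hz₀u ((luEq z₁ z₀ h).2.2.2)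

/-- Lemma (frying pan): if every vertex has a list of at least 2 colors and either
`|L(v_1)| ≥ 3`, or `n` is even and `L(v_1) ≠ L(u)`, then the frying pan graph has a proper
coloring from the lists. -/
theorem fryingPan_choosable (n : ℕ) (hn : 3 ≤ n)
    (L : Option (Fin n) → Finset ℕ)
    (hL : ∀ x, 2 ≤ (L x).card)
    (hcond : 3 ≤ (L (some ⟨0, by omega⟩)).card ∨
      (Even n ∧ L (some ⟨0, by omega⟩) ≠ L none)) :
    ∃ c : Option (Fin n) → ℕ, (∀ x, c x ∈ L x) ∧
      ∀ a b, (fryingPan n).Adj a b → c a ≠ c b := by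
  have hn0 : 0 < n := by omega
  set K : ℕ → Finset ℕ := fun i => L (some ⟨i % n, Nat.mod_lt i hn0⟩) with hK
  have hKeq : ∀ i : Fin n, K i.val = L (some i) := by
    intro i
    have : (⟨i.val % n, Nat.mod_lt i.val hn0⟩ : Fin n) = i :=
      Fin.ext (Nat.mod_eq_of_lt i.isLt)
    rw [hK]
    simp only [this]
  have hv0 : K 0 = L (some ⟨0, by omega⟩) := hKeq ⟨0, by omega⟩
  have hv1 : K (n-1) = L (some ⟨n-1, by omega⟩) := hKeq ⟨n-1, by omega⟩
  obtain ⟨z, hz, b, hb, a, ha, hzb, hab, haz, hch⟩ :=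
    select (L none) (L (some ⟨0, by omega⟩)) (L (some ⟨n-1, by omega⟩))
      (hL none) (hL _) (hL _) (chainOn K (n-2))
      (fun h h' => chainOn_func h h') (fun h h' => chainOn_inj h h')
      (by
        rcases hcond with h | ⟨heven, hne⟩
        · exact Or.inl h
        · refine Or.inr ⟨fun h h' => chainOn_parity ?_ h h', hne⟩
          rw [Nat.even_iff] at heven
          omega)
  rcases path_color K (n-2) (by omega)
      (fun i h1 h2 => by rw [hK]; exact hL _) z b with
    ⟨c', hc'mem, hc'adj, hc'1, hc'm⟩ | hchain
  swap
  · exact absurd hchain hch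
  refine ⟨fun x => match x with
    | none => a
    | some i => if i.val = 0 then z else if i.val = n - 1 then b else c' i.val,
    ?_, ?_⟩
  · intro x
    match x with
    | none => exact ha
    | some i =>
      show (if i.val = 0 then z else if i.val = n - 1 then b else c' i.val) ∈ L (some i)
      by_cases h0 : i.val = 0
      · rw [if_pos h0]
        have : i = ⟨0, by omega⟩ := Fin.ext h0
        rw [this]; exact hz
      by_cases h1 : i.val = n - 1
      · rw [if_neg h0, if_pos h1]
        have : i = ⟨n-1, by omega⟩ := Fin.ext h1
        rw [this]; exact hb
      · rw [if_neg h0, if_neg h1]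
        have := hc'mem i.val (by omega) (by omega : i.val ≤ n - 2)
        rwa [hKeq i] at this
  · have key : ∀ (i j : Fin n), (j.val = i.val + 1 ∨ (i.val = n - 1 ∧ j.val = 0)) →
        (if i.val = 0 then z else if i.val = n - 1 then b else c' i.val) ≠
        (if j.val = 0 then z else if j.val = n - 1 then b else c' j.val) := by
      intro i j hij
      rcases hij with hij | ⟨hi, hj⟩
      · have hjn : j.val < n := j.isLt
        by_cases h0 : i.val = 0
        · rw [if_pos h0, if_neg (show ¬ j.val = 0 by omega),
            if_neg (show ¬ j.val = n - 1 by omega)]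
          have : j.val = 1 := by omega
          rw [this]
          exact fun hh => hc'1 hh.symm
        by_cases h1 : i.val = n - 1
        · omega
        · rw [if_neg h0, if_neg h1, if_neg (show ¬ j.val = 0 by omega)]
          by_cases hj1 : j.val = n - 1
          · rw [if_pos hj1]
            have : i.val = n - 2 := by omega
            rw [this]
            exact hc'm
          · rw [if_neg hj1]
            have := hc'adj i.val (by omega) (by omega : i.val < n - 2)
            rwa [show i.val + 1 = j.val by omega] at this
      · rw [if_neg (show ¬ i.val = 0 by omega), if_pos hi, if_pos hj]
        exact fun hh => hzb hh.symm
    have keyu : ∀ j : Fin n, (j.val = 0 ∨ j.val = n - 1) →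
        a ≠ (if j.val = 0 then z else if j.val = n - 1 then b else c' j.val) := by
      intro j hj
      rcases hj with hj | hj
      · rw [if_pos hj]; exact haz
      · rw [if_neg (show ¬ j.val = 0 by omega), if_pos hj]; exact hab
    intro p q hadj
    rw [fryingPan, SimpleGraph.fromRel_adj] at hadj
    obtain ⟨hne, hrel⟩ := hadj
    match p, q with
    | none, none => exact absurd rfl hne
    | none, some j =>
      rcases hrel with h | h
      · exact keyu j h
      · exact h.elim
    | some i, none =>
      rcases hrel with h | h
      · exact h.elim
      · exact (keyu i h).symm
    | some i, some j =>
      rcases hrel with h | h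
      · exact key i j h
      · exact (key j i h).symm
end

section
/- Let n ≥ 4 be an integer with n not divisible by 3, and let G be the graph on vertices v_1, …, v_n whose edges are v_iv_{i+1} for 1 ≤ i ≤ n−1 and v_iv_{i+2} for 1 ≤ i ≤ n−2 (the square of a path). Let L be a list assignment with |L(v)| ≥ 2 for v ∈ {v_1, v_{n−1}, v_n} and |L(v)| ≥ 3 for every other vertex v. Then G has a proper L-coloring. -/
/-!
The graph is symmetric under reversal, so number the vertices v_n, v_{n-1}, …, v_1 as
0, 1, …, n - 1 and color them in this order. A new vertex is adjacent only to the two previous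
ones, so all that matters about a proper coloring of a prefix is the ordered pair of its last two
colors; we track which pairs are realizable. With lists of size 3, a swap {(x,y), (y,x)} turns
into a common second color {(x,z), (y,z)}, which turns into a common first color {(z,x), (z,y)},
which turns into a swap or into "free pairs" (distinct first colors, distinct second colors,
distinct unordered pairs), and free pairs persist. Two lists of size 2 at the start give a swap or
free pairs, so when the number of 3-list vertices is not divisible by 3 the last pair state
contains two pairs with different underlying sets, and a list of size 2 at the last vertex avoids
one of them.
-/

/-- The square of a path on `n` vertices `v_1, …, v_n` (here indexed by `Fin n`):
edges `v_i v_{i+1}` for `1 ≤ i ≤ n-1` and `v_i v_{i+2}` for `1 ≤ i ≤ n-2`. -/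
def pathSquare (n : ℕ) : SimpleGraph (Fin n) :=
  SimpleGraph.fromRel (fun i j => j.val = i.val + 1 ∨ j.val = i.val + 2)

open Finset

namespace Finset
variable {α : Type*} {S : Finset α}

theorem exists_mem_notMem_sym2 (hS : 3 ≤ #S) (z : Sym2 α) : ∃ c ∈ S, c ∉ z := by
  classical
  have hz : #z.toFinset < #S := by
    rw [Sym2.card_toFinset]; split_ifs <;> omega
  simpa using exists_mem_notMem_of_card_lt_card hz

theorem exists_mem_notMem_or_notMem_of_sym2_ne (hS : 2 ≤ #S) {z₁ z₂ : Sym2 α} (h : z₁ ≠ z₂) :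
    ∃ c ∈ S, c ∉ z₁ ∨ c ∉ z₂ := by
  obtain ⟨u, hu, v, hv, huv⟩ := one_lt_card.mp hS
  by_contra! hS'
  exact h <| ((Sym2.mem_and_mem_iff huv).mp ⟨(hS' u hu).1, (hS' v hv).1⟩).trans
    ((Sym2.mem_and_mem_iff huv).mp ⟨(hS' u hu).2, (hS' v hv).2⟩).symm

theorem exists_notMem_notMem_ne_of_sym2_ne (hS : 3 ≤ #S) {z₁ z₂ : Sym2 α} (h : z₁ ≠ z₂) :
    ∃ a ∈ S, ∃ b ∈ S, a ∉ z₁ ∧ b ∉ z₂ ∧ a ≠ b := by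
  classical
  by_contra! hS'
  obtain ⟨a, ha, ha₁⟩ := exists_mem_notMem_sym2 hS z₁
  obtain ⟨b, hb, hb₂⟩ := exists_mem_notMem_sym2 hS z₂
  obtain rfl : a = b := hS' a ha b hb ha₁ hb₂
  -- Every color of `S` other than `a` lies in both `z₁` and `z₂`, and there are two of them.
  obtain ⟨u, hu, v, hv, huv⟩ := one_lt_card.mp (by rw [card_erase_of_mem ha]; omega :
    1 < #(S.erase a))
  rw [mem_erase] at hu hv
  have hmem (w : α) (hw : w ∈ S) (hwa : w ≠ a) : w ∈ z₁ ∧ w ∈ z₂ := by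
    constructor
    · by_contra hw₁; exact hwa (hS' w hw a ha hw₁ hb₂)
    · by_contra hw₂; exact hwa (hS' a ha w hw ha₁ hw₂).symm
  exact h <| ((Sym2.mem_and_mem_iff huv).mp ⟨(hmem u hu.2 hu.1).1, (hmem v hv.2 hv.1).1⟩).trans
    ((Sym2.mem_and_mem_iff huv).mp ⟨(hmem u hu.2 hu.1).2, (hmem v hv.2 hv.1).2⟩).symm

end Finset

namespace PathSquare
variable {α : Type*} {L : ℕ → Finset α} {m : ℕ} {a b c : α}

def IsPrefixColoring (L : ℕ → Finset α) (m : ℕ) (f : ℕ → α) : Prop :=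
  (∀ j ≤ m, f j ∈ L j) ∧ (∀ j, j + 1 ≤ m → f j ≠ f (j + 1)) ∧
    ∀ j, j + 2 ≤ m → f j ≠ f (j + 2)

def Realizable (L : ℕ → Finset α) (m : ℕ) (a b : α) : Prop :=
  ∃ f, IsPrefixColoring L (m + 1) f ∧ f m = a ∧ f (m + 1) = b

theorem realizable_zero (ha : a ∈ L 0) (hb : b ∈ L 1) (hab : a ≠ b) : Realizable L 0 a b := by
  refine ⟨fun j => if j = 0 then a else b, ⟨fun j hj => ?_, fun j hj => ?_, fun j hj => ?_⟩,
    rfl, rfl⟩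
  · obtain rfl | rfl : j = 0 ∨ j = 1 := by omega
    exacts [ha, hb]
  · obtain rfl : j = 0 := by omega
    exact hab
  · omega

theorem Realizable.ne (h : Realizable L m a b) : a ≠ b := by
  obtain ⟨f, ⟨-, hf, -⟩, rfl, rfl⟩ := h
  exact hf m le_rfl

theorem Realizable.snoc (h : Realizable L m a b) (hc : c ∈ L (m + 2)) (hca : c ≠ a)
    (hcb : c ≠ b) : Realizable L (m + 1) b c := by
  obtain ⟨f, ⟨hmem, hadj, hadj₂⟩, rfl, rfl⟩ := h
  refine ⟨Function.update f (m + 2) c, ⟨fun j hj => ?_, fun j hj => ?_, fun j hj => ?_⟩,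
    by simp, by simp⟩
  · rcases eq_or_ne j (m + 2) with rfl | hj'
    · simpa using hc
    · simpa [hj'] using hmem j (by omega)
  · rcases eq_or_ne j (m + 1) with rfl | hj'
    · simpa using hcb.symm
    · simpa [hj', show j ≠ m + 2 by omega] using hadj j (by omega)
  · rcases eq_or_ne j m with rfl | hj'
    · simpa using hca.symm
    · simpa [hj', show j ≠ m + 2 by omega] using hadj₂ j (by omega)

def HasSwap (L : ℕ → Finset α) (m : ℕ) : Prop :=
  ∃ x y, Realizable L m x y ∧ Realizable L m y x

def HasCommonSnd (L : ℕ → Finset α) (m : ℕ) : Prop :=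
  ∃ x y z, x ≠ y ∧ Realizable L m x z ∧ Realizable L m y z

def HasCommonFst (L : ℕ → Finset α) (m : ℕ) : Prop :=
  ∃ x y z, y ≠ z ∧ Realizable L m x y ∧ Realizable L m x z

def HasFreePairs (L : ℕ → Finset α) (m : ℕ) : Prop :=
  ∃ a b a' b', Realizable L m a b ∧ Realizable L m a' b' ∧ a ≠ a' ∧ b ≠ b' ∧
    s(a, b) ≠ s(a', b')

theorem HasSwap.succ (hL : 3 ≤ #(L (m + 2))) : HasSwap L m → HasCommonSnd L (m + 1) := by
  rintro ⟨x, y, hxy, hyx⟩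
  obtain ⟨c, hc, hcxy⟩ := exists_mem_notMem_sym2 hL s(x, y)
  rw [Sym2.mem_iff, not_or] at hcxy
  exact ⟨y, x, c, hxy.ne.symm, hxy.snoc hc hcxy.1 hcxy.2, hyx.snoc hc hcxy.2 hcxy.1⟩

theorem HasCommonSnd.succ (hL : 3 ≤ #(L (m + 2))) :
    HasCommonSnd L m → HasCommonFst L (m + 1) := by
  rintro ⟨x, y, z, hxy, hxz, hyz⟩
  have hne : s(x, z) ≠ s(y, z) := by simp [hxy, hxz.ne]
  obtain ⟨c, hc, d, hd, hcxz, hdyz, hcd⟩ := exists_notMem_notMem_ne_of_sym2_ne hL hne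
  rw [Sym2.mem_iff, not_or] at hcxz hdyz
  exact ⟨z, c, d, hcd, hxz.snoc hc hcxz.1 hcxz.2, hyz.snoc hd hdyz.1 hdyz.2⟩

theorem HasCommonFst.succ (hL : 3 ≤ #(L (m + 2))) :
    HasCommonFst L m → HasFreePairs L (m + 1) ∨ HasSwap L (m + 1) := by
  rintro ⟨z, x, y, hxy, hzx, hzy⟩
  have hne : s(z, x) ≠ s(z, y) := by grind [Sym2.eq_iff, hzx.ne]
  obtain ⟨c, hc, d, hd, hczx, hdzy, hcd⟩ := exists_notMem_notMem_ne_of_sym2_ne hL hne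
  rw [Sym2.mem_iff, not_or] at hczx hdzy
  have hxc := hzx.snoc hc hczx.1 hczx.2
  have hyd := hzy.snoc hd hdzy.1 hdzy.2
  by_cases hswap : c = y ∧ d = x
  · obtain ⟨hcy, hdx⟩ := hswap
    subst c d
    exact .inr ⟨x, y, hxc, hyd⟩
  · refine .inl ⟨x, c, y, d, hxc, hyd, hxy, hcd, ?_⟩
    grind [Sym2.eq_iff]

theorem HasFreePairs.succ (hL : 3 ≤ #(L (m + 2))) :
    HasFreePairs L m → HasFreePairs L (m + 1) := by
  rintro ⟨a, b, a', b', hab, hab', haa', hbb', hne⟩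
  obtain ⟨c, hc, c', hc', hcab, hcab', hcc'⟩ := exists_notMem_notMem_ne_of_sym2_ne hL hne
  rw [Sym2.mem_iff, not_or] at hcab hcab'
  have hbc := hab.snoc hc hcab.1 hcab.2
  have hbc' := hab'.snoc hc' hcab'.1 hcab'.2
  by_cases hswap : c = b' ∧ c' = b
  · -- The new pairs `(b, b')` and `(b', b)` are a swap; replace one of them using a third color.
    obtain ⟨hcb', hc'b⟩ := hswap
    subst c c'
    obtain ⟨e, he, hebb'⟩ := exists_mem_notMem_sym2 hL s(b, b')
    rw [Sym2.mem_iff, not_or] at hebb'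
    by_cases hea : e = a
    · subst hea
      refine ⟨b, b', b', e, hbc, hab'.snoc he haa' hebb'.2, hbb', fun h => hebb'.2 h.symm, ?_⟩
      grind [Sym2.eq_iff]
    · refine ⟨b, e, b', b, hab.snoc he hea hebb'.1, hbc', hbb', hebb'.1, ?_⟩
      grind [Sym2.eq_iff]
  · refine ⟨b, c, b', c', hbc, hbc', hbb', hcc', ?_⟩
    grind [Sym2.eq_iff]

theorem hasFreePairs_or_hasSwap_zero (h0 : 2 ≤ #(L 0)) (h1 : 2 ≤ #(L 1)) :
    HasFreePairs L 0 ∨ HasSwap L 0 := by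
  obtain ⟨x₁, hx₁, x₂, hx₂, hx⟩ := one_lt_card.mp h0
  obtain ⟨y₁, hy₁, y₂, hy₂, hy⟩ := one_lt_card.mp h1
  rcases eq_or_ne s(x₁, x₂) s(y₁, y₂) with h | h
  · have hxL : x₁ ∈ L 1 ∧ x₂ ∈ L 1 := by
      rcases Sym2.eq_iff.mp h with ⟨rfl, rfl⟩ | ⟨rfl, rfl⟩ <;> simp [*]
    exact .inr ⟨x₁, x₂, realizable_zero hx₁ hxL.2 hx, realizable_zero hx₂ hxL.1 hx.symm⟩
  · by_cases hm : x₁ ≠ y₁ ∧ x₂ ≠ y₂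
    · exact .inl ⟨x₁, y₁, x₂, y₂, realizable_zero hx₁ hy₁ hm.1, realizable_zero hx₂ hy₂ hm.2,
        hx, hy, by grind [Sym2.eq_iff]⟩
    · have hm' : x₁ ≠ y₂ ∧ x₂ ≠ y₁ := by grind
      exact .inl ⟨x₁, y₂, x₂, y₁, realizable_zero hx₁ hy₂ hm'.1, realizable_zero hx₂ hy₁ hm'.2,
        hx, hy.symm, by grind [Sym2.eq_iff]⟩

def PairInvariant (L : ℕ → Finset α) (m : ℕ) : Prop :=
  HasFreePairs L m ∨ (m % 3 = 0 ∧ HasSwap L m) ∨ (m % 3 = 1 ∧ HasCommonSnd L m) ∨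
    (m % 3 = 2 ∧ HasCommonFst L m)

theorem pairInvariant (h0 : 2 ≤ #(L 0)) (h1 : 2 ≤ #(L 1)) :
    ∀ m, (∀ j, 2 ≤ j → j ≤ m + 1 → 3 ≤ #(L j)) → PairInvariant L m
  | 0, _ => (hasFreePairs_or_hasSwap_zero h0 h1).imp_right fun h => .inl ⟨rfl, h⟩
  | m + 1, hL => by
    have hL₂ : 3 ≤ #(L (m + 2)) := hL (m + 2) (by omega) le_rfl
    rcases pairInvariant h0 h1 m fun j hj hjm => hL j hj (by omega) with
      h | ⟨hm, h⟩ | ⟨hm, h⟩ | ⟨hm, h⟩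
    · exact .inl (h.succ hL₂)
    · exact .inr (.inr (.inl ⟨by omega, h.succ hL₂⟩))
    · exact .inr (.inr (.inr ⟨by omega, h.succ hL₂⟩))
    · exact (h.succ hL₂).imp_right fun h' => .inl ⟨by omega, h'⟩

theorem PairInvariant.exists_sym2_ne (h : PairInvariant L m) (hm : m % 3 ≠ 0) :
    ∃ a b a' b', Realizable L m a b ∧ Realizable L m a' b' ∧ s(a, b) ≠ s(a', b') := by
  rcases h with ⟨a, b, a', b', hab, hab', -, -, hne⟩ | ⟨hm', -⟩ | ⟨-, x, y, z, hxy, hxz, hyz⟩ |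
    ⟨-, x, y, z, hyz, hxy, hxz⟩
  · exact ⟨a, b, a', b', hab, hab', hne⟩
  · exact absurd hm' hm
  · exact ⟨x, z, y, z, hxz, hyz, by grind [Sym2.eq_iff]⟩
  · exact ⟨x, y, x, z, hxy, hxz, by grind [Sym2.eq_iff]⟩

theorem exists_prefixColoring_of_sym2_ne {a b a' b' : α} (hab : Realizable L m a b)
    (hab' : Realizable L m a' b') (hne : s(a, b) ≠ s(a', b')) (hL : 2 ≤ #(L (m + 2))) :
    ∃ f, IsPrefixColoring L (m + 2) f := by
  obtain ⟨c, hc, hcab | hcab⟩ := exists_mem_notMem_or_notMem_of_sym2_ne hL hne <;>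
    rw [Sym2.mem_iff, not_or] at hcab
  · obtain ⟨f, hf, -⟩ := hab.snoc hc hcab.1 hcab.2
    exact ⟨f, hf⟩
  · obtain ⟨f, hf, -⟩ := hab'.snoc hc hcab.1 hcab.2
    exact ⟨f, hf⟩

theorem exists_prefixColoring (hm : m % 3 ≠ 0) (h0 : 2 ≤ #(L 0)) (h1 : 2 ≤ #(L 1))
    (hmid : ∀ j, 2 ≤ j → j ≤ m + 1 → 3 ≤ #(L j)) (hlast : 2 ≤ #(L (m + 2))) :
    ∃ f, IsPrefixColoring L (m + 2) f := by
  obtain ⟨a, b, a', b', hab, hab', hne⟩ := (pairInvariant h0 h1 m hmid).exists_sym2_ne hm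
  exact exists_prefixColoring_of_sym2_ne hab hab' hne hlast

theorem exists_coloring_of_isPrefixColoring {n : ℕ} (hn : 0 < n) (L : Fin n → Finset α)
    {f : ℕ → α} (hf : IsPrefixColoring (fun j => L ⟨n - 1 - j, by omega⟩) (n - 1) f) :
    ∃ c : Fin n → α, (∀ v, c v ∈ L v) ∧ ∀ u v, (pathSquare n).Adj u v → c u ≠ c v := by
  obtain ⟨hmem, hadj, hadj₂⟩ := hf
  have hstep (u v : Fin n) (huv : (v : ℕ) = u + 1 ∨ (v : ℕ) = u + 2) :
      f (n - 1 - u) ≠ f (n - 1 - v) := by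
    rcases huv with huv | huv
    · simpa [show n - 1 - v + 1 = n - 1 - u by omega] using (hadj (n - 1 - v) (by omega)).symm
    · simpa [show n - 1 - v + 2 = n - 1 - u by omega] using (hadj₂ (n - 1 - v) (by omega)).symm
  refine ⟨fun v => f (n - 1 - v), fun v => ?_, fun u v huv => ?_⟩
  · convert hmem (n - 1 - v) (by omega) using 2
    ext
    simp only
    omega
  · rw [pathSquare, SimpleGraph.fromRel_adj] at huv
    obtain ⟨-, huv | huv⟩ := huv
    · exact hstep u v huv
    · exact (hstep v u huv).symm

end PathSquare

open PathSquare

/-- If `n ≥ 4` is not divisible by 3, and the lists of `v_1`, `v_{n-1}`, `v_n` have size at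
least 2 while all other lists have size at least 3, then the square of the path on `n`
vertices has a proper coloring from the lists. -/
theorem pathSquare_choosable (n : ℕ) (hn : 4 ≤ n) (hn3 : ¬ (3 ∣ n))
    (L : Fin n → Finset ℕ)
    (hL2 : ∀ v : Fin n, 2 ≤ (L v).card)
    (hL3 : ∀ v : Fin n, v.val ≠ 0 → v.val ≠ n - 2 → v.val ≠ n - 1 → 3 ≤ (L v).card) :
    ∃ c : Fin n → ℕ, (∀ v, c v ∈ L v) ∧
      ∀ a b, (pathSquare n).Adj a b → c a ≠ c b := by
  obtain ⟨m, rfl⟩ : ∃ m, n = m + 3 := ⟨n - 3, by omega⟩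
  have hmid (j : ℕ) (hj : 2 ≤ j) (hjm : j ≤ m + 1) : 3 ≤ #(L ⟨m + 3 - 1 - j, by omega⟩) :=
    hL3 _ (by simp only; omega) (by simp only; omega) (by simp only; omega)
  obtain ⟨f, hf⟩ := exists_prefixColoring (L := fun j => L ⟨m + 3 - 1 - j, by omega⟩) (m := m)
    (by omega) (hL2 _) (hL2 _) hmid (hL2 _)
  exact exists_coloring_of_isPrefixColoring (by omega) L hf
end

section
/- Let H be the graph on six vertices a, b, c, d, e, f whose edges are ab, ac, bc, de, df, ef and cd (two triangles abc and def joined by the edge cd). Let L be a list assignment of finite color sets with |L(a)| = |L(b)| = |L(e)| = |L(f)| = 2 and |L(c)| = |L(d)| = 3. Then H has a proper L-coloring if and only if at least one of the following conditions holds: (1) L(a) ≠ L(b); (2) L(e) ≠ L(f); (3) L(c) \ L(a) ≠ L(d) \ L(e); (4) |L(c) \ L(a)| ≠ 1 or |L(d) \ L(e)| ≠ 1. -/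
lemma aux_ex_ne (s : Finset ℕ) (hs : 2 ≤ s.card) (t : ℕ) : ∃ x ∈ s, x ≠ t := by
  by_contra h
  push_neg at h
  have hsub : s ⊆ {t} := fun x hx => Finset.mem_singleton.2 (h x hx)
  have := Finset.card_le_card hsub
  simp at this
  omega

/-- Coloring a triangle with one endpoint color `c` fixed. -/
lemma aux_side (La Lb : Finset ℕ) (ha : La.card = 2) (hb : Lb.card = 2) (c : ℕ)
    (h : c ∉ La ∨ c ∉ Lb ∨ La ≠ Lb) :
    ∃ a b, a ∈ La ∧ b ∈ Lb ∧ a ≠ b ∧ a ≠ c ∧ b ≠ c := by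
  by_cases hcA : c ∈ La
  · by_cases hcB : c ∈ Lb
    · have hne : La ≠ Lb := by
        rcases h with h | h | h
        exacts [absurd hcA h, absurd hcB h, h]
      obtain ⟨b, hbB, hbc⟩ := aux_ex_ne Lb (by omega) c
      have hbA : b ∉ La := by
        intro hbA
        have hsubA : ({c, b} : Finset ℕ) ⊆ La := by
          intro x hx
          simp only [Finset.mem_insert, Finset.mem_singleton] at hx
          rcases hx with rfl | rfl <;> assumption
        have hsubB : ({c, b} : Finset ℕ) ⊆ Lb := by
          intro x hx
          simp only [Finset.mem_insert, Finset.mem_singleton] at hx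
          rcases hx with rfl | rfl <;> assumption
        have hcard : ({c, b} : Finset ℕ).card = 2 := by
          rw [Finset.card_insert_of_notMem (by simpa using Ne.symm hbc)]
          simp
        have e1 : ({c, b} : Finset ℕ) = La :=
          Finset.eq_of_subset_of_card_le hsubA (by omega)
        have e2 : ({c, b} : Finset ℕ) = Lb :=
          Finset.eq_of_subset_of_card_le hsubB (by omega)
        exact hne (e1 ▸ e2)
      obtain ⟨a, haA, hac⟩ := aux_ex_ne La (by omega) c
      exact ⟨a, b, haA, hbB, fun e => hbA (e ▸ haA), hac, hbc⟩
    · obtain ⟨a, haA, hac⟩ := aux_ex_ne La (by omega) c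
      obtain ⟨b, hbB, hba⟩ := aux_ex_ne Lb (by omega) a
      exact ⟨a, b, haA, hbB, fun e => hba e.symm, hac, fun hbc => hcB (hbc ▸ hbB)⟩
  · obtain ⟨b, hbB, hbc⟩ := aux_ex_ne Lb (by omega) c
    obtain ⟨a, haA, hab⟩ := aux_ex_ne La (by omega) b
    exact ⟨a, b, haA, hbB, hab, fun hac => hcA (hac ▸ haA), hbc⟩

/-- Build the full coloring from a good choice of `c` and `d`. -/
lemma aux_combine (La Lb Lc Ld Le Lf : Finset ℕ)
    (ha : La.card = 2) (hb : Lb.card = 2) (he : Le.card = 2) (hf : Lf.card = 2)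
    (c d : ℕ) (hcC : c ∈ Lc) (hdD : d ∈ Ld) (hcd : c ≠ d)
    (h1 : c ∉ La ∨ c ∉ Lb ∨ La ≠ Lb) (h2 : d ∉ Le ∨ d ∉ Lf ∨ Le ≠ Lf) :
    (∃ a b c d e f : ℕ,
        a ∈ La ∧ b ∈ Lb ∧ c ∈ Lc ∧ d ∈ Ld ∧ e ∈ Le ∧ f ∈ Lf ∧
        a ≠ b ∧ a ≠ c ∧ b ≠ c ∧ d ≠ e ∧ d ≠ f ∧ e ≠ f ∧ c ≠ d) := by
  obtain ⟨a, b, haA, hbB, hab, hac, hbc⟩ := aux_side La Lb ha hb c h1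
  obtain ⟨e, f, heE, hfF, hef, hed, hfd⟩ := aux_side Le Lf he hf d h2
  exact ⟨a, b, c, d, e, f, haA, hbB, hcC, hdD, heE, hfF, hab, hac, hbc,
    fun h => hed h.symm, fun h => hfd h.symm, hef, hcd⟩

lemma aux_sdiff_card (Lc La : Finset ℕ) (hc : Lc.card = 3) (ha : La.card = 2) :
    1 ≤ (Lc \ La).card := by
  have h := Finset.le_card_sdiff La Lc
  omega

/-- For the graph consisting of two triangles `abc` and `def` joined by the edge `cd`, with
lists of sizes `|L(a)| = |L(b)| = |L(e)| = |L(f)| = 2` and `|L(c)| = |L(d)| = 3`, a proper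
coloring from the lists exists if and only if `L(a) ≠ L(b)`, or `L(e) ≠ L(f)`, or
`L(c) \ L(a) ≠ L(d) \ L(e)`, or `|L(c) \ L(a)| ≠ 1` or `|L(d) \ L(e)| ≠ 1`. -/
theorem two_triangles_bridge_choosable_iff
    (La Lb Lc Ld Le Lf : Finset ℕ)
    (ha : La.card = 2) (hb : Lb.card = 2) (he : Le.card = 2) (hf : Lf.card = 2)
    (hc : Lc.card = 3) (hd : Ld.card = 3) :
    (∃ a b c d e f : ℕ,
        a ∈ La ∧ b ∈ Lb ∧ c ∈ Lc ∧ d ∈ Ld ∧ e ∈ Le ∧ f ∈ Lf ∧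
        a ≠ b ∧ a ≠ c ∧ b ≠ c ∧ d ≠ e ∧ d ≠ f ∧ e ≠ f ∧ c ≠ d) ↔
      (La ≠ Lb ∨ Le ≠ Lf ∨ Lc \ La ≠ Ld \ Le ∨
        ((Lc \ La).card ≠ 1 ∨ (Ld \ Le).card ≠ 1)) := by
  constructor
  · rintro ⟨a, b, c, d, e, f, haA, hbB, hcC, hdD, heE, hfF,
      hab, hac, hbc, hde, hdf, hef, hcd⟩
    by_contra hR
    push_neg at hR
    obtain ⟨hLab, hLef, hsd, h1, h2⟩ := hR
    -- c ∉ La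
    have hcA : c ∉ La := by
      intro hcA
      have hsub : ({c, a, b} : Finset ℕ) ⊆ La := by
        intro x hx
        simp only [Finset.mem_insert, Finset.mem_singleton] at hx
        rcases hx with rfl | rfl | rfl
        · exact hcA
        · exact haA
        · exact hLab ▸ hbB
      have hcard : ({c, a, b} : Finset ℕ).card = 3 := by
        rw [Finset.card_insert_of_notMem (by simp [Ne.symm hac, Ne.symm hbc]),
          Finset.card_insert_of_notMem (by simpa using hab)]
        simp
      have := Finset.card_le_card hsub
      omega
    have hdE : d ∉ Le := by
      intro hdE
      have hsub : ({d, e, f} : Finset ℕ) ⊆ Le := by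
        intro x hx
        simp only [Finset.mem_insert, Finset.mem_singleton] at hx
        rcases hx with rfl | rfl | rfl
        · exact hdE
        · exact heE
        · exact hLef ▸ hfF
      have hcard : ({d, e, f} : Finset ℕ).card = 3 := by
        rw [Finset.card_insert_of_notMem (by simp [hde, hdf]),
          Finset.card_insert_of_notMem (by simpa using hef)]
        simp
      have := Finset.card_le_card hsub
      omega
    have hcm : c ∈ Lc \ La := Finset.mem_sdiff.2 ⟨hcC, hcA⟩
    have hdm : d ∈ Lc \ La := hsd ▸ Finset.mem_sdiff.2 ⟨hdD, hdE⟩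
    obtain ⟨x, hx⟩ := Finset.card_eq_one.1 h1
    rw [hx, Finset.mem_singleton] at hcm hdm
    exact hcd (hcm.trans hdm.symm)
  · intro hR
    by_cases hab : La = Lb
    · by_cases hef : Le = Lf
      · -- both pairs equal; use conditions 3/4
        have h34 : Lc \ La ≠ Ld \ Le ∨ (Lc \ La).card ≠ 1 ∨ (Ld \ Le).card ≠ 1 := by
          rcases hR with h | h | h | h
          exacts [absurd hab h, absurd hef h, Or.inl h, Or.inr h]
        have hca := aux_sdiff_card Lc La hc ha
        have hdl := aux_sdiff_card Ld Le hd he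
        have key : ∃ c ∈ Lc \ La, ∃ d ∈ Ld \ Le, c ≠ d := by
          rcases h34 with h | h | h
          · -- different sets, both nonempty singleton-or-more: find distinct elts
            by_cases h1 : (Lc \ La).card = 1
            · by_cases h2 : (Ld \ Le).card = 1
              · obtain ⟨x, hx⟩ := Finset.card_eq_one.1 h1
                obtain ⟨y, hy⟩ := Finset.card_eq_one.1 h2
                refine ⟨x, by simp [hx], y, by simp [hy], ?_⟩
                rintro rfl
                exact h (hx.trans hy.symm)
              · obtain ⟨c0, hc0⟩ := Finset.card_pos.1 hca
                obtain ⟨d0, hd0, hd0c⟩ := aux_ex_ne (Ld \ Le) (by omega) c0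
                exact ⟨c0, hc0, d0, hd0, fun e => hd0c e.symm⟩
            · obtain ⟨d0, hd0⟩ := Finset.card_pos.1 hdl
              obtain ⟨c0, hc0, hc0d⟩ := aux_ex_ne (Lc \ La) (by omega) d0
              exact ⟨c0, hc0, d0, hd0, hc0d⟩
          · obtain ⟨d0, hd0⟩ := Finset.card_pos.1 hdl
            obtain ⟨c0, hc0, hc0d⟩ := aux_ex_ne (Lc \ La) (by omega) d0
            exact ⟨c0, hc0, d0, hd0, hc0d⟩
          · obtain ⟨c0, hc0⟩ := Finset.card_pos.1 hca
            obtain ⟨d0, hd0, hd0c⟩ := aux_ex_ne (Ld \ Le) (by omega) c0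
            exact ⟨c0, hc0, d0, hd0, fun e => hd0c e.symm⟩
        obtain ⟨c0, hc0, d0, hd0, hcd⟩ := key
        rw [Finset.mem_sdiff] at hc0 hd0
        exact aux_combine La Lb Lc Ld Le Lf ha hb he hf c0 d0 hc0.1 hd0.1 hcd
          (Or.inl hc0.2) (Or.inl hd0.2)
      · -- Le ≠ Lf : pick c ∈ Lc \ La, d ∈ Ld \ {c}
        have hca := aux_sdiff_card Lc La hc ha
        obtain ⟨c0, hc0⟩ := Finset.card_pos.1 hca
        obtain ⟨d0, hd0, hd0c⟩ := aux_ex_ne Ld (by omega) c0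
        rw [Finset.mem_sdiff] at hc0
        exact aux_combine La Lb Lc Ld Le Lf ha hb he hf c0 d0 hc0.1 hd0
          (fun e => hd0c e.symm) (Or.inl hc0.2) (Or.inr (Or.inr hef))
    · -- La ≠ Lb : pick d ∈ Ld \ Le (if Le = Lf) or any d, then c ∈ Lc \ {d}
      by_cases hef : Le = Lf
      · have hdl := aux_sdiff_card Ld Le hd he
        obtain ⟨d0, hd0⟩ := Finset.card_pos.1 hdl
        obtain ⟨c0, hc0, hc0d⟩ := aux_ex_ne Lc (by omega) d0
        rw [Finset.mem_sdiff] at hd0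
        exact aux_combine La Lb Lc Ld Le Lf ha hb he hf c0 d0 hc0 hd0.1 hc0d
          (Or.inr (Or.inr hab)) (Or.inl hd0.2)
      · obtain ⟨d0, hd0⟩ := Finset.card_pos.1 (by omega : 0 < Ld.card)
        obtain ⟨c0, hc0, hc0d⟩ := aux_ex_ne Lc (by omega) d0
        exact aux_combine La Lb Lc Ld Le Lf ha hb he hf c0 d0 hc0 hd0 hc0d
          (Or.inr (Or.inr hab)) (Or.inr (Or.inr hef))
end

section
/- Let H be the graph on six vertices u, v, w, a, b, c in which every pair of distinct vertices is adjacent except the three pairs {u, b}, {v, c}, {w, a} (i.e., H is the complete graph K_6 minus a perfect matching; equivalently, H is the total graph of a triangle with vertices u, v, w and edges a = uv, b = vw, c = wu). For every list assignment L with |L(u)| ≥ 2, |L(a)| ≥ 3, |L(c)| ≥ 3, |L(v)| ≥ 4, |L(w)| ≥ 4, and |L(b)| ≥ 4, H has a proper L-coloring. -/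
/-!
Color `b` last: its neighbours are `v, w, a, c`, so a greedy coloring ending at `b` succeeds as
soon as `v` and `c` (non-adjacent) share a color, or `v` or `c` gets a color outside `L(b)`, or
`|L(b)| ≥ 5`. If the first two options fail, `L(v)` and `L(c)` are disjoint subsets of `L(b)`,
so `|L(b)| ≥ 7`.
-/

open Finset

namespace Finset

variable {α : Type*} [DecidableEq α] {s : Finset α}

lemma exists_mem_ne_ne (hs : 2 < #s) (x y : α) : ∃ z ∈ s, z ≠ x ∧ z ≠ y := by
  obtain ⟨z, hz, hxy⟩ := exists_mem_notMem_of_card_lt_card (card_le_two.trans_lt hs)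
  exact ⟨z, hz, by simpa [not_or] using hxy⟩

lemma exists_mem_ne_ne_ne (hs : 3 < #s) (x y z : α) :
    ∃ t ∈ s, t ≠ x ∧ t ≠ y ∧ t ≠ z := by
  obtain ⟨t, ht, hxyz⟩ := exists_mem_notMem_of_card_lt_card (card_le_three.trans_lt hs)
  exact ⟨t, ht, by simpa [not_or] using hxyz⟩

end Finset

def K6MinusMatchingColorable (Lu Lv Lw La Lb Lc : Finset ℕ) : Prop :=
  ∃ u v w a b c : ℕ,
    u ∈ Lu ∧ v ∈ Lv ∧ w ∈ Lw ∧ a ∈ La ∧ b ∈ Lb ∧ c ∈ Lc ∧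
    u ≠ v ∧ u ≠ w ∧ u ≠ a ∧ u ≠ c ∧
    v ≠ w ∧ v ≠ a ∧ v ≠ b ∧
    w ≠ b ∧ w ≠ c ∧
    a ≠ b ∧ a ≠ c ∧ b ≠ c

namespace K6MinusMatchingColorable

variable {Lu Lv Lw La Lb Lc : Finset ℕ}

lemma of_mem_Lv_of_mem_Lc (hu : 1 < #Lu) (ha : 2 < #La) (hw : 2 < #Lw) (hb : 3 < #Lb)
    {x : ℕ} (hxv : x ∈ Lv) (hxc : x ∈ Lc) : K6MinusMatchingColorable Lu Lv Lw La Lb Lc := by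
  obtain ⟨u, hu, hux⟩ := exists_mem_ne hu x
  obtain ⟨a, ha, hau, hax⟩ := exists_mem_ne_ne ha u x
  obtain ⟨w, hw, hwu, hwx⟩ := exists_mem_ne_ne hw u x
  obtain ⟨b, hb, hbx, hbw, hba⟩ := exists_mem_ne_ne_ne hb x w a
  refine ⟨u, x, w, a, b, x, ?_⟩
  grind

lemma of_mem_Lc_of_notMem_Lb (hu : 1 < #Lu) (ha : 2 < #La) (hv : 2 < #Lv) (hw : 3 < #Lw)
    (hb : 3 < #Lb) {γ : ℕ} (hγc : γ ∈ Lc) (hγb : γ ∉ Lb) :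
    K6MinusMatchingColorable Lu Lv Lw La Lb Lc := by
  obtain ⟨u, hu, huγ⟩ := exists_mem_ne hu γ
  obtain ⟨a, ha, hau, haγ⟩ := exists_mem_ne_ne ha u γ
  obtain ⟨v, hv, hvu, hva⟩ := exists_mem_ne_ne hv u a
  obtain ⟨w, hw, hwu, hwv, hwγ⟩ := exists_mem_ne_ne_ne hw u v γ
  obtain ⟨b, hb, hbv, hbw, hba⟩ := exists_mem_ne_ne_ne hb v w a
  refine ⟨u, v, w, a, b, γ, ?_⟩
  grind

lemma of_mem_Lv_of_notMem_Lb (hu : 1 < #Lu) (ha : 2 < #La) (hc : 2 < #Lc) (hw : 3 < #Lw)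
    (hb : 3 < #Lb) {β : ℕ} (hβv : β ∈ Lv) (hβb : β ∉ Lb) :
    K6MinusMatchingColorable Lu Lv Lw La Lb Lc := by
  obtain ⟨u, hu, huβ⟩ := exists_mem_ne hu β
  obtain ⟨a, ha, hau, haβ⟩ := exists_mem_ne_ne ha u β
  obtain ⟨c, hc, hcu, hca⟩ := exists_mem_ne_ne hc u a
  obtain ⟨w, hw, hwu, hwβ, hwc⟩ := exists_mem_ne_ne_ne hw u β c
  obtain ⟨b, hb, hbw, hba, hbc⟩ := exists_mem_ne_ne_ne hb w a c
  refine ⟨u, β, w, a, b, c, ?_⟩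
  grind

lemma of_four_lt_card_Lb (hu : Lu.Nonempty) (ha : 1 < #La) (hc : 2 < #Lc)
    (hv : 2 < #Lv) (hw : 3 < #Lw) (hb : 4 < #Lb) :
    K6MinusMatchingColorable Lu Lv Lw La Lb Lc := by
  obtain ⟨u, hu⟩ := hu
  obtain ⟨a, ha, hau⟩ := exists_mem_ne ha u
  obtain ⟨c, hc, hcu, hca⟩ := exists_mem_ne_ne hc u a
  obtain ⟨v, hv, hvu, hva⟩ := exists_mem_ne_ne hv u a
  obtain ⟨w, hw, hwu, hwv, hwc⟩ := exists_mem_ne_ne_ne hw u v c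
  have hvwac : #{v, w, a, c} < #Lb := by
    have := card_le_three (a := w) (b := a) (c := c)
    have := card_insert_le v {w, a, c}
    omega
  obtain ⟨b, hb, hbvwac⟩ := exists_mem_notMem_of_card_lt_card hvwac
  refine ⟨u, v, w, a, b, c, ?_⟩
  grind

end K6MinusMatchingColorable

/-- The graph `K₆` minus a perfect matching on the vertices `u, v, w, a, b, c`, where the
non-adjacent pairs are `{u,b}`, `{v,c}`, `{w,a}` (this is the total graph of a triangle), is
colorable from any lists with `|L(u)| ≥ 2`, `|L(a)|, |L(c)| ≥ 3` and
`|L(v)|, |L(w)|, |L(b)| ≥ 4`. -/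
theorem K6_minus_matching_choosable
    (Lu Lv Lw La Lb Lc : Finset ℕ)
    (hu : 2 ≤ Lu.card) (ha : 3 ≤ La.card) (hc : 3 ≤ Lc.card)
    (hv : 4 ≤ Lv.card) (hw : 4 ≤ Lw.card) (hb : 4 ≤ Lb.card) :
    ∃ u v w a b c : ℕ,
      u ∈ Lu ∧ v ∈ Lv ∧ w ∈ Lw ∧ a ∈ La ∧ b ∈ Lb ∧ c ∈ Lc ∧
      u ≠ v ∧ u ≠ w ∧ u ≠ a ∧ u ≠ c ∧
      v ≠ w ∧ v ≠ a ∧ v ≠ b ∧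
      w ≠ b ∧ w ≠ c ∧
      a ≠ b ∧ a ≠ c ∧ b ≠ c := by
  by_cases hvc : Disjoint Lv Lc
  swap
  · obtain ⟨x, hxv, hxc⟩ := not_disjoint_iff.1 hvc
    exact K6MinusMatchingColorable.of_mem_Lv_of_mem_Lc hu ha (by omega) hb hxv hxc
  by_cases hcb : Lc ⊆ Lb
  swap
  · obtain ⟨γ, hγc, hγb⟩ := not_subset.1 hcb
    exact K6MinusMatchingColorable.of_mem_Lc_of_notMem_Lb hu ha (by omega) hw hb hγc hγb
  by_cases hvb : Lv ⊆ Lb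
  swap
  · obtain ⟨β, hβv, hβb⟩ := not_subset.1 hvb
    exact K6MinusMatchingColorable.of_mem_Lv_of_notMem_Lb hu ha hc hw hb hβv hβb
  have hLb : #Lv + #Lc ≤ #Lb :=
    card_union_of_disjoint hvc ▸ card_le_card (union_subset hvb hcb)
  exact K6MinusMatchingColorable.of_four_lt_card_Lb (card_pos.1 (by omega)) (by omega) hc
    (by omega) hw (by omega)
end

section
/- Let H be the graph on nine vertices u, v_1, v_2, v_3, a, b, c, d, e whose adjacent pairs are exactly: u–v_1, u–v_2, u–v_3, u–a, u–b, u–c; v_1–v_2, v_1–a, v_1–d; v_2–v_3, v_2–b, v_2–d, v_2–e; v_3–c, v_3–e; a–b, a–c, a–d; b–c, b–d, b–e; c–e; d–e; together with, in one of the two variants, the additional edge v_1–v_3. Let L be a list assignment with |L(d)|, |L(e)| ≥ 3, |L(v_2)|, |L(a)|, |L(c)| ≥ 4, |L(b)| ≥ 5, |L(u)| ≥ 6, and with |L(v_1)|, |L(v_3)| ≥ 2 in the variant where v_1 and v_3 are not adjacent, respectively |L(v_1)|, |L(v_3)| ≥ 3 in the variant where v_1 and v_3 are adjacent. Then in either variant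 H has a proper L-coloring. -/
set_option maxHeartbeats 1000000

namespace NineCfg

lemma pick (s F : Finset ℕ) (h : F.card < s.card) : ∃ x ∈ s, ∀ y ∈ F, x ≠ y := by
  have h2 : 0 < (s \ F).card := by have := Finset.le_card_sdiff F s; omega
  obtain ⟨x, hx⟩ := Finset.card_pos.mp h2
  rw [Finset.mem_sdiff] at hx
  exact ⟨x, hx.1, fun y hy hxy => hx.2 (hxy ▸ hy)⟩

lemma cle2 (a b : ℕ) : ({a,b} : Finset ℕ).card ≤ 2 := by
  simpa using Finset.card_insert_le a {b}

lemma cle3 (a b c : ℕ) : ({a,b,c} : Finset ℕ).card ≤ 3 :=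
  (Finset.card_insert_le _ _).trans (Nat.add_le_add_right (cle2 b c) 1)

lemma cle4 (a b c d : ℕ) : ({a,b,c,d} : Finset ℕ).card ≤ 4 :=
  (Finset.card_insert_le _ _).trans (Nat.add_le_add_right (cle3 b c d) 1)

lemma cle5 (a b c d e : ℕ) : ({a,b,c,d,e} : Finset ℕ).card ≤ 5 :=
  (Finset.card_insert_le _ _).trans (Nat.add_le_add_right (cle4 b c d e) 1)

lemma pick1 (s : Finset ℕ) (a : ℕ) (h : 2 ≤ s.card) : ∃ x ∈ s, x ≠ a := by
  obtain ⟨x, hx, hne⟩ := pick s {a} (by simp; omega)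
  exact ⟨x, hx, hne a (by simp)⟩

lemma pick2 (s : Finset ℕ) (a b : ℕ) (h : 3 ≤ s.card) : ∃ x ∈ s, x ≠ a ∧ x ≠ b := by
  obtain ⟨x, hx, hne⟩ := pick s {a,b} (lt_of_le_of_lt (cle2 a b) (by omega))
  exact ⟨x, hx, hne a (by simp), hne b (by simp)⟩

lemma pick3 (s : Finset ℕ) (a b c : ℕ) (h : 4 ≤ s.card) :
    ∃ x ∈ s, x ≠ a ∧ x ≠ b ∧ x ≠ c := by
  obtain ⟨x, hx, hne⟩ := pick s {a,b,c} (lt_of_le_of_lt (cle3 a b c) (by omega))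
  exact ⟨x, hx, hne a (by simp), hne b (by simp), hne c (by simp)⟩

lemma pick4 (s : Finset ℕ) (a b c d : ℕ) (h : 5 ≤ s.card) :
    ∃ x ∈ s, x ≠ a ∧ x ≠ b ∧ x ≠ c ∧ x ≠ d := by
  obtain ⟨x, hx, hne⟩ := pick s {a,b,c,d} (lt_of_le_of_lt (cle4 a b c d) (by omega))
  exact ⟨x, hx, hne a (by simp), hne b (by simp), hne c (by simp), hne d (by simp)⟩

lemma pick5 (s : Finset ℕ) (a b c d e : ℕ) (h : 6 ≤ s.card) :
    ∃ x ∈ s, x ≠ a ∧ x ≠ b ∧ x ≠ c ∧ x ≠ d ∧ x ≠ e := by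
  obtain ⟨x, hx, hne⟩ := pick s {a,b,c,d,e} (lt_of_le_of_lt (cle5 a b c d e) (by omega))
  exact ⟨x, hx, hne a (by simp), hne b (by simp), hne c (by simp), hne d (by simp),
    hne e (by simp)⟩

/-- disjointness-style inequality -/
lemma dj {A B : Finset ℕ} {a b : ℕ} (h : ∀ x ∈ A, x ∉ B) (ha : a ∈ A) (hb : b ∈ B) :
    a ≠ b := fun e => h a ha (e ▸ hb)

lemma nmm {s : Finset ℕ} {a b : ℕ} (ha : a ∈ s) (hb : b ∉ s) : a ≠ b :=
  fun e => hb (e ▸ ha)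

abbrev Good (t : Bool) (Lu Lv1 Lv2 Lv3 La Lb Lc Ld Le : Finset ℕ) : Prop :=
  ∃ u v1 v2 v3 a b c d e : ℕ,
    u ∈ Lu ∧ v1 ∈ Lv1 ∧ v2 ∈ Lv2 ∧ v3 ∈ Lv3 ∧
    a ∈ La ∧ b ∈ Lb ∧ c ∈ Lc ∧ d ∈ Ld ∧ e ∈ Le ∧
    u ≠ v1 ∧ u ≠ v2 ∧ u ≠ v3 ∧ u ≠ a ∧ u ≠ b ∧ u ≠ c ∧
    v1 ≠ v2 ∧ v1 ≠ a ∧ v1 ≠ d ∧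
    v2 ≠ v3 ∧ v2 ≠ b ∧ v2 ≠ d ∧ v2 ≠ e ∧
    v3 ≠ c ∧ v3 ≠ e ∧
    a ≠ b ∧ a ≠ c ∧ a ≠ d ∧
    b ≠ c ∧ b ≠ d ∧ b ≠ e ∧
    c ≠ e ∧ d ≠ e ∧
    (t = true → v1 ≠ v3)

lemma good_symm {t : Bool} {Lu Lv1 Lv2 Lv3 La Lb Lc Ld Le : Finset ℕ}
    (h : Good t Lu Lv3 Lv2 Lv1 Lc Lb La Le Ld) :
    Good t Lu Lv1 Lv2 Lv3 La Lb Lc Ld Le := by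
  obtain ⟨u, x1, x2, x3, α, β, γ, δ, ε, hu, h1, h2, h3, hα, hβ, hγ, hδ, hε,
    e1, e2, e3, e4, e5, e6, e7, e8, e9, e10, e11, e12, e13, e14, e15,
    e16, e17, e18, e19, e20, e21, e22, e23, e24⟩ := h
  exact ⟨u, x3, x2, x1, γ, β, α, ε, δ, hu, h3, h2, h1, hγ, hβ, hα, hε, hδ,
    e3, e2, e1, e6, e5, e4,
    Ne.symm e10, e14, e15,
    Ne.symm e7, e11, e13, e12,
    e8, e9,
    Ne.symm e19, Ne.symm e17, e22,
    Ne.symm e16, e21, e20,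
    e18, Ne.symm e23,
    fun ht => Ne.symm (e24 ht)⟩

lemma dance (t : Bool) (w : ℕ) (Lv1 Lv3 Ld Le : Finset ℕ)
    (hv1 : 2 ≤ Lv1.card) (hv3 : 2 ≤ Lv3.card) (hd : 3 ≤ Ld.card) (he : 3 ≤ Le.card)
    (ht1 : t = true → 3 ≤ Lv1.card) (ht3 : t = true → 3 ≤ Lv3.card)
    (hdisj : t = false → ∀ x ∈ Lv1, x ∉ Lv3) :
    ∃ x1 x3 dc ec, x1 ∈ Lv1 ∧ x3 ∈ Lv3 ∧ dc ∈ Ld ∧ ec ∈ Le ∧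
      x1 ≠ w ∧ x3 ≠ w ∧ dc ≠ w ∧ ec ≠ w ∧ x1 ≠ dc ∧ x3 ≠ ec ∧ dc ≠ ec ∧
      (t = true → x1 ≠ x3) := by
  have pickV3 : ∀ q : ℕ, q ∈ Lv1 → ∃ x3 ∈ Lv3, x3 ≠ w ∧ x3 ≠ q := by
    intro q hq
    cases t with
    | true => exact pick2 Lv3 w q (ht3 rfl)
    | false =>
      obtain ⟨x3, h3, h3w⟩ := pick1 Lv3 w hv3
      exact ⟨x3, h3, h3w, fun hEq => hdisj rfl q hq (hEq ▸ h3)⟩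
  obtain ⟨x1, hx1, hx1w⟩ := pick1 Lv1 w hv1
  obtain ⟨x3, hx3, hx3w, hx31⟩ := pickV3 x1 hx1
  by_cases H : ∃ dc ∈ Ld, dc ≠ w ∧ dc ≠ x1 ∧ ∃ ec ∈ Le, ec ≠ w ∧ ec ≠ x3 ∧ dc ≠ ec
  · obtain ⟨dc, hdc, hdcw, hdcx1, ec, hec, hecw, hecx3, hdcec⟩ := H
    exact ⟨x1, x3, dc, ec, hx1, hx3, hdc, hec, hx1w, hx3w, hdcw, hecw,
      Ne.symm hdcx1, Ne.symm hecx3, hdcec, fun _ => Ne.symm hx31⟩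
  · push_neg at H
    obtain ⟨z, hzLd, hzw, hzx1⟩ := pick2 Ld w x1 hd
    obtain ⟨z', hz'Le, hz'w, hz'x3⟩ := pick2 Le w x3 he
    have hzz' : z = z' := H z hzLd hzw hzx1 z' hz'Le hz'w hz'x3
    subst hzz'
    have hLd : Ld = {w, x1, z} := by
      apply Finset.eq_of_subset_of_card_le
      · intro p hp
        by_cases hpw : p = w
        · simp [hpw]
        by_cases hp1 : p = x1
        · simp [hp1]
        have := H p hp hpw hp1 z hz'Le hz'w hz'x3
        simp [this]
      · exact le_trans (cle3 w x1 z) hd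
    have hLe : Le = {w, x3, z} := by
      apply Finset.eq_of_subset_of_card_le
      · intro p hp
        by_cases hpw : p = w
        · simp [hpw]
        by_cases hp3 : p = x3
        · simp [hp3]
        have := H z hzLd hzw hzx1 p hp hpw hp3
        simp [← this]
      · exact le_trans (cle3 w x3 z) he
    have hx1Ld : x1 ∈ Ld := by rw [hLd]; simp
    have hx3Le : x3 ∈ Le := by rw [hLe]; simp
    by_cases hz1 : z ∈ Lv1
    · exact ⟨z, x3, x1, z, hz1, hx3, hx1Ld, hz'Le, hzw, hx3w, hx1w, hzw,
        hzx1, Ne.symm hz'x3, Ne.symm hzx1, fun _ => hz'x3⟩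
    by_cases hz3 : z ∈ Lv3
    · exact ⟨x1, z, z, x3, hx1, hz3, hzLd, hx3Le, hx1w, hzw, hzw, hx3w,
        Ne.symm hzx1, hz'x3, hz'x3, fun _ => Ne.symm hzx1⟩
    by_cases h1' : ∃ x1' ∈ Lv1, x1' ≠ w ∧ x1' ≠ x1
    · obtain ⟨x1', h1m, h1w, h11⟩ := h1'
      obtain ⟨x3'', h3m, h3w, h31⟩ := pickV3 x1' h1m
      exact ⟨x1', x3'', x1, z, h1m, h3m, hx1Ld, hz'Le, h1w, h3w, hx1w, hzw,
        h11, fun hEq => hz3 (hEq ▸ h3m), Ne.symm hzx1, fun _ => Ne.symm h31⟩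
    · push_neg at h1'
      have hLv1sub : Lv1 ⊆ {w, x1} := by
        intro p hp
        by_cases hpw : p = w
        · simp [hpw]
        · simp [h1' p hp hpw]
      have htf : t = false := by
        cases t with
        | false => rfl
        | true =>
          exfalso
          have h3 := ht1 rfl
          have := Finset.card_le_card hLv1sub
          have := cle2 w x1
          omega
      by_cases h3' : ∃ x3' ∈ Lv3, x3' ≠ w ∧ x3' ≠ x3
      · obtain ⟨x3', h3m, h3w, h33⟩ := h3'
        exact ⟨x1, x3', z, x3, hx1, h3m, hzLd, hx3Le, hx1w, h3w, hzw, hx3w,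
          Ne.symm hzx1, h33, hz'x3, fun hT => absurd hT (by simp [htf])⟩
      · exfalso
        push_neg at h3'
        have hLv3sub : Lv3 ⊆ {w, x3} := by
          intro p hp
          by_cases hpw : p = w
          · simp [hpw]
          · simp [h3' p hp hpw]
        have hLv1eq : Lv1 = {w, x1} :=
          Finset.eq_of_subset_of_card_le hLv1sub (le_trans (cle2 w x1) hv1)
        have hLv3eq : Lv3 = {w, x3} :=
          Finset.eq_of_subset_of_card_le hLv3sub (le_trans (cle2 w x3) hv3)
        have hw1 : w ∈ Lv1 := by rw [hLv1eq]; simp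
        have hw3 : w ∈ Lv3 := by rw [hLv3eq]; simp
        exact hdisj htf w hw1 hw3


lemma caseIIA (t : Bool) (Lu Lv1 Lv2 Lv3 La Lb Lc Ld Le : Finset ℕ)
    (hu : 6 ≤ Lu.card) (hb : 5 ≤ Lb.card) (hc : 4 ≤ Lc.card)
    (hv1 : 2 ≤ Lv1.card) (hv3 : 2 ≤ Lv3.card) (hd : 3 ≤ Ld.card) (he : 3 ≤ Le.card)
    (ht1 : t = true → 3 ≤ Lv1.card) (ht3 : t = true → 3 ≤ Lv3.card)
    (hdisj : t = false → ∀ x ∈ Lv1, x ∉ Lv3)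
    (y : ℕ) (hyv2 : y ∈ Lv2) (hya : y ∈ La) :
    Good t Lu Lv1 Lv2 Lv3 La Lb Lc Ld Le := by
  obtain ⟨x1, x3, dc, ec, hx1, hx3, hdc, hec, hx1w, hx3w, hdcw, hecw, hx1dc, hx3ec,
    hdcec, htne⟩ := dance t y Lv1 Lv3 Ld Le hv1 hv3 hd he ht1 ht3 hdisj
  obtain ⟨c, hcm, hc1, hc2, hc3⟩ := pick3 Lc y x3 ec hc
  obtain ⟨b, hbm, hb1, hb2, hb3, hb4⟩ := pick4 Lb y c dc ec hb
  obtain ⟨u, hum, hu1, hu2, hu3, hu4, hu5⟩ := pick5 Lu x1 y x3 b c hu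
  exact ⟨u, x1, y, x3, y, b, c, dc, ec, hum, hx1, hyv2, hx3, hya, hbm, hcm, hdc, hec,
    hu1, hu2, hu3, hu2, hu4, hu5,
    hx1w, hx1w, hx1dc,
    Ne.symm hx3w, Ne.symm hb1, Ne.symm hdcw, Ne.symm hecw,
    Ne.symm hc2, hx3ec,
    Ne.symm hb1, Ne.symm hc1, Ne.symm hdcw,
    hb2, hb3, hb4,
    hc3, hdcec, htne⟩

lemma case_u3 (t : Bool) (Lu Lv1 Lv2 Lv3 La Lb Lc Ld Le : Finset ℕ)
    (hu : 6 ≤ Lu.card) (hb : 5 ≤ Lb.card) (hc : 4 ≤ Lc.card)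
    (hv1 : 2 ≤ Lv1.card) (hv2 : 4 ≤ Lv2.card) (hd : 3 ≤ Ld.card) (he : 3 ≤ Le.card)
    (y : ℕ) (hyv3 : y ∈ Lv3) (hya : y ∈ La) (hyv2 : y ∉ Lv2) :
    Good t Lu Lv1 Lv2 Lv3 La Lb Lc Ld Le := by
  obtain ⟨v1, h1m, h1y⟩ := pick1 Lv1 y hv1
  obtain ⟨d, hdm, hd1, hd2⟩ := pick2 Ld y v1 hd
  obtain ⟨e, hem, he1, he2⟩ := pick2 Le y d he
  obtain ⟨w, hwm, hw1, hw2, hw3⟩ := pick3 Lv2 v1 d e hv2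
  obtain ⟨b, hbm, hb1, hb2, hb3, hb4⟩ := pick4 Lb y w d e hb
  obtain ⟨c, hcm, hc1, hc2, hc3⟩ := pick3 Lc y e b hc
  obtain ⟨u, hum, hu1, hu2, hu3, hu4, hu5⟩ := pick5 Lu v1 y w b c hu
  exact ⟨u, v1, w, y, y, b, c, d, e, hum, h1m, hwm, hyv3, hya, hbm, hcm, hdm, hem,
    hu1, hu3, hu2, hu2, hu4, hu5,
    Ne.symm hw1, h1y, Ne.symm hd2,
    nmm hwm hyv2, Ne.symm hb2, hw2, hw3,
    Ne.symm hc1, Ne.symm he1,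
    Ne.symm hb1, Ne.symm hc1, Ne.symm hd1,
    Ne.symm hc3, hb3, hb4,
    hc2, Ne.symm he2,
    fun _ => h1y⟩


lemma caseR1 (t : Bool) (Lu Lv1 Lv2 Lv3 La Lb Lc Ld Le : Finset ℕ)
    (hu : 6 ≤ Lu.card) (hb : 5 ≤ Lb.card) (hc4 : 4 ≤ Lc.card) (hv2 : 4 ≤ Lv2.card)
    (hv1 : 2 ≤ Lv1.card) (hv3 : 2 ≤ Lv3.card) (hd : 3 ≤ Ld.card)
    (ht3 : t = true → 3 ≤ Lv3.card)
    (hdisj : t = false → ∀ x ∈ Lv1, x ∉ Lv3)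
    (y : ℕ) (hya : y ∈ La) (hye : y ∈ Le) (hyLv2 : y ∉ Lv2) (hyLv3 : y ∉ Lv3)
    (hcv1 : ∀ x ∈ Lc, x ∉ Lv1) (hcv2 : ∀ x ∈ Lc, x ∉ Lv2) :
    Good t Lu Lv1 Lv2 Lv3 La Lb Lc Ld Le := by
  obtain ⟨x1, hx1m, hx1y⟩ := pick1 Lv1 y hv1
  have hx3ex : ∃ x3 ∈ Lv3, x3 ≠ x1 := by
    cases t with
    | true => exact pick1 Lv3 x1 (by have := ht3 rfl; omega)
    | false =>
      obtain ⟨x3, hx3⟩ := Finset.card_pos.mp (by omega : 0 < Lv3.card)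
      exact ⟨x3, hx3, fun h => hdisj rfl x1 hx1m (h ▸ hx3)⟩
  obtain ⟨x3, hx3m, hx31⟩ := hx3ex
  obtain ⟨d, hdm, hdy, hdx1⟩ := pick2 Ld y x1 hd
  by_cases hw : ∃ w ∈ Lv2, w ∉ Lu ∧ w ≠ x1 ∧ w ≠ x3 ∧ w ≠ d
  · obtain ⟨w, hwm, hwLu, hw1, hw3, hwd⟩ := hw
    obtain ⟨c, hcm, hcy, hcx3⟩ := pick2 Lc y x3 (by omega)
    obtain ⟨b, hbm, hb1, hb2, hb3, hb4⟩ := pick4 Lb y w c d hb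
    obtain ⟨u, hum, hu1, hu2, hu3, hu4, hu5⟩ := pick5 Lu x1 x3 b c y hu
    exact ⟨u, x1, w, x3, y, b, c, d, y, hum, hx1m, hwm, hx3m, hya, hbm, hcm, hdm, hye,
      hu1, nmm hum hwLu, hu2, hu5, hu3, hu4,
      Ne.symm hw1, hx1y, Ne.symm hdx1,
      hw3, Ne.symm hb2, hwd, nmm hwm hyLv2,
      Ne.symm hcx3, nmm hx3m hyLv3,
      Ne.symm hb1, Ne.symm hcy, Ne.symm hdy,
      hb3, hb4, hb1,
      hcy, hdy,
      fun _ => Ne.symm hx31⟩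
  · by_cases hcE : ∃ c ∈ Lc, c ∉ Lu ∧ c ≠ y ∧ c ≠ x3
    · obtain ⟨c, hcm, hcLu, hcy, hcx3⟩ := hcE
      obtain ⟨w, hwm, hw1, hw2, hw3⟩ := pick3 Lv2 x1 x3 d hv2
      obtain ⟨b, hbm, hb1, hb2, hb3, hb4⟩ := pick4 Lb y w c d hb
      obtain ⟨u, hum, hu1, hu2, hu3, hu4, hu5⟩ := pick5 Lu x1 w x3 b y hu
      exact ⟨u, x1, w, x3, y, b, c, d, y, hum, hx1m, hwm, hx3m, hya, hbm, hcm, hdm, hye,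
        hu1, hu2, hu3, hu5, hu4, nmm hum hcLu,
        Ne.symm hw1, hx1y, Ne.symm hdx1,
        hw2, Ne.symm hb2, hw3, nmm hwm hyLv2,
        Ne.symm hcx3, nmm hx3m hyLv3,
        Ne.symm hb1, Ne.symm hcy, Ne.symm hdy,
        hb3, hb4, hb1,
        hcy, hdy,
        fun _ => Ne.symm hx31⟩
    · obtain ⟨w, hwm, hw1, hw2, hw3⟩ := pick3 Lv2 x1 x3 d hv2
      obtain ⟨c, hcm, hcy, hcx3⟩ := pick2 Lc y x3 (by omega)
      obtain ⟨b, hbm, hb1, hb2, hb3, hb4⟩ := pick4 Lb y w c d hb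
      have hbc : b ≠ c := hb3
      have huEx : ∃ u ∈ Lu, u ≠ x1 ∧ u ≠ w ∧ u ≠ x3 ∧ u ≠ b ∧ u ≠ c ∧ u ≠ y := by
        by_contra hno
        push_neg at hno hw hcE
        have hTsub : Lc ⊆ {y, x3, b, c} := by
          intro p hp
          by_cases hpy : p = y
          · simp [hpy]
          by_cases hpx3 : p = x3
          · simp [hpx3]
          have hpLu : p ∈ Lu := by
            by_contra hpLu
            exact hpx3 (hcE p hp hpLu hpy)
          by_cases hpb : p = b
          · simp [hpb]
          by_cases hpc : p = c
          · simp [hpc]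
          exact absurd (hno p hpLu (dj hcv1 hp hx1m) (dj hcv2 hp hwm) hpx3 hpb hpc) hpy
        have hTeq : Lc = {y, x3, b, c} :=
          Finset.eq_of_subset_of_card_le hTsub (le_trans (cle4 y x3 b c) hc4)
        have hbLc : b ∈ Lc := by rw [hTeq]; simp
        have hx3Lc : x3 ∈ Lc := by rw [hTeq]; simp
        have hSsub : Lv2 ⊆ {x1, x3, d, w} := by
          intro p hp
          by_cases h1 : p = x1
          · simp [h1]
          by_cases h2 : p = x3
          · simp [h2]
          by_cases h3 : p = d
          · simp [h3]
          by_cases hpw : p = w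
          · simp [hpw]
          have hpLu : p ∈ Lu := by
            by_contra hh
            exact h3 (hw p hp hh h1 h2)
          have hpb : p ≠ b := fun e => hcv2 b hbLc (e ▸ hp)
          have hpc : p ≠ c := fun e => hcv2 c hcm (e ▸ hp)
          exact absurd (hno p hpLu h1 hpw h2 hpb hpc) (nmm hp hyLv2)
        have hSeq : Lv2 = {x1, x3, d, w} :=
          Finset.eq_of_subset_of_card_le hSsub (le_trans (cle4 x1 x3 d w) hv2)
        have hx3Lv2 : x3 ∈ Lv2 := by rw [hSeq]; simp
        exact hcv2 x3 hx3Lc hx3Lv2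
      obtain ⟨u, hum, hu1, hu2, hu3, hu4, hu5, hu6⟩ := huEx
      exact ⟨u, x1, w, x3, y, b, c, d, y, hum, hx1m, hwm, hx3m, hya, hbm, hcm, hdm, hye,
        hu1, hu2, hu3, hu6, hu4, hu5,
        Ne.symm hw1, hx1y, Ne.symm hdx1,
        hw2, Ne.symm hb2, hw3, nmm hwm hyLv2,
        Ne.symm hcx3, nmm hx3m hyLv3,
        Ne.symm hb1, Ne.symm hcy, Ne.symm hdy,
        hb3, hb4, hb1,
        hcy, hdy,
        fun _ => Ne.symm hx31⟩


lemma caseE1a (t : Bool) (Lu Lv1 Lv2 Lv3 La Lb Lc Ld Le : Finset ℕ)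
    (hu : 6 ≤ Lu.card) (hb : 5 ≤ Lb.card) (ha4 : 4 ≤ La.card) (hc4 : 4 ≤ Lc.card)
    (hv1 : 2 ≤ Lv1.card) (hv3 : 2 ≤ Lv3.card) (hd : 3 ≤ Ld.card) (he : 3 ≤ Le.card)
    (ht1 : t = true → 3 ≤ Lv1.card) (ht3 : t = true → 3 ≤ Lv3.card)
    (hdisj : t = false → ∀ x ∈ Lv1, x ∉ Lv3)
    (w : ℕ) (hwm : w ∈ Lv2) (hwLb : w ∉ Lb) (hwLu : w ∉ Lu) :
    Good t Lu Lv1 Lv2 Lv3 La Lb Lc Ld Le := by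
  obtain ⟨x1, x3, dc, ec, hx1, hx3, hdc, hec, hx1w, hx3w, hdcw, hecw, hx1dc, hx3ec,
    hdcec, htne⟩ := dance t w Lv1 Lv3 Ld Le hv1 hv3 hd he ht1 ht3 hdisj
  obtain ⟨a, ham, ha1, ha2⟩ := pick2 La x1 dc (by omega)
  obtain ⟨c, hcm, hc1, hc2, hc3⟩ := pick3 Lc x3 ec a hc4
  obtain ⟨b, hbm, hb1, hb2, hb3, hb4⟩ := pick4 Lb a c dc ec hb
  obtain ⟨u, hum, hu1, hu2, hu3, hu4, hu5⟩ := pick5 Lu x1 x3 a b c hu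
  exact ⟨u, x1, w, x3, a, b, c, dc, ec, hum, hx1, hwm, hx3, ham, hbm, hcm, hdc, hec,
    hu1, nmm hum hwLu, hu2, hu3, hu4, hu5,
    hx1w, Ne.symm ha1, hx1dc,
    Ne.symm hx3w, Ne.symm (nmm hbm hwLb), Ne.symm hdcw, Ne.symm hecw,
    Ne.symm hc1, hx3ec,
    Ne.symm hb1, Ne.symm hc3, ha2,
    hb2, hb3, hb4,
    hc2, hdcec, htne⟩

lemma caseE2II (t : Bool) (Lu Lv1 Lv2 Lv3 La Lb Lc Ld Le : Finset ℕ)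
    (hu : 6 ≤ Lu.card) (hbE : Lb.card = 5) (ha4 : 4 ≤ La.card) (hc4 : 4 ≤ Lc.card)
    (hv1 : 2 ≤ Lv1.card) (hv2 : 4 ≤ Lv2.card) (hv3 : 2 ≤ Lv3.card)
    (hd : 3 ≤ Ld.card) (he : 3 ≤ Le.card)
    (ht1 : t = true → 3 ≤ Lv1.card) (ht3 : t = true → 3 ≤ Lv3.card)
    (hdisj : t = false → ∀ x ∈ Lv1, x ∉ Lv3)
    (hv2Lb : Lv2 ⊆ Lb) (hav2 : ∀ x ∈ La, x ∉ Lv2)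
    (w : ℕ) (hwm : w ∈ Lv2) (hwLu : w ∉ Lu) :
    Good t Lu Lv1 Lv2 Lv3 La Lb Lc Ld Le := by
  have hb : 5 ≤ Lb.card := by omega
  obtain ⟨x1, x3, dc, ec, hx1, hx3, hdc, hec, hx1w, hx3w, hdcw, hecw, hx1dc, hx3ec,
    hdcec, htne⟩ := dance t w Lv1 Lv3 Ld Le hv1 hv3 hd he ht1 ht3 hdisj
  have hsd : (Lb \ Lv2).card ≤ 1 := by
    rw [Finset.card_sdiff_of_subset hv2Lb]
    have := Finset.card_le_card hv2Lb
    omega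
  have hFcard : (insert x1 (insert dc (Lb \ Lv2))).card < La.card := by
    have h2 := Finset.card_insert_le dc (Lb \ Lv2)
    have h3 := Finset.card_insert_le x1 (insert dc (Lb \ Lv2))
    omega
  obtain ⟨a, ham, hane⟩ := pick La _ hFcard
  have ha1 : a ≠ x1 := hane x1 (by simp)
  have ha2 : a ≠ dc := hane dc (by simp)
  have haLb : a ∉ Lb := by
    intro hab
    exact hane a (by
      simp only [Finset.mem_insert, Finset.mem_sdiff]
      exact Or.inr (Or.inr ⟨hab, hav2 a ham⟩)) rfl
  obtain ⟨c, hcm, hc1, hc2, hc3⟩ := pick3 Lc x3 ec a hc4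
  obtain ⟨b, hbm, hb1, hb2, hb3, hb4⟩ := pick4 Lb w c dc ec hb
  obtain ⟨u, hum, hu1, hu2, hu3, hu4, hu5⟩ := pick5 Lu x1 x3 a b c hu
  exact ⟨u, x1, w, x3, a, b, c, dc, ec, hum, hx1, hwm, hx3, ham, hbm, hcm, hdc, hec,
    hu1, nmm hum hwLu, hu2, hu3, hu4, hu5,
    hx1w, Ne.symm ha1, hx1dc,
    Ne.symm hx3w, Ne.symm hb1, Ne.symm hdcw, Ne.symm hecw,
    Ne.symm hc1, hx3ec,
    Ne.symm (nmm hbm haLb), Ne.symm hc3, ha2,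
    hb2, hb3, hb4,
    hc2, hdcec, htne⟩


lemma caseE1b (t : Bool) (Lu Lv1 Lv2 Lv3 La Lb Lc Ld Le : Finset ℕ)
    (hu : 6 ≤ Lu.card) (hb : 5 ≤ Lb.card) (ha4 : 4 ≤ La.card) (hc4 : 4 ≤ Lc.card)
    (hv1 : 2 ≤ Lv1.card) (hv2 : 4 ≤ Lv2.card) (hv3 : 2 ≤ Lv3.card)
    (hd : 3 ≤ Ld.card) (he : 3 ≤ Le.card)
    (ht1 : t = true → 3 ≤ Lv1.card) (ht3 : t = true → 3 ≤ Lv3.card)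
    (hdisj : t = false → ∀ x ∈ Lv1, x ∉ Lv3)
    (hav2 : ∀ x ∈ La, x ∉ Lv2) (hav3 : ∀ x ∈ La, x ∉ Lv3) (hale : ∀ x ∈ La, x ∉ Le)
    (hcv1 : ∀ x ∈ Lc, x ∉ Lv1) (hcv2 : ∀ x ∈ Lc, x ∉ Lv2) (hcld : ∀ x ∈ Lc, x ∉ Ld)
    (w : ℕ) (hwm : w ∈ Lv2) (hwLb : w ∉ Lb)
    (hcover : ∀ p ∈ Lv2, p ∉ Lb → p ∈ Lu) :
    Good t Lu Lv1 Lv2 Lv3 La Lb Lc Ld Le := by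
  obtain ⟨x1, x3, dc, ec, hx1, hx3, hdc, hec, hx1w, hx3w, hdcw, hecw, hx1dc, hx3ec,
    hdcec, htne⟩ := dance t w Lv1 Lv3 Ld Le hv1 hv3 hd he ht1 ht3 hdisj
  have h13 : x1 ≠ x3 := by
    cases t with
    | true => exact htne rfl
    | false => exact fun h => hdisj rfl x1 hx1 (h ▸ hx3)
  by_cases hA : ∃ a ∈ La, a ∉ Lu ∧ a ≠ x1 ∧ a ≠ dc
  · obtain ⟨a, ham, haLu, ha1, ha2⟩ := hA
    obtain ⟨c, hcm, hc1, hc2, hc3⟩ := pick3 Lc x3 ec a hc4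
    obtain ⟨b, hbm, hb1, hb2, hb3, hb4⟩ := pick4 Lb a c dc ec hb
    obtain ⟨u, hum, hu1, hu2, hu3, hu4, hu5⟩ := pick5 Lu x1 w x3 b c hu
    exact ⟨u, x1, w, x3, a, b, c, dc, ec, hum, hx1, hwm, hx3, ham, hbm, hcm, hdc, hec,
      hu1, hu2, hu3, nmm hum haLu, hu4, hu5,
      hx1w, Ne.symm ha1, hx1dc,
      Ne.symm hx3w, Ne.symm (nmm hbm hwLb), Ne.symm hdcw, Ne.symm hecw,
      Ne.symm hc1, hx3ec,
      Ne.symm hb1, Ne.symm hc3, ha2,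
      hb2, hb3, hb4,
      hc2, hdcec, htne⟩
  · push_neg at hA
    obtain ⟨a, ham, ha1, ha2⟩ := pick2 La x1 dc (by omega)
    by_cases hC : ∃ c ∈ Lc, c ∉ Lu ∧ c ≠ x3 ∧ c ≠ ec ∧ c ≠ a
    · obtain ⟨c, hcm, hcLu, hc1, hc2, hc3⟩ := hC
      obtain ⟨b, hbm, hb1, hb2, hb3, hb4⟩ := pick4 Lb a c dc ec hb
      obtain ⟨u, hum, hu1, hu2, hu3, hu4, hu5⟩ := pick5 Lu x1 w x3 a b hu
      exact ⟨u, x1, w, x3, a, b, c, dc, ec, hum, hx1, hwm, hx3, ham, hbm, hcm, hdc, hec,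
        hu1, hu2, hu3, hu4, hu5, nmm hum hcLu,
        hx1w, Ne.symm ha1, hx1dc,
        Ne.symm hx3w, Ne.symm (nmm hbm hwLb), Ne.symm hdcw, Ne.symm hecw,
        Ne.symm hc1, hx3ec,
        Ne.symm hb1, Ne.symm hc3, ha2,
        hb2, hb3, hb4,
        hc2, hdcec, htne⟩
    · push_neg at hC
      obtain ⟨c, hcm, hc1, hc2, hc3⟩ := pick3 Lc x3 ec a hc4
      by_cases hB : ∃ b ∈ Lb, b ∉ Lu ∧ b ≠ a ∧ b ≠ c ∧ b ≠ dc ∧ b ≠ ec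
      · obtain ⟨b, hbm, hbLu, hb1, hb2, hb3, hb4⟩ := hB
        obtain ⟨u, hum, hu1, hu2, hu3, hu4, hu5⟩ := pick5 Lu x1 w x3 a c hu
        exact ⟨u, x1, w, x3, a, b, c, dc, ec, hum, hx1, hwm, hx3, ham, hbm, hcm, hdc, hec,
          hu1, hu2, hu3, hu4, nmm hum hbLu, hu5,
          hx1w, Ne.symm ha1, hx1dc,
          Ne.symm hx3w, Ne.symm (nmm hbm hwLb), Ne.symm hdcw, Ne.symm hecw,
          Ne.symm hc1, hx3ec,
          Ne.symm hb1, Ne.symm hc3, ha2,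
          hb2, hb3, hb4,
          hc2, hdcec, htne⟩
      · push_neg at hB
        by_cases hD : x1 ∈ Lb ∧ x1 ≠ ec
        · obtain ⟨u, hum, hu1, hu2, hu3, hu4, hu5⟩ := pick5 Lu x1 w x3 a c hu
          exact ⟨u, x1, w, x3, a, x1, c, dc, ec, hum, hx1, hwm, hx3, ham, hD.1, hcm, hdc, hec,
            hu1, hu2, hu3, hu4, hu1, hu5,
            hx1w, Ne.symm ha1, hx1dc,
            Ne.symm hx3w, Ne.symm hx1w, Ne.symm hdcw, Ne.symm hecw,
            Ne.symm hc1, hx3ec,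
            ha1, Ne.symm hc3, ha2,
            Ne.symm (dj hcv1 hcm hx1), hx1dc, hD.2,
            hc2, hdcec, htne⟩
        · by_cases hE : x3 ∈ Lb ∧ x3 ≠ dc
          · obtain ⟨u, hum, hu1, hu2, hu3, hu4, hu5⟩ := pick5 Lu x1 w x3 a c hu
            exact ⟨u, x1, w, x3, a, x3, c, dc, ec, hum, hx1, hwm, hx3, ham, hE.1, hcm, hdc, hec,
              hu1, hu2, hu3, hu4, hu3, hu5,
              hx1w, Ne.symm ha1, hx1dc,
              Ne.symm hx3w, Ne.symm hx3w, Ne.symm hdcw, Ne.symm hecw,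
              Ne.symm hc1, hx3ec,
              dj hav3 ham hx3, Ne.symm hc3, ha2,
              Ne.symm hc1, hE.2, hx3ec,
              hc2, hdcec, htne⟩
          · obtain ⟨b, hbm, hb1, hb2, hb3, hb4⟩ := pick4 Lb a c dc ec hb
            have hbx1 : b ≠ x1 := by
              intro h
              have hx1b : x1 ∈ Lb := h ▸ hbm
              have : x1 = ec := by
                by_contra hne
                exact hD ⟨hx1b, hne⟩
              exact hb4 (h.trans this)
            have hbx3 : b ≠ x3 := by
              intro h
              have hx3b : x3 ∈ Lb := h ▸ hbm
              have : x3 = dc := by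
                by_contra hne
                exact hE ⟨hx3b, hne⟩
              exact hb3 (h.trans this)
            have huEx : ∃ u ∈ Lu, u ≠ x1 ∧ u ≠ w ∧ u ≠ x3 ∧ u ≠ a ∧ u ≠ b ∧ u ≠ c := by
              by_contra hno
              push_neg at hno
              have hLuS : ∀ p ∈ Lu, p = x1 ∨ p = w ∨ p = x3 ∨ p = a ∨ p = b ∨ p = c := by
                intro p hp
                by_contra hcon
                push_neg at hcon
                obtain ⟨n1, n2, n3, n4, n5, n6⟩ := hcon
                exact n6 (hno p hp n1 n2 n3 n4 n5)
              have sA : ∀ p ∈ La, p = x1 ∨ p = dc ∨ p = a ∨ p = b ∨ p = c := by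
                intro p hp
                by_contra hcon
                push_neg at hcon
                obtain ⟨n1, n2, n3, n4, n5⟩ := hcon
                have hpLu : p ∈ Lu := by
                  by_contra hh
                  exact n2 (hA p hp hh n1)
                rcases hLuS p hpLu with rfl | rfl | rfl | rfl | rfl | rfl
                · exact n1 rfl
                · exact hav2 _ hp hwm
                · exact hav3 _ hp hx3
                · exact n3 rfl
                · exact n4 rfl
                · exact n5 rfl
              have sC : ∀ p ∈ Lc, p = x3 ∨ p = ec ∨ p = a ∨ p = b ∨ p = c := by
                intro p hp
                by_contra hcon
                push_neg at hcon
                obtain ⟨n1, n2, n3, n4, n5⟩ := hcon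
                have hpLu : p ∈ Lu := by
                  by_contra hh
                  exact n3 (hC p hp hh n1 n2)
                rcases hLuS p hpLu with rfl | rfl | rfl | rfl | rfl | rfl
                · exact hcv1 _ hp hx1
                · exact hcv2 _ hp hwm
                · exact n1 rfl
                · exact n3 rfl
                · exact n4 rfl
                · exact n5 rfl
              have sV : ∀ p ∈ Lv2, p = x1 ∨ p = w ∨ p = x3 ∨ p = b ∨ p = dc ∨ p = ec := by
                intro p hp
                by_contra hcon
                push_neg at hcon
                obtain ⟨n1, n2, n3, n4, n5, n6⟩ := hcon
                by_cases hpLb : p ∈ Lb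
                · by_cases hpLu : p ∈ Lu
                  · rcases hLuS p hpLu with rfl | rfl | rfl | rfl | rfl | rfl
                    · exact n1 rfl
                    · exact n2 rfl
                    · exact n3 rfl
                    · exact hav2 _ ham hp
                    · exact n4 rfl
                    · exact hcv2 _ hcm hp
                  · exact n6 (hB p hpLb hpLu (fun h => hav2 a ham (h ▸ hp))
                      (fun h => hcv2 c hcm (h ▸ hp)) n5)
                · have hpLu : p ∈ Lu := hcover p hp hpLb
                  rcases hLuS p hpLu with rfl | rfl | rfl | rfl | rfl | rfl
                  · exact n1 rfl
                  · exact n2 rfl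
                  · exact n3 rfl
                  · exact hav2 _ ham hp
                  · exact n4 rfl
                  · exact hcv2 _ hcm hp
              by_cases hbLv2 : b ∈ Lv2
              · have hbLa : b ∉ La := fun h => hav2 b h hbLv2
                have hbLc : b ∉ Lc := fun h => hcv2 b h hbLv2
                have hx1La : x1 ∈ La := by
                  by_contra hh
                  have hsub : La ⊆ {dc, a, c} := by
                    intro p hp
                    rcases sA p hp with rfl | rfl | rfl | rfl | rfl
                    · exact absurd hp hh
                    · simp
                    · simp
                    · exact absurd hp hbLa
                    · simp
                  have := Finset.card_le_card hsub
                  have := cle3 dc a c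
                  omega
                have hdcLa : dc ∈ La := by
                  by_contra hh
                  have hsub : La ⊆ {x1, a, c} := by
                    intro p hp
                    rcases sA p hp with rfl | rfl | rfl | rfl | rfl
                    · simp
                    · exact absurd hp hh
                    · simp
                    · exact absurd hp hbLa
                    · simp
                  have := Finset.card_le_card hsub
                  have := cle3 x1 a c
                  omega
                have hx3Lc : x3 ∈ Lc := by
                  by_contra hh
                  have hsub : Lc ⊆ {ec, a, c} := by
                    intro p hp
                    rcases sC p hp with rfl | rfl | rfl | rfl | rfl
                    · exact absurd hp hh
                    · simp
                    · simp
                    · exact absurd hp hbLc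
                    · simp
                  have := Finset.card_le_card hsub
                  have := cle3 ec a c
                  omega
                have hecLc : ec ∈ Lc := by
                  by_contra hh
                  have hsub : Lc ⊆ {x3, a, c} := by
                    intro p hp
                    rcases sC p hp with rfl | rfl | rfl | rfl | rfl
                    · simp
                    · exact absurd hp hh
                    · simp
                    · exact absurd hp hbLc
                    · simp
                  have := Finset.card_le_card hsub
                  have := cle3 x3 a c
                  omega
                have hsub : Lv2 ⊆ {w, b} := by
                  intro p hp
                  rcases sV p hp with rfl | rfl | rfl | rfl | rfl | rfl
                  · exact absurd hp (hav2 _ hx1La)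
                  · simp
                  · exact absurd hp (hcv2 _ hx3Lc)
                  · simp
                  · exact absurd hp (hav2 _ hdcLa)
                  · exact absurd hp (hcv2 _ hecLc)
                have := Finset.card_le_card hsub
                have := cle2 w b
                omega
              · have hpA : ∃ p, (p = x1 ∨ p = dc) ∧ p ∈ La := by
                  by_cases h1 : x1 ∈ La
                  · exact ⟨x1, Or.inl rfl, h1⟩
                  by_cases h2 : dc ∈ La
                  · exact ⟨dc, Or.inr rfl, h2⟩
                  exfalso
                  have hsub : La ⊆ {a, b, c} := by
                    intro p hp
                    rcases sA p hp with rfl | rfl | rfl | rfl | rfl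
                    · exact absurd hp h1
                    · exact absurd hp h2
                    · simp
                    · simp
                    · simp
                  have := Finset.card_le_card hsub
                  have := cle3 a b c
                  omega
                have hqC : ∃ q, (q = x3 ∨ q = ec) ∧ q ∈ Lc := by
                  by_cases h1 : x3 ∈ Lc
                  · exact ⟨x3, Or.inl rfl, h1⟩
                  by_cases h2 : ec ∈ Lc
                  · exact ⟨ec, Or.inr rfl, h2⟩
                  exfalso
                  have hsub : Lc ⊆ {a, b, c} := by
                    intro p hp
                    rcases sC p hp with rfl | rfl | rfl | rfl | rfl
                    · exact absurd hp h1
                    · exact absurd hp h2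
                    · simp
                    · simp
                    · simp
                  have := Finset.card_le_card hsub
                  have := cle3 a b c
                  omega
                obtain ⟨p, hpval, hpLa⟩ := hpA
                obtain ⟨q, hqval, hqLc⟩ := hqC
                have hpq : p ≠ q := by
                  rcases hpval with rfl | rfl <;> rcases hqval with rfl | rfl
                  · exact h13
                  · exact fun h => hale p hpLa (by rw [h]; exact hec)
                  · exact fun h => hcld q hqLc (by rw [← h]; exact hdc)
                  · exact hdcec
                have hpV2 : p ∉ Lv2 := hav2 p hpLa
                have hqV2 : q ∉ Lv2 := hcv2 q hqLc
                have hsub : insert p (insert q Lv2) ⊆ {x1, w, x3, dc, ec} := by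
                  intro r hr
                  simp only [Finset.mem_insert] at hr
                  rcases hr with rfl | rfl | hr
                  · rcases hpval with rfl | rfl
                    · simp
                    · simp
                  · rcases hqval with rfl | rfl
                    · simp
                    · simp
                  · rcases sV r hr with rfl | rfl | rfl | rfl | rfl | rfl
                    · simp
                    · simp
                    · simp
                    · exact absurd hr hbLv2
                    · simp
                    · simp
                have hc6 : 6 ≤ (insert p (insert q Lv2)).card := by
                  rw [Finset.card_insert_of_notMem (by
                    simp only [Finset.mem_insert]
                    push_neg
                    exact ⟨hpq, hpV2⟩),
                    Finset.card_insert_of_notMem hqV2]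
                  omega
                have := Finset.card_le_card hsub
                have := cle5 x1 w x3 dc ec
                omega
            obtain ⟨u, hum, hu1, hu2, hu3, hu4, hu5, hu6⟩ := huEx
            exact ⟨u, x1, w, x3, a, b, c, dc, ec, hum, hx1, hwm, hx3, ham, hbm, hcm, hdc, hec,
              hu1, hu2, hu3, hu4, hu5, hu6,
              hx1w, Ne.symm ha1, hx1dc,
              Ne.symm hx3w, Ne.symm (nmm hbm hwLb), Ne.symm hdcw, Ne.symm hecw,
              Ne.symm hc1, hx3ec,
              Ne.symm hb1, Ne.symm hc3, ha2,
              hb2, hb3, hb4,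
              hc2, hdcec, htne⟩


lemma caseR33 (t : Bool) (Lu Lv1 Lv2 Lv3 La Lb Lc Ld Le : Finset ℕ)
    (hu6 : Lu.card = 6) (hv24 : Lv2.card = 4) (ha4 : 4 ≤ La.card) (hc4 : 4 ≤ Lc.card)
    (hv1 : 2 ≤ Lv1.card) (hv3 : 2 ≤ Lv3.card) (hd : 3 ≤ Ld.card) (he : 3 ≤ Le.card)
    (ht3 : t = true → 3 ≤ Lv3.card)
    (hdisj : t = false → ∀ x ∈ Lv1, x ∉ Lv3)
    (hav2 : ∀ x ∈ La, x ∉ Lv2) (hcv2 : ∀ x ∈ Lc, x ∉ Lv2)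
    (hV2U : Lv2 ⊆ Lu) (hV2B : Lv2 ⊆ Lb) :
    Good t Lu Lv1 Lv2 Lv3 La Lb Lc Ld Le := by
  have hv2 : 4 ≤ Lv2.card := by omega
  have hu : 6 ≤ Lu.card := by omega
  by_cases hK1 : ∃ x1 ∈ Lv1, x1 ∉ Lv2
  · obtain ⟨x1, hx1, hx1V2⟩ := hK1
    have hx3ex : ∃ x3 ∈ Lv3, x3 ≠ x1 := by
      cases t with
      | true => exact pick1 Lv3 x1 (by have := ht3 rfl; omega)
      | false =>
        obtain ⟨x3, hx3⟩ := Finset.card_pos.mp (show 0 < Lv3.card by omega)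
        exact ⟨x3, hx3, fun h => hdisj rfl x1 hx1 (h ▸ hx3)⟩
    obtain ⟨x3, hx3, hx31⟩ := hx3ex
    obtain ⟨d, hdm, hd1⟩ := pick1 Ld x1 (by omega)
    obtain ⟨e, hem, he1, he2⟩ := pick2 Le x3 d he
    obtain ⟨w, hwm, hw1, hw2, hw3⟩ := pick3 Lv2 x3 d e hv2
    obtain ⟨a, ham, ha1, ha2⟩ := pick2 La x1 d (by omega)
    obtain ⟨c, hcm, hc1, hc2, hc3⟩ := pick3 Lc x3 e a hc4
    obtain ⟨b, hbm2, hb1, hb2, hb3⟩ := pick3 Lv2 w d e hv2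
    obtain ⟨u, hum2, huw, hux3, hub⟩ := pick3 Lv2 w x3 b hv2
    exact ⟨u, x1, w, x3, a, b, c, d, e, hV2U hum2, hx1, hwm, hx3, ham, hV2B hbm2,
      hcm, hdm, hem,
      nmm hum2 hx1V2, huw, hux3, Ne.symm (dj hav2 ham hum2), hub,
      Ne.symm (dj hcv2 hcm hum2),
      Ne.symm (nmm hwm hx1V2), Ne.symm ha1, Ne.symm hd1,
      hw1, Ne.symm hb1, hw2, hw3,
      Ne.symm hc1, Ne.symm he1,
      dj hav2 ham hbm2, Ne.symm hc3, ha2,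
      Ne.symm (dj hcv2 hcm hbm2), hb2, hb3,
      hc2, Ne.symm he2,
      fun _ => Ne.symm hx31⟩
  · push_neg at hK1
    have finish : ∀ x1 x3 w d e : ℕ, x1 ∈ Lv1 → x3 ∈ Lv3 → w ∈ Lv2 → d ∈ Ld → e ∈ Le →
        x1 ≠ w → x3 ≠ w → d ≠ w → e ≠ w → d ≠ x1 → e ≠ x3 → e ≠ d →
        (t = true → x1 ≠ x3) →
        Good t Lu Lv1 Lv2 Lv3 La Lb Lc Ld Le := by
      intro x1 x3 w d e hx1 hx3 hwm hdm hem h1w h3w hdw hew hd1 he3 hed htt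
      have hsd2 : (Lu \ Lv2).card ≤ 2 := by
        rw [Finset.card_sdiff_of_subset hV2U]
        omega
      have hF : (insert d (Lu \ Lv2)).card < La.card := by
        have := Finset.card_insert_le d (Lu \ Lv2)
        omega
      obtain ⟨a, ham, hane⟩ := pick La _ hF
      have had : a ≠ d := hane d (by simp)
      have haLu : a ∉ Lu := by
        intro h
        exact hane a (by
          simp only [Finset.mem_insert, Finset.mem_sdiff]
          exact Or.inr ⟨h, hav2 a ham⟩) rfl
      obtain ⟨c, hcm, hc1, hc2, hc3⟩ := pick3 Lc x3 e a hc4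
      obtain ⟨b, hbm2, hb1, hb2, hb3⟩ := pick3 Lv2 w d e hv2
      obtain ⟨u, hum, hu1, hu2, hu3, hu4, hu5⟩ := pick5 Lu x1 w x3 b c hu
      exact ⟨u, x1, w, x3, a, b, c, d, e, hum, hx1, hwm, hx3, ham, hV2B hbm2,
        hcm, hdm, hem,
        hu1, hu2, hu3, nmm hum haLu, hu4, hu5,
        h1w, Ne.symm (dj hav2 ham (hK1 x1 hx1)), Ne.symm hd1,
        Ne.symm h3w, Ne.symm hb1, Ne.symm hdw, Ne.symm hew,
        Ne.symm hc1, Ne.symm he3,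
        dj hav2 ham hbm2, Ne.symm hc3, had,
        Ne.symm (dj hcv2 hcm hbm2), hb2, hb3,
        hc2, Ne.symm hed,
        htt⟩
    by_cases h2a : ∃ e0 ∈ Le, e0 ∉ Lv2
    · obtain ⟨e0, he0, he0V2⟩ := h2a
      obtain ⟨x1, hx1⟩ := Finset.card_pos.mp (show 0 < Lv1.card by omega)
      have hx3ex : ∃ x3 ∈ Lv3, x3 ≠ x1 ∧ x3 ≠ e0 := by
        cases t with
        | true => exact pick2 Lv3 x1 e0 (ht3 rfl)
        | false =>
          obtain ⟨x3, h3, h3e⟩ := pick1 Lv3 e0 hv3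
          exact ⟨x3, h3, fun h => hdisj rfl x1 hx1 (h ▸ h3), h3e⟩
      obtain ⟨x3, hx3, h31, h3e⟩ := hx3ex
      obtain ⟨d, hdm, hd1, hd2⟩ := pick2 Ld x1 e0 hd
      obtain ⟨w, hwm, hw1, hw2, hw3⟩ := pick3 Lv2 x1 x3 d hv2
      exact finish x1 x3 w d e0 hx1 hx3 hwm hdm he0
        (Ne.symm hw1) (Ne.symm hw2) (Ne.symm hw3) (Ne.symm (nmm hwm he0V2))
        hd1 (Ne.symm h3e) (Ne.symm hd2) (fun _ => Ne.symm h31)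
    · push_neg at h2a
      by_cases h2b : ∃ d0 ∈ Ld, d0 ∉ Lv2
      · obtain ⟨d0, hd0, hd0V2⟩ := h2b
        obtain ⟨x1, hx1⟩ := Finset.card_pos.mp (show 0 < Lv1.card by omega)
        have hx1V2 : x1 ∈ Lv2 := hK1 x1 hx1
        have hd01 : d0 ≠ x1 := fun h => hd0V2 (h ▸ hx1V2)
        have hx3ex : ∃ x3 ∈ Lv3, x3 ≠ x1 := by
          cases t with
          | true => exact pick1 Lv3 x1 (by have := ht3 rfl; omega)
          | false =>
            obtain ⟨x3, hx3⟩ := Finset.card_pos.mp (show 0 < Lv3.card by omega)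
            exact ⟨x3, hx3, fun h => hdisj rfl x1 hx1 (h ▸ hx3)⟩
        obtain ⟨x3, hx3, h31⟩ := hx3ex
        obtain ⟨e, hem, he1, he2⟩ := pick2 Le x3 d0 he
        obtain ⟨w, hwm, hw1, hw2, hw3⟩ := pick3 Lv2 x1 x3 e hv2
        exact finish x1 x3 w d0 e hx1 hx3 hwm hd0 hem
          (Ne.symm hw1) (Ne.symm hw2) (Ne.symm (nmm hwm hd0V2)) (Ne.symm hw3)
          hd01 he1 he2 (fun _ => Ne.symm h31)
      · push_neg at h2b
        by_cases h2c : ∃ x30 ∈ Lv3, x30 ∉ Lv2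
        · obtain ⟨x30, hx30, h30V2⟩ := h2c
          obtain ⟨x1, hx1⟩ := Finset.card_pos.mp (show 0 < Lv1.card by omega)
          have hx1V2 : x1 ∈ Lv2 := hK1 x1 hx1
          have h301 : x30 ≠ x1 := fun h => h30V2 (h ▸ hx1V2)
          obtain ⟨d, hdm, hd1⟩ := pick1 Ld x1 (by omega)
          obtain ⟨e, hem, he1⟩ := pick1 Le d (by omega)
          have he3 : e ≠ x30 := fun h => h30V2 (h ▸ h2a e hem)
          obtain ⟨w, hwm, hw1, hw2, hw3⟩ := pick3 Lv2 x1 d e hv2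
          exact finish x1 x30 w d e hx1 hx30 hwm hdm hem
            (Ne.symm hw1) (Ne.symm (nmm hwm h30V2)) (Ne.symm hw2) (Ne.symm hw3)
            hd1 he3 he1 (fun _ => Ne.symm h301)
        · push_neg at h2c
          by_cases h2di : ∃ z ∈ Lv1, z ∈ Le
          · obtain ⟨z, hz1, hzE⟩ := h2di
            have hx3ex : ∃ x3 ∈ Lv3, x3 ≠ z := by
              cases t with
              | true => exact pick1 Lv3 z (by have := ht3 rfl; omega)
              | false =>
                obtain ⟨x3, hx3⟩ := Finset.card_pos.mp (show 0 < Lv3.card by omega)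
                exact ⟨x3, hx3, fun h => hdisj rfl z hz1 (h ▸ hx3)⟩
            obtain ⟨x3, hx3, h3z⟩ := hx3ex
            obtain ⟨d, hdm, hdz⟩ := pick1 Ld z (by omega)
            obtain ⟨w, hwm, hw1, hw2, hw3⟩ := pick3 Lv2 z x3 d hv2
            exact finish z x3 w d z hz1 hx3 hwm hdm hzE
              (Ne.symm hw1) (Ne.symm hw2) (Ne.symm hw3) (Ne.symm hw1)
              hdz (Ne.symm h3z) (Ne.symm hdz) (fun _ => Ne.symm h3z)
          · by_cases h2dii : ∃ z ∈ Lv3, z ∈ Ld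
            · obtain ⟨z, hz3, hzD⟩ := h2dii
              obtain ⟨x1, hx1, h1z⟩ := pick1 Lv1 z hv1
              obtain ⟨e, hem, hez⟩ := pick1 Le z (by omega)
              obtain ⟨w, hwm, hw1, hw2, hw3⟩ := pick3 Lv2 x1 z e hv2
              exact finish x1 z w z e hx1 hz3 hwm hzD hem
                (Ne.symm hw1) (Ne.symm hw2) (Ne.symm hw2) (Ne.symm hw3)
                (Ne.symm h1z) hez hez (fun _ => h1z)
            · exfalso
              push_neg at h2di
              have hsub : Lv1 ∪ Le ⊆ Lv2 :=
                Finset.union_subset (fun x hx => hK1 x hx) (fun x hx => h2a x hx)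
              have hdisj2 : Disjoint Lv1 Le := Finset.disjoint_left.mpr h2di
              have hcard : (Lv1 ∪ Le).card = Lv1.card + Le.card :=
                Finset.card_union_of_disjoint hdisj2
              have := Finset.card_le_card hsub
              omega


lemma caseI (Lu Lv1 Lv2 Lv3 La Lb Lc Ld Le : Finset ℕ)
    (hu : 6 ≤ Lu.card) (hb5 : Lb.card = 5) (hv2 : 4 ≤ Lv2.card)
    (ha4 : 4 ≤ La.card) (hc4 : 4 ≤ Lc.card) (hd : 3 ≤ Ld.card) (he : 3 ≤ Le.card)
    (x : ℕ) (hx1 : x ∈ Lv1) (hx3 : x ∈ Lv3) :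
    Good false Lu Lv1 Lv2 Lv3 La Lb Lc Ld Le := by
  have hb : 5 ≤ Lb.card := by omega
  by_cases hIa : ∃ y ∈ Ld, y ∈ Lc ∧ y ≠ x
  · obtain ⟨y, hyd, hyc, hyx⟩ := hIa
    obtain ⟨e, hem, he1, he2⟩ := pick2 Le x y he
    obtain ⟨v2, hv2m, hv21, hv22, hv23⟩ := pick3 Lv2 x y e hv2
    obtain ⟨a, ham, ha1, ha2⟩ := pick2 La x y (by omega)
    obtain ⟨b, hbm, hb1, hb2, hb3, hb4⟩ := pick4 Lb y v2 a e hb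
    obtain ⟨u, hum, hu1, hu2, hu3, hu4, hu5⟩ := pick5 Lu x y v2 a b hu
    exact ⟨u, x, v2, x, a, b, y, y, e, hum, hx1, hv2m, hx3, ham, hbm, hyc, hyd, hem,
      hu1, hu3, hu1, hu4, hu5, hu2,
      Ne.symm hv21, Ne.symm ha1, Ne.symm hyx,
      hv21, Ne.symm hb2, hv22, hv23,
      Ne.symm hyx, Ne.symm he1,
      Ne.symm hb3, ha2, ha2,
      hb1, hb1, hb4,
      Ne.symm he2, Ne.symm he2,
      fun h => nomatch h⟩
  · by_cases hIb : ∃ y ∈ La, y ∈ Le ∧ y ≠ x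
    · obtain ⟨y, hya, hye, hyx⟩ := hIb
      obtain ⟨d, hdm, hd1, hd2⟩ := pick2 Ld x y hd
      obtain ⟨v2, hv2m, hv21, hv22, hv23⟩ := pick3 Lv2 x y d hv2
      obtain ⟨c, hcm, hc1, hc2⟩ := pick2 Lc x y (by omega)
      obtain ⟨b, hbm, hb1, hb2, hb3, hb4⟩ := pick4 Lb y v2 c d hb
      obtain ⟨u, hum, hu1, hu2, hu3, hu4, hu5⟩ := pick5 Lu x y v2 b c hu
      exact ⟨u, x, v2, x, y, b, c, d, y, hum, hx1, hv2m, hx3, hya, hbm, hcm, hdm, hye,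
        hu1, hu3, hu1, hu2, hu4, hu5,
        Ne.symm hv21, Ne.symm hyx, Ne.symm hd1,
        hv21, Ne.symm hb2, hv23, hv22,
        Ne.symm hc1, Ne.symm hyx,
        Ne.symm hb1, Ne.symm hc2, Ne.symm hd2,
        hb3, hb4, hb1,
        hc2, hd2,
        fun h => nomatch h⟩
    · by_cases hIcA : ∃ y ∈ Ld, y ∉ Lb ∧ y ≠ x
      · obtain ⟨y, hyd, hyLb, hyx⟩ := hIcA
        obtain ⟨e, hem, he1, he2⟩ := pick2 Le x y he
        obtain ⟨v2, hv2m, hv21, hv22, hv23⟩ := pick3 Lv2 x y e hv2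
        obtain ⟨a, ham, ha1, ha2⟩ := pick2 La x y (by omega)
        obtain ⟨c, hcm, hc1, hc2, hc3⟩ := pick3 Lc x e a hc4
        obtain ⟨b, hbm, hb1, hb2, hb3, hb4⟩ := pick4 Lb v2 a c e hb
        obtain ⟨u, hum, hu1, hu2, hu3, hu4, hu5⟩ := pick5 Lu x v2 a b c hu
        exact ⟨u, x, v2, x, a, b, c, y, e, hum, hx1, hv2m, hx3, ham, hbm, hcm, hyd, hem,
          hu1, hu2, hu1, hu3, hu4, hu5,
          Ne.symm hv21, Ne.symm ha1, Ne.symm hyx,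
          hv21, Ne.symm hb1, hv22, hv23,
          Ne.symm hc1, Ne.symm he1,
          Ne.symm hb2, Ne.symm hc3, ha2,
          hb3, nmm hbm hyLb, hb4,
          hc2, Ne.symm he2,
          fun h => nomatch h⟩
      · by_cases hIcB : ∃ y ∈ Le, y ∉ Lb ∧ y ≠ x
        · obtain ⟨y, hye, hyLb, hyx⟩ := hIcB
          obtain ⟨d, hdm, hd1, hd2⟩ := pick2 Ld x y hd
          obtain ⟨v2, hv2m, hv21, hv22, hv23⟩ := pick3 Lv2 x y d hv2
          obtain ⟨c, hcm, hc1, hc2⟩ := pick2 Lc x y (by omega)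
          obtain ⟨a, ham, ha1, ha2, ha3⟩ := pick3 La x d c ha4
          obtain ⟨b, hbm, hb1, hb2, hb3, hb4⟩ := pick4 Lb v2 a c d hb
          obtain ⟨u, hum, hu1, hu2, hu3, hu4, hu5⟩ := pick5 Lu x v2 a b c hu
          exact ⟨u, x, v2, x, a, b, c, d, y, hum, hx1, hv2m, hx3, ham, hbm, hcm, hdm, hye,
            hu1, hu2, hu1, hu3, hu4, hu5,
            Ne.symm hv21, Ne.symm ha1, Ne.symm hd1,
            hv21, Ne.symm hb1, hv23, hv22,
            Ne.symm hc1, Ne.symm hyx,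
            Ne.symm hb2, ha3, ha2,
            hb3, hb4, nmm hbm hyLb,
            hc2, hd2,
            fun h => nomatch h⟩
        · by_cases hIcC1 : ∃ y ∈ La, y ∉ Lb ∧ y ≠ x
          · obtain ⟨y, hya, hyLb, hyx⟩ := hIcC1
            obtain ⟨d, hdm, hd1, hd2⟩ := pick2 Ld x y hd
            obtain ⟨e, hem, he1, he2⟩ := pick2 Le x d he
            obtain ⟨v2, hv2m, hv21, hv22, hv23⟩ := pick3 Lv2 x d e hv2
            obtain ⟨c, hcm, hc1, hc2, hc3⟩ := pick3 Lc x y e hc4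
            obtain ⟨b, hbm, hb1, hb2, hb3, hb4⟩ := pick4 Lb v2 c d e hb
            obtain ⟨u, hum, hu1, hu2, hu3, hu4, hu5⟩ := pick5 Lu x y v2 b c hu
            exact ⟨u, x, v2, x, y, b, c, d, e, hum, hx1, hv2m, hx3, hya, hbm, hcm, hdm, hem,
              hu1, hu3, hu1, hu2, hu4, hu5,
              Ne.symm hv21, Ne.symm hyx, Ne.symm hd1,
              hv21, Ne.symm hb1, hv22, hv23,
              Ne.symm hc1, Ne.symm he1,
              Ne.symm (nmm hbm hyLb), Ne.symm hc2, Ne.symm hd2,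
              hb2, hb3, hb4,
              hc3, Ne.symm he2,
              fun h => nomatch h⟩
          · by_cases hIcC2 : ∃ y ∈ Lc, y ∉ Lb ∧ y ≠ x
            · obtain ⟨y, hyc, hyLb, hyx⟩ := hIcC2
              obtain ⟨e, hem, he1, he2⟩ := pick2 Le x y he
              obtain ⟨d, hdm, hd1, hd2⟩ := pick2 Ld x e hd
              obtain ⟨v2, hv2m, hv21, hv22, hv23⟩ := pick3 Lv2 x d e hv2
              obtain ⟨a, ham, ha1, ha2, ha3⟩ := pick3 La x y d ha4
              obtain ⟨b, hbm, hb1, hb2, hb3, hb4⟩ := pick4 Lb v2 a d e hb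
              obtain ⟨u, hum, hu1, hu2, hu3, hu4, hu5⟩ := pick5 Lu x y v2 a b hu
              exact ⟨u, x, v2, x, a, b, y, d, e, hum, hx1, hv2m, hx3, ham, hbm, hyc, hdm, hem,
                hu1, hu3, hu1, hu4, hu5, hu2,
                Ne.symm hv21, Ne.symm ha1, Ne.symm hd1,
                hv21, Ne.symm hb1, hv22, hv23,
                Ne.symm hyx, Ne.symm he1,
                Ne.symm hb2, ha2, ha3,
                nmm hbm hyLb, hb3, hb4,
                Ne.symm he2, hd2,
                fun h => nomatch h⟩
            · by_cases hIcC3 : ∃ y ∈ Lv2, y ∉ Lb ∧ y ≠ x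
              · obtain ⟨y, hyv2, hyLb, hyx⟩ := hIcC3
                push_neg at hIcA hIcB
                have hyLd : y ∉ Ld := fun h => hyx (hIcA y h hyLb)
                have hyLe : y ∉ Le := fun h => hyx (hIcB y h hyLb)
                obtain ⟨d, hdm, hd1⟩ := pick1 Ld x (by omega)
                obtain ⟨e, hem, he1, he2⟩ := pick2 Le x d he
                obtain ⟨a, ham, ha1, ha2⟩ := pick2 La x d (by omega)
                obtain ⟨c, hcm, hc1, hc2, hc3⟩ := pick3 Lc x e a hc4
                obtain ⟨b, hbm, hb1, hb2, hb3, hb4⟩ := pick4 Lb a c d e hb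
                obtain ⟨u, hum, hu1, hu2, hu3, hu4, hu5⟩ := pick5 Lu x y a b c hu
                exact ⟨u, x, y, x, a, b, c, d, e, hum, hx1, hyv2, hx3, ham, hbm, hcm, hdm, hem,
                  hu1, hu2, hu1, hu3, hu4, hu5,
                  Ne.symm hyx, Ne.symm ha1, Ne.symm hd1,
                  hyx, Ne.symm (nmm hbm hyLb), Ne.symm (nmm hdm hyLd), Ne.symm (nmm hem hyLe),
                  Ne.symm hc1, Ne.symm he1,
                  Ne.symm hb1, Ne.symm hc3, ha2,
                  hb2, hb3, hb4,
                  hc2, Ne.symm he2,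
                  fun h => nomatch h⟩
              · push_neg at hIcC3 hIcC1 hIb
                have hyEx : ∃ y, y ∈ Lv2 ∧ y ∈ La ∧ y ≠ x := by
                  by_contra hno
                  push_neg at hno
                  have h1 : Lv2 \ {x} ⊆ Lb := by
                    intro p hp
                    rw [Finset.mem_sdiff, Finset.mem_singleton] at hp
                    by_contra hh
                    exact hp.2 (hIcC3 p hp.1 hh)
                  have h2 : La \ {x} ⊆ Lb := by
                    intro p hp
                    rw [Finset.mem_sdiff, Finset.mem_singleton] at hp
                    by_contra hh
                    exact hp.2 (hIcC1 p hp.1 hh)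
                  have hdisjS : Disjoint (Lv2 \ {x}) (La \ {x}) := by
                    rw [Finset.disjoint_left]
                    intro p hp hp2
                    rw [Finset.mem_sdiff, Finset.mem_singleton] at hp hp2
                    exact hp.2 (hno p hp.1 hp2.1)
                  have hcard : (Lv2 \ {x} ∪ La \ {x}).card
                      = (Lv2 \ {x}).card + (La \ {x}).card :=
                    Finset.card_union_of_disjoint hdisjS
                  have hc1' := Finset.le_card_sdiff {x} Lv2
                  have hc2' := Finset.le_card_sdiff {x} La
                  have hsub := Finset.card_le_card (Finset.union_subset h1 h2)
                  simp only [Finset.card_singleton] at hc1' hc2'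
                  omega
                obtain ⟨y, hyv2, hya, hyx⟩ := hyEx
                have hyLe : y ∉ Le := fun h => hyx (hIb y hya h)
                obtain ⟨d, hdm, hd1, hd2⟩ := pick2 Ld x y hd
                obtain ⟨e, hem, he1, he2⟩ := pick2 Le x d he
                obtain ⟨c, hcm, hc1, hc2, hc3⟩ := pick3 Lc x y e hc4
                obtain ⟨b, hbm, hb1, hb2, hb3, hb4⟩ := pick4 Lb y c d e hb
                obtain ⟨u, hum, hu1, hu2, hu3, hu4⟩ := pick4 Lu x y b c (by omega)
                exact ⟨u, x, y, x, y, b, c, d, e, hum, hx1, hyv2, hx3, hya, hbm, hcm, hdm, hem,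
                  hu1, hu2, hu1, hu2, hu3, hu4,
                  Ne.symm hyx, Ne.symm hyx, Ne.symm hd1,
                  hyx, Ne.symm hb1, Ne.symm hd2, Ne.symm (nmm hem hyLe),
                  Ne.symm hc1, Ne.symm he1,
                  Ne.symm hb1, Ne.symm hc2, Ne.symm hd2,
                  hb2, hb3, hb4,
                  hc3, Ne.symm he2,
                  fun h => nomatch h⟩


lemma caseII (t : Bool) (Lu Lv1 Lv2 Lv3 La Lb Lc Ld Le : Finset ℕ)
    (hu6 : Lu.card = 6) (hb5 : Lb.card = 5) (hv24 : Lv2.card = 4)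
    (ha4 : 4 ≤ La.card) (hc4 : 4 ≤ Lc.card)
    (hv1 : 2 ≤ Lv1.card) (hv3 : 2 ≤ Lv3.card) (hd : 3 ≤ Ld.card) (he : 3 ≤ Le.card)
    (ht1 : t = true → 3 ≤ Lv1.card) (ht3 : t = true → 3 ≤ Lv3.card)
    (hdisj : t = false → ∀ x ∈ Lv1, x ∉ Lv3) :
    Good t Lu Lv1 Lv2 Lv3 La Lb Lc Ld Le := by
  have hu : 6 ≤ Lu.card := by omega
  have hb : 5 ≤ Lb.card := by omega
  have hv2 : 4 ≤ Lv2.card := by omega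
  have hdisj' : t = false → ∀ x ∈ Lv3, x ∉ Lv1 :=
    fun hf x hx3 hx1 => hdisj hf x hx1 hx3
  by_cases hIIA : ∃ y ∈ Lv2, y ∈ La
  · obtain ⟨y, h2, hay⟩ := hIIA
    exact caseIIA t Lu Lv1 Lv2 Lv3 La Lb Lc Ld Le hu hb hc4 hv1 hv3 hd he ht1 ht3
      hdisj y h2 hay
  by_cases hIIB : ∃ y ∈ Lv2, y ∈ Lc
  · obtain ⟨y, h2, hcy⟩ := hIIB
    exact good_symm (caseIIA t Lu Lv3 Lv2 Lv1 Lc Lb La Le Ld hu hb ha4 hv3 hv1 he hd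
      ht3 ht1 hdisj' y h2 hcy)
  push_neg at hIIA hIIB
  by_cases hu3 : ∃ y ∈ Lv3, y ∈ La
  · obtain ⟨y, h3, hay⟩ := hu3
    exact case_u3 t Lu Lv1 Lv2 Lv3 La Lb Lc Ld Le hu hb hc4 hv1 hv2 hd he y h3 hay
      (fun h => hIIA y h hay)
  by_cases hu4 : ∃ y ∈ Lv1, y ∈ Lc
  · obtain ⟨y, h1, hcy⟩ := hu4
    exact good_symm (case_u3 t Lu Lv3 Lv2 Lv1 Lc Lb La Le Ld hu hb ha4 hv3 hv2 he hd
      y h1 hcy (fun h => hIIB y h hcy))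
  push_neg at hu3 hu4
  by_cases hR1 : ∃ y ∈ La, y ∈ Le
  · obtain ⟨y, hya, hye⟩ := hR1
    exact caseR1 t Lu Lv1 Lv2 Lv3 La Lb Lc Ld Le hu hb hc4 hv2 hv1 hv3 hd ht3 hdisj
      y hya hye (fun h => hIIA y h hya) (fun h => hu3 y h hya)
      (fun x hx h1 => hu4 x h1 hx) (fun x hx h2 => hIIB x h2 hx)
  by_cases hR2 : ∃ y ∈ Lc, y ∈ Ld
  · obtain ⟨y, hyc, hyd⟩ := hR2
    exact good_symm (caseR1 t Lu Lv3 Lv2 Lv1 Lc Lb La Le Ld hu hb ha4 hv2 hv3 hv1 he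
      ht1 hdisj' y hyc hyd (fun h => hIIB y h hyc) (fun h => hu4 y h hyc)
      (fun x hx h3 => hu3 x h3 hx) (fun x hx h2 => hIIA x h2 hx))
  push_neg at hR1 hR2
  have hav2 : ∀ x ∈ La, x ∉ Lv2 := fun x hx h => hIIA x h hx
  have hav3 : ∀ x ∈ La, x ∉ Lv3 := fun x hx h => hu3 x h hx
  have hcv1 : ∀ x ∈ Lc, x ∉ Lv1 := fun x hx h => hu4 x h hx
  have hcv2 : ∀ x ∈ Lc, x ∉ Lv2 := fun x hx h => hIIB x h hx
  by_cases hE1a : ∃ w ∈ Lv2, w ∉ Lb ∧ w ∉ Lu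
  · obtain ⟨w, hwm, hwLb, hwLu⟩ := hE1a
    exact caseE1a t Lu Lv1 Lv2 Lv3 La Lb Lc Ld Le hu hb ha4 hc4 hv1 hv3 hd he
      ht1 ht3 hdisj w hwm hwLb hwLu
  · push_neg at hE1a
    by_cases hwb : ∃ w ∈ Lv2, w ∉ Lb
    · obtain ⟨w, hwm, hwLb⟩ := hwb
      exact caseE1b t Lu Lv1 Lv2 Lv3 La Lb Lc Ld Le hu hb ha4 hc4 hv1 hv2 hv3 hd he
        ht1 ht3 hdisj hav2 hav3 hR1 hcv1 hcv2 hR2 w hwm hwLb hE1a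
    · push_neg at hwb
      have hV2B : Lv2 ⊆ Lb := fun p hp => hwb p hp
      by_cases hwu : ∃ w ∈ Lv2, w ∉ Lu
      · obtain ⟨w, hwm, hwLu⟩ := hwu
        exact caseE2II t Lu Lv1 Lv2 Lv3 La Lb Lc Ld Le hu hb5 ha4 hc4 hv1 hv2 hv3
          hd he ht1 ht3 hdisj hV2B hav2 w hwm hwLu
      · push_neg at hwu
        have hV2U : Lv2 ⊆ Lu := fun p hp => hwu p hp
        exact caseR33 t Lu Lv1 Lv2 Lv3 La Lb Lc Ld Le hu6 hv24 ha4 hc4 hv1 hv3 hd he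
          ht3 hdisj hav2 hcv2 hV2U hV2B

lemma core (t : Bool) (Lu Lv1 Lv2 Lv3 La Lb Lc Ld Le : Finset ℕ)
    (hu6 : Lu.card = 6) (hb5 : Lb.card = 5) (hv24 : Lv2.card = 4)
    (ha4 : 4 ≤ La.card) (hc4 : 4 ≤ Lc.card)
    (hv1 : 2 ≤ Lv1.card) (hv3 : 2 ≤ Lv3.card) (hd : 3 ≤ Ld.card) (he : 3 ≤ Le.card)
    (ht1 : t = true → 3 ≤ Lv1.card) (ht3 : t = true → 3 ≤ Lv3.card) :
    Good t Lu Lv1 Lv2 Lv3 La Lb Lc Ld Le := by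
  cases t with
  | false =>
    by_cases hI : ∃ x ∈ Lv1, x ∈ Lv3
    · obtain ⟨x, h1, h3⟩ := hI
      exact caseI Lu Lv1 Lv2 Lv3 La Lb Lc Ld Le (by omega) hb5 (by omega) ha4 hc4
        hd he x h1 h3
    · push_neg at hI
      exact caseII false Lu Lv1 Lv2 Lv3 La Lb Lc Ld Le hu6 hb5 hv24 ha4 hc4 hv1 hv3
        hd he (fun h => nomatch h) (fun h => nomatch h) (fun _ => hI)
  | true =>
    exact caseII true Lu Lv1 Lv2 Lv3 La Lb Lc Ld Le hu6 hb5 hv24 ha4 hc4 hv1 hv3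
      hd he ht1 ht3 (fun h => nomatch h)

end NineCfg

/-- The graph on nine vertices `u, v₁, v₂, v₃, a, b, c, d, e` with the listed adjacencies
(plus, in one variant, the extra edge `v₁v₃`) has a proper coloring from any lists with
`|L(d)|, |L(e)| ≥ 3`, `|L(v₂)|, |L(a)|, |L(c)| ≥ 4`, `|L(b)| ≥ 5`, `|L(u)| ≥ 6`, and
`|L(v₁)|, |L(v₃)| ≥ 2` (variant without the edge `v₁v₃`), respectively
`|L(v₁)|, |L(v₃)| ≥ 3` (variant with the edge `v₁v₃`). The Boolean `t` indicates whether
the edge `v₁v₃` is present. -/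
theorem nine_vertex_config_choosable (t : Bool)
    (Lu Lv1 Lv2 Lv3 La Lb Lc Ld Le : Finset ℕ)
    (hd : 3 ≤ Ld.card) (he : 3 ≤ Le.card)
    (hv2 : 4 ≤ Lv2.card) (ha : 4 ≤ La.card) (hc : 4 ≤ Lc.card)
    (hb : 5 ≤ Lb.card) (hu : 6 ≤ Lu.card)
    (hv1 : (if t then 3 else 2) ≤ Lv1.card)
    (hv3 : (if t then 3 else 2) ≤ Lv3.card) :
    ∃ u v1 v2 v3 a b c d e : ℕ,
      u ∈ Lu ∧ v1 ∈ Lv1 ∧ v2 ∈ Lv2 ∧ v3 ∈ Lv3 ∧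
      a ∈ La ∧ b ∈ Lb ∧ c ∈ Lc ∧ d ∈ Ld ∧ e ∈ Le ∧
      u ≠ v1 ∧ u ≠ v2 ∧ u ≠ v3 ∧ u ≠ a ∧ u ≠ b ∧ u ≠ c ∧
      v1 ≠ v2 ∧ v1 ≠ a ∧ v1 ≠ d ∧
      v2 ≠ v3 ∧ v2 ≠ b ∧ v2 ≠ d ∧ v2 ≠ e ∧
      v3 ≠ c ∧ v3 ≠ e ∧
      a ≠ b ∧ a ≠ c ∧ a ≠ d ∧
      b ≠ c ∧ b ≠ d ∧ b ≠ e ∧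
      c ≠ e ∧ d ≠ e ∧
      (t = true → v1 ≠ v3) := by
  classical
  obtain ⟨Lu', hLuS, hLuC⟩ := Finset.exists_subset_card_eq hu
  obtain ⟨Lb', hLbS, hLbC⟩ := Finset.exists_subset_card_eq hb
  obtain ⟨Lv2', hV2S, hV2C⟩ := Finset.exists_subset_card_eq hv2
  have hv1' : 2 ≤ Lv1.card := by
    cases t with
    | true => simp only [if_true] at hv1; omega
    | false => simpa using hv1
  have hv3' : 2 ≤ Lv3.card := by
    cases t with
    | true => simp only [if_true] at hv3; omega
    | false => simpa using hv3
  have ht1 : t = true → 3 ≤ Lv1.card := by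
    intro h; subst h; simpa using hv1
  have ht3 : t = true → 3 ≤ Lv3.card := by
    intro h; subst h; simpa using hv3
  have hg : NineCfg.Good t Lu' Lv1 Lv2' Lv3 La Lb' Lc Ld Le :=
    NineCfg.core t Lu' Lv1 Lv2' Lv3 La Lb' Lc Ld Le hLuC hLbC hV2C ha hc
      hv1' hv3' hd he ht1 ht3
  obtain ⟨u, v1, v2, v3, a, b, c, d, e, m1, m2, m3, m4, m5, m6, m7, m8, m9,
    r1, r2, r3, r4, r5, r6, r7, r8, r9, r10, r11, r12, r13, r14, r15, r16, r17,
    r18, r19, r20, r21, r22, r23, r24⟩ := hg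
  exact ⟨u, v1, v2, v3, a, b, c, d, e, hLuS m1, m2, hV2S m3, m4, m5, hLbS m6, m7, m8, m9,
    r1, r2, r3, r4, r5, r6, r7, r8, r9, r10, r11, r12, r13, r14, r15, r16, r17,
    r18, r19, r20, r21, r22, r23, r24⟩
end

section
/- Let H be the graph on eleven vertices u, v_1, v_2, v_3, v_4, a, b, c, d, e, f whose adjacent pairs are exactly: u–v_1, u–v_2, u–v_3, u–v_4, u–a, u–b, u–c, u–d; v_1–v_2, v_1–a, v_1–e; v_2–v_3, v_2–b, v_2–e, v_2–f; v_3–c, v_3–f; v_4–d; a–b, a–c, a–d, a–e; b–c, b–d, b–e, b–f; c–d, c–f; e–f. For every list assignment L with |L(v_3)| ≥ 2, |L(c)| ≥ 3, |L(u)|, |L(v_1)|, |L(v_4)|, |L(a)|, |L(d)|, |L(f)| ≥ 4, |L(b)|, |L(e)| ≥ 5, and |L(v_2)| ≥ 6, H has a proper L-coloring. -/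
lemma pick_avoid (L : Finset ℕ) (F : List ℕ) (h : F.length < L.card) :
    ∃ x ∈ L, ∀ y ∈ F, x ≠ y := by
  have h1 : 0 < (L \ F.toFinset).card := by
    have h2 := Finset.le_card_sdiff F.toFinset L
    have h3 := F.toFinset_card_le
    omega
  obtain ⟨x, hx⟩ := Finset.card_pos.mp h1
  rw [Finset.mem_sdiff] at hx
  refine ⟨x, hx.1, fun y hy hxy => hx.2 ?_⟩
  rw [List.mem_toFinset, hxy]; exact hy

lemma pick_two (L : Finset ℕ) (F : List ℕ) (h : F.length + 2 ≤ L.card) :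
    ∃ x y, x ∈ L ∧ y ∈ L ∧ x ≠ y ∧ (∀ z ∈ F, x ≠ z) ∧ (∀ z ∈ F, y ≠ z) := by
  have h1 : 1 < (L \ F.toFinset).card := by
    have h2 := Finset.le_card_sdiff F.toFinset L
    have h3 := F.toFinset_card_le
    omega
  obtain ⟨x, hx, y, hy, hxy⟩ := Finset.one_lt_card.mp h1
  rw [Finset.mem_sdiff] at hx hy
  exact ⟨x, y, hx.1, hy.1, hxy,
    fun z hz hxz => hx.2 (by subst hxz; exact List.mem_toFinset.mpr hz),
    fun z hz hyz => hy.2 (by subst hyz; exact List.mem_toFinset.mpr hz)⟩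

lemma card_le2 (a b : ℕ) : ({a, b} : Finset ℕ).card ≤ 2 := by
  have := Finset.card_insert_le a ({b} : Finset ℕ)
  simp at this ⊢; omega

lemma card_le3 (a b c : ℕ) : ({a, b, c} : Finset ℕ).card ≤ 3 := by
  have h1 := Finset.card_insert_le a ({b, c} : Finset ℕ)
  have h2 := card_le2 b c
  omega

lemma card_le4 (a b c d : ℕ) : ({a, b, c, d} : Finset ℕ).card ≤ 4 := by
  have h1 := Finset.card_insert_le a ({b, c, d} : Finset ℕ)
  have h2 := card_le3 b c d
  omega

lemma card_le5 (a b c d e : ℕ) : ({a, b, c, d, e} : Finset ℕ).card ≤ 5 := by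
  have h1 := Finset.card_insert_le a ({b, c, d, e} : Finset ℕ)
  have h2 := card_le4 b c d e
  omega

lemma card_le6 (a b c d e f : ℕ) : ({a, b, c, d, e, f} : Finset ℕ).card ≤ 6 := by
  have h1 := Finset.card_insert_le a ({b, c, d, e, f} : Finset ℕ)
  have h2 := card_le5 b c d e f
  omega

lemma not_cover_five (L : Finset ℕ) (h6 : 6 ≤ L.card) (a b c d e : ℕ)
    (hsub : ∀ z ∈ L, z = a ∨ z = b ∨ z = c ∨ z = d ∨ z = e) : False := by
  have hs : L ⊆ ({a, b, c, d, e} : Finset ℕ) := by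
    intro z hz; rcases hsub z hz with h | h | h | h | h <;> simp [h]
  have h1 := Finset.card_le_card hs
  have h2 := card_le5 a b c d e
  omega

lemma cover_four_eq (L : Finset ℕ) (h4 : 4 ≤ L.card) (a b c d : ℕ)
    (hsub : ∀ z ∈ L, z = a ∨ z = b ∨ z = c ∨ z = d) : L = {a, b, c, d} := by
  have hs : L ⊆ ({a, b, c, d} : Finset ℕ) := by
    intro z hz; rcases hsub z hz with h | h | h | h <;> simp [h]
  exact Finset.eq_of_subset_of_card_le hs (le_trans (card_le4 a b c d) h4)

lemma cover_six_eq (L : Finset ℕ) (h6 : 6 ≤ L.card) (a b c d e f : ℕ)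
    (hsub : ∀ z ∈ L, z = a ∨ z = b ∨ z = c ∨ z = d ∨ z = e ∨ z = f) :
    L = {a, b, c, d, e, f} := by
  have hs : L ⊆ ({a, b, c, d, e, f} : Finset ℕ) := by
    intro z hz; rcases hsub z hz with h | h | h | h | h | h <;> simp [h]
  exact Finset.eq_of_subset_of_card_le hs (le_trans (card_le6 a b c d e f) h6)

set_option maxHeartbeats 2000000 in
/-- The graph on eleven vertices `u, v₁, v₂, v₃, v₄, a, b, c, d, e, f` with the listed
adjacencies has a proper coloring from any lists with `|L(v₃)| ≥ 2`, `|L(c)| ≥ 3`,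
`|L(u)|, |L(v₁)|, |L(v₄)|, |L(a)|, |L(d)|, |L(f)| ≥ 4`, `|L(b)|, |L(e)| ≥ 5` and
`|L(v₂)| ≥ 6`. -/
theorem eleven_vertex_config_choosable
    (Lu Lv1 Lv2 Lv3 Lv4 La Lb Lc Ld Le Lf : Finset ℕ)
    (hv3 : 2 ≤ Lv3.card) (hc : 3 ≤ Lc.card)
    (hu : 4 ≤ Lu.card) (hv1 : 4 ≤ Lv1.card) (hv4 : 4 ≤ Lv4.card)
    (ha : 4 ≤ La.card) (hd : 4 ≤ Ld.card) (hf : 4 ≤ Lf.card)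
    (hb : 5 ≤ Lb.card) (he : 5 ≤ Le.card)
    (hv2 : 6 ≤ Lv2.card) :
    ∃ u v1 v2 v3 v4 a b c d e f : ℕ,
      u ∈ Lu ∧ v1 ∈ Lv1 ∧ v2 ∈ Lv2 ∧ v3 ∈ Lv3 ∧ v4 ∈ Lv4 ∧
      a ∈ La ∧ b ∈ Lb ∧ c ∈ Lc ∧ d ∈ Ld ∧ e ∈ Le ∧ f ∈ Lf ∧
      u ≠ v1 ∧ u ≠ v2 ∧ u ≠ v3 ∧ u ≠ v4 ∧ u ≠ a ∧ u ≠ b ∧ u ≠ c ∧ u ≠ d ∧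
      v1 ≠ v2 ∧ v1 ≠ a ∧ v1 ≠ e ∧
      v2 ≠ v3 ∧ v2 ≠ b ∧ v2 ≠ e ∧ v2 ≠ f ∧
      v3 ≠ c ∧ v3 ≠ f ∧
      v4 ≠ d ∧
      a ≠ b ∧ a ≠ c ∧ a ≠ d ∧ a ≠ e ∧
      b ≠ c ∧ b ≠ d ∧ b ≠ e ∧ b ≠ f ∧
      c ≠ d ∧ c ≠ f ∧
      e ≠ f := by
  by_cases hA : ∃ x, x ∈ Lv1 ∧ x ∈ Lv3
  · -- Plan A : color v1 = v3 = x
    obtain ⟨x, hxv1, hxv3⟩ := hA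
    obtain ⟨cc, hccL, hcc⟩ := pick_avoid Lc [x]
      (by simp only [List.length_cons, List.length_nil]; omega)
    obtain ⟨cu, hcuL, hcu⟩ := pick_avoid Lu [x, cc]
      (by simp only [List.length_cons, List.length_nil]; omega)
    obtain ⟨ca, hcaL, hca⟩ := pick_avoid La [x, cu, cc]
      (by simp only [List.length_cons, List.length_nil]; omega)
    obtain ⟨cd, hcdL, hcd⟩ := pick_avoid Ld [cu, ca, cc]
      (by simp only [List.length_cons, List.length_nil]; omega)
    obtain ⟨cb, hcbL, hcb⟩ := pick_avoid Lb [cu, ca, cc, cd]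
      (by simp only [List.length_cons, List.length_nil]; omega)
    obtain ⟨cf, hcfL, hcf⟩ := pick_avoid Lf [x, cc, cb]
      (by simp only [List.length_cons, List.length_nil]; omega)
    obtain ⟨ce, hceL, hce⟩ := pick_avoid Le [x, ca, cb, cf]
      (by simp only [List.length_cons, List.length_nil]; omega)
    obtain ⟨cv2, hv2L, hv2e⟩ := pick_avoid Lv2 [cu, x, cb, ce, cf]
      (by simp only [List.length_cons, List.length_nil]; omega)
    obtain ⟨cv4, hv4L, hv4e⟩ := pick_avoid Lv4 [cu, cd]
      (by simp only [List.length_cons, List.length_nil]; omega)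
    exact ⟨cu, x, cv2, x, cv4, ca, cb, cc, cd, ce, cf,
      hcuL, hxv1, hv2L, hxv3, hv4L, hcaL, hcbL, hccL, hcdL, hceL, hcfL,
      hcu x (by simp), (hv2e cu (by simp)).symm, hcu x (by simp),
      (hv4e cu (by simp)).symm, (hca cu (by simp)).symm, (hcb cu (by simp)).symm,
      hcu cc (by simp), (hcd cu (by simp)).symm,
      (hv2e x (by simp)).symm, (hca x (by simp)).symm, (hce x (by simp)).symm,
      hv2e x (by simp), hv2e cb (by simp), hv2e ce (by simp), hv2e cf (by simp),
      (hcc x (by simp)).symm, (hcf x (by simp)).symm,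
      hv4e cd (by simp),
      (hcb ca (by simp)).symm, hca cc (by simp), (hcd ca (by simp)).symm,
      (hce ca (by simp)).symm,
      hcb cc (by simp), hcb cd (by simp), (hce cb (by simp)).symm,
      (hcf cb (by simp)).symm,
      (hcd cc (by simp)).symm, (hcf cc (by simp)).symm,
      hce cf (by simp)⟩
  · by_cases hB : ∃ x, x ∈ Lu ∧ x ∈ Lf
    · -- Plan B : color u = f = x
      obtain ⟨x, hxu, hxf⟩ := hB
      obtain ⟨cv3, hv3L, hv3e⟩ := pick_avoid Lv3 [x]
        (by simp only [List.length_cons, List.length_nil]; omega)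
      obtain ⟨cc, hccL, hcc⟩ := pick_avoid Lc [x, cv3]
        (by simp only [List.length_cons, List.length_nil]; omega)
      obtain ⟨ca, hcaL, hca⟩ := pick_avoid La [x, cc]
        (by simp only [List.length_cons, List.length_nil]; omega)
      obtain ⟨cd, hcdL, hcd⟩ := pick_avoid Ld [x, ca, cc]
        (by simp only [List.length_cons, List.length_nil]; omega)
      obtain ⟨cb, hcbL, hcb⟩ := pick_avoid Lb [x, ca, cc, cd]
        (by simp only [List.length_cons, List.length_nil]; omega)
      obtain ⟨cv1, hv1L, hv1e⟩ := pick_avoid Lv1 [x, ca]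
        (by simp only [List.length_cons, List.length_nil]; omega)
      obtain ⟨ce, hceL, hce⟩ := pick_avoid Le [x, cv1, ca, cb]
        (by simp only [List.length_cons, List.length_nil]; omega)
      obtain ⟨cv2, hv2L, hv2e⟩ := pick_avoid Lv2 [x, cv1, cv3, cb, ce]
        (by simp only [List.length_cons, List.length_nil]; omega)
      obtain ⟨cv4, hv4L, hv4e⟩ := pick_avoid Lv4 [x, cd]
        (by simp only [List.length_cons, List.length_nil]; omega)
      exact ⟨x, cv1, cv2, cv3, cv4, ca, cb, cc, cd, ce, x,
        hxu, hv1L, hv2L, hv3L, hv4L, hcaL, hcbL, hccL, hcdL, hceL, hxf,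
        (hv1e x (by simp)).symm, (hv2e x (by simp)).symm, (hv3e x (by simp)).symm,
        (hv4e x (by simp)).symm, (hca x (by simp)).symm, (hcb x (by simp)).symm,
        (hcc x (by simp)).symm, (hcd x (by simp)).symm,
        (hv2e cv1 (by simp)).symm, hv1e ca (by simp), (hce cv1 (by simp)).symm,
        hv2e cv3 (by simp), hv2e cb (by simp), hv2e ce (by simp), hv2e x (by simp),
        (hcc cv3 (by simp)).symm, hv3e x (by simp),
        hv4e cd (by simp),
        (hcb ca (by simp)).symm, hca cc (by simp), (hcd ca (by simp)).symm,
        (hce ca (by simp)).symm,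
        hcb cc (by simp), hcb cd (by simp), (hce cb (by simp)).symm, hcb x (by simp),
        (hcd cc (by simp)).symm, hcc x (by simp),
        hce x (by simp)⟩
    · -- Case C : Lv1 ∩ Lv3 = ∅ and Lu ∩ Lf = ∅
      push_neg at hA hB
      by_contra hcon
      obtain ⟨cv3, hv3L, -⟩ := pick_avoid Lv3 []
        (by simp only [List.length_nil]; omega)
      obtain ⟨cc, hccL, hcc⟩ := pick_avoid Lc [cv3]
        (by simp only [List.length_cons, List.length_nil]; omega)
      obtain ⟨cu, hcuL, hcu⟩ := pick_avoid Lu [cv3, cc]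
        (by simp only [List.length_cons, List.length_nil]; omega)
      have hcuv3 : cu ≠ cv3 := hcu cv3 (by simp)
      have hcucc : cu ≠ cc := hcu cc (by simp)
      have hcccv3 : cc ≠ cv3 := hcc cv3 (by simp)
      have key : ∀ ca cd cb cf ce cv1,
          ca ∈ La → cd ∈ Ld → cb ∈ Lb → cf ∈ Lf → ce ∈ Le → cv1 ∈ Lv1 →
          ca ≠ cu → ca ≠ cc →
          cd ≠ cu → cd ≠ ca → cd ≠ cc →
          cb ≠ cu → cb ≠ ca → cb ≠ cc → cb ≠ cd →
          cf ≠ cv3 → cf ≠ cc → cf ≠ cb →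
          ce ≠ ca → ce ≠ cb → ce ≠ cf →
          cv1 ≠ cu → cv1 ≠ ca → cv1 ≠ ce →
          ∀ z ∈ Lv2, z = cu ∨ z = cv1 ∨ z = cv3 ∨ z = cb ∨ z = ce ∨ z = cf := by
        intro ca cd cb cf ce cv1 hcaL hcdL hcbL hcfL hceL hcv1L
          a1 a2 d1 d2 d3 b1 b2 b3 b4 f1 f2 f3 e1 e2 e3 w1 w2 w3 z hz
        by_contra hne
        push_neg at hne
        obtain ⟨n1, n2, n3, n4, n5, n6⟩ := hne
        obtain ⟨cv4, hv4L, hv4e⟩ := pick_avoid Lv4 [cu, cd]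
          (by simp only [List.length_cons, List.length_nil]; omega)
        exact hcon ⟨cu, cv1, z, cv3, cv4, ca, cb, cc, cd, ce, cf,
          hcuL, hcv1L, hz, hv3L, hv4L, hcaL, hcbL, hccL, hcdL, hceL, hcfL,
          w1.symm, n1.symm, hcuv3, (hv4e cu (by simp)).symm,
          a1.symm, b1.symm, hcucc, d1.symm,
          n2.symm, w2, w3,
          n3, n4, n5, n6,
          hcccv3.symm, f1.symm,
          hv4e cd (by simp),
          b2.symm, a2, d2.symm, e1.symm,
          b3, b4, e2.symm, f3.symm,
          d3.symm, f2.symm,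
          e3⟩
      have branch : ∀ ca cd cb cf,
          ca ∈ La → ca ≠ cu → ca ≠ cc →
          cd ∈ Ld → cd ≠ cu → cd ≠ ca → cd ≠ cc →
          cb ∈ Lb → cb ≠ cu → cb ≠ ca → cb ≠ cc → cb ≠ cd →
          cf ∈ Lf → cf ≠ cv3 → cf ≠ cc → cf ≠ cb →
          ∃ e1 e2, e1 ∈ Le ∧ e2 ∈ Le ∧ e1 ≠ e2 ∧ e1 ≠ ca ∧ e2 ≠ ca ∧
            Lv1 = {cu, ca, e1, e2} ∧ Lv2 = {cu, e2, cv3, cb, e1, cf} ∧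
            cb ∉ Lv1 ∧ cf ∉ Lv1 := by
        intro ca cd cb cf hcaL hcau hcac hcdL hcdu hcda hcdc hcbL hcbu hcba hcbc hcbd
          hcfL hcfv3 hcfc hcfb
        have hcucf : cu ≠ cf := fun h => hB cu hcuL (h ▸ hcfL)
        have key2 : ∀ ce cv1, ce ∈ Le → ce ≠ ca → ce ≠ cb → ce ≠ cf →
            cv1 ∈ Lv1 → cv1 ≠ cu → cv1 ≠ ca → cv1 ≠ ce →
            ∀ z ∈ Lv2, z = cu ∨ z = cv1 ∨ z = cv3 ∨ z = cb ∨ z = ce ∨ z = cf :=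
          fun ce cv1 h1 h2 h3 h4 h5 h6 h7 h8 =>
            key ca cd cb cf ce cv1 hcaL hcdL hcbL hcfL h1 h5 hcau hcac hcdu hcda hcdc
              hcbu hcba hcbc hcbd hcfv3 hcfc hcfb h2 h3 h4 h6 h7 h8
        obtain ⟨e1, e2, he1L, he2L, he12, he1F, he2F⟩ := pick_two Le [ca, cb, cf]
          (by simp only [List.length_cons, List.length_nil]; omega)
        have he1a : e1 ≠ ca := he1F ca (by simp)
        have he1b : e1 ≠ cb := he1F cb (by simp)
        have he1f : e1 ≠ cf := he1F cf (by simp)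
        have he2a : e2 ≠ ca := he2F ca (by simp)
        have he2b : e2 ≠ cb := he2F cb (by simp)
        have he2f : e2 ≠ cf := he2F cf (by simp)
        have hcuLe : cu ∉ Le := by
          intro hcue
          obtain ⟨w, hwL, hw⟩ := pick_avoid Lv1 [cu, ca]
            (by simp only [List.length_cons, List.length_nil]; omega)
          refine not_cover_five Lv2 hv2 cu w cv3 cb cf (fun z hz => ?_)
          have hk := key2 cu w hcue hcau.symm hcbu.symm hcucf
            hwL (hw cu (by simp)) (hw ca (by simp)) (hw cu (by simp)) z hz
          tauto
        have hv3b : cv3 ≠ cb := by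
          intro hh
          obtain ⟨w, hwL, hw⟩ := pick_avoid Lv1 [cu, ca, e1]
            (by simp only [List.length_cons, List.length_nil]; omega)
          refine not_cover_five Lv2 hv2 cu w cb e1 cf (fun z hz => ?_)
          have hk := key2 e1 w he1L he1a he1b he1f
            hwL (hw cu (by simp)) (hw ca (by simp)) (hw e1 (by simp)) z hz
          rw [hh] at hk; tauto
        have hv3f : cv3 ≠ cf := by
          intro hh
          obtain ⟨w, hwL, hw⟩ := pick_avoid Lv1 [cu, ca, e1]
            (by simp only [List.length_cons, List.length_nil]; omega)
          refine not_cover_five Lv2 hv2 cu w cb e1 cf (fun z hz => ?_)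
          have hk := key2 e1 w he1L he1a he1b he1f
            hwL (hw cu (by simp)) (hw ca (by simp)) (hw e1 (by simp)) z hz
          rw [hh] at hk; tauto
        have hcv3Le : cv3 ∈ Le → cv3 = ca := by
          intro hmem
          by_contra hne
          obtain ⟨w, hwL, hw⟩ := pick_avoid Lv1 [cu, ca, cv3]
            (by simp only [List.length_cons, List.length_nil]; omega)
          refine not_cover_five Lv2 hv2 cu w cv3 cb cf (fun z hz => ?_)
          have hk := key2 cv3 w hmem hne hv3b hv3f
            hwL (hw cu (by simp)) (hw ca (by simp)) (hw cv3 (by simp)) z hz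
          tauto
        have hcbv1 : cb ∉ Lv1 := by
          intro hmem
          refine not_cover_five Lv2 hv2 cu cv3 cb e1 cf (fun z hz => ?_)
          have hk := key2 e1 cb he1L he1a he1b he1f hmem hcbu hcba he1b.symm z hz
          tauto
        have hcfv1 : cf ∈ Lv1 → cf = ca := by
          intro hmem
          by_contra hne
          refine not_cover_five Lv2 hv2 cu cv3 cb e1 cf (fun z hz => ?_)
          have hk := key2 e1 cf he1L he1a he1b he1f hmem hcucf.symm hne he1f.symm z hz
          tauto
        obtain ⟨v11, hv11L, hv11⟩ := pick_avoid Lv1 [cu, ca, e1]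
          (by simp only [List.length_cons, List.length_nil]; omega)
        obtain ⟨v12, hv12L, hv12⟩ := pick_avoid Lv1 [cu, ca, e2]
          (by simp only [List.length_cons, List.length_nil]; omega)
        have hT1 : Lv2 = {cu, v11, cv3, cb, e1, cf} :=
          cover_six_eq Lv2 hv2 _ _ _ _ _ _ (fun z hz =>
            key2 e1 v11 he1L he1a he1b he1f hv11L (hv11 cu (by simp))
              (hv11 ca (by simp)) (hv11 e1 (by simp)) z hz)
        have hT2 : Lv2 = {cu, v12, cv3, cb, e2, cf} :=
          cover_six_eq Lv2 hv2 _ _ _ _ _ _ (fun z hz =>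
            key2 e2 v12 he2L he2a he2b he2f hv12L (hv12 cu (by simp))
              (hv12 ca (by simp)) (hv12 e2 (by simp)) z hz)
        have he2mem : e2 ∈ Lv2 := by rw [hT2]; simp
        have he2v11 : e2 = v11 := by
          have hk := key2 e1 v11 he1L he1a he1b he1f hv11L (hv11 cu (by simp))
            (hv11 ca (by simp)) (hv11 e1 (by simp)) e2 he2mem
          rcases hk with h | h | h | h | h | h
          · exact absurd (h ▸ he2L) hcuLe
          · exact h
          · exact absurd (h.trans (hcv3Le (h ▸ he2L))) he2a
          · exact absurd h he2b
          · exact absurd h.symm he12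
          · exact absurd h he2f
        rw [← he2v11] at hT1
        have he1mem : e1 ∈ Lv2 := by rw [hT1]; simp
        have hsubv1 : ∀ w ∈ Lv1, w = cu ∨ w = ca ∨ w = e1 ∨ w = e2 := by
          intro w hwL
          by_contra hne
          push_neg at hne
          obtain ⟨h1, h2, h3, h4⟩ := hne
          have hk := key2 e1 w he1L he1a he1b he1f hwL h1 h2 h3 e2 he2mem
          rcases hk with h | h | h | h | h | h
          · exact absurd (h ▸ he2L) hcuLe
          · exact h4 h.symm
          · exact absurd (h.trans (hcv3Le (h ▸ he2L))) he2a
          · exact absurd h he2b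
          · exact absurd h.symm he12
          · exact absurd h he2f
        have hLv1 : Lv1 = {cu, ca, e1, e2} := cover_four_eq Lv1 hv1 _ _ _ _ hsubv1
        have hsubLe : ∀ z ∈ Le, z = ca ∨ z = cb ∨ z = cf ∨ z = e1 ∨ z = e2 := by
          intro z hzL
          by_contra hne
          push_neg at hne
          obtain ⟨h1, h2, h3, h4, h5⟩ := hne
          obtain ⟨w, hwL, hw⟩ := pick_avoid Lv1 [cu, ca, z]
            (by simp only [List.length_cons, List.length_nil]; omega)
          have hk1 := key2 z w hzL h1 h2 h3 hwL (hw cu (by simp)) (hw ca (by simp))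
            (hw z (by simp)) e1 he1mem
          have hk2 := key2 z w hzL h1 h2 h3 hwL (hw cu (by simp)) (hw ca (by simp))
            (hw z (by simp)) e2 he2mem
          have hw1 : e1 = w := by
            rcases hk1 with h | h | h | h | h | h
            · exact absurd (h ▸ he1L) hcuLe
            · exact h
            · exact absurd (h.trans (hcv3Le (h ▸ he1L))) he1a
            · exact absurd h he1b
            · exact absurd h.symm h4
            · exact absurd h he1f
          have hw2 : e2 = w := by
            rcases hk2 with h | h | h | h | h | h
            · exact absurd (h ▸ he2L) hcuLe
            · exact h
            · exact absurd (h.trans (hcv3Le (h ▸ he2L))) he2a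
            · exact absurd h he2b
            · exact absurd h.symm h5
            · exact absurd h he2f
          exact he12 (hw1.trans hw2.symm)
        have hacf : ca ≠ cf := by
          intro hh
          have hsub : Le ⊆ ({ca, cb, e1, e2} : Finset ℕ) := by
            intro z hz
            rcases hsubLe z hz with h | h | h | h | h
            · simp [h]
            · simp [h]
            · rw [h, ← hh]; simp
            · simp [h]
            · simp [h]
          have h1 := Finset.card_le_card hsub
          have h2 := card_le4 ca cb e1 e2
          omega
        have hcfv1' : cf ∉ Lv1 := fun hm => hacf (hcfv1 hm).symm
        exact ⟨e1, e2, he1L, he2L, he12, he1a, he2a, hLv1, hT1, hcbv1, hcfv1'⟩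
      -- two branches over the choice of a's color
      obtain ⟨ca1, ca2, hca1L, hca2L, hca12, hca1F, hca2F⟩ := pick_two La [cu, cc]
        (by simp only [List.length_cons, List.length_nil]; omega)
      obtain ⟨cd1, hcd1L, hcd1⟩ := pick_avoid Ld [cu, ca1, cc]
        (by simp only [List.length_cons, List.length_nil]; omega)
      obtain ⟨cb1, hcb1L, hcb1⟩ := pick_avoid Lb [cu, ca1, cc, cd1]
        (by simp only [List.length_cons, List.length_nil]; omega)
      obtain ⟨cf1, hcf1L, hcf1⟩ := pick_avoid Lf [cv3, cc, cb1]
        (by simp only [List.length_cons, List.length_nil]; omega)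
      obtain ⟨cd2, hcd2L, hcd2⟩ := pick_avoid Ld [cu, ca2, cc]
        (by simp only [List.length_cons, List.length_nil]; omega)
      obtain ⟨cb2, hcb2L, hcb2⟩ := pick_avoid Lb [cu, ca2, cc, cd2]
        (by simp only [List.length_cons, List.length_nil]; omega)
      obtain ⟨cf2, hcf2L, hcf2⟩ := pick_avoid Lf [cv3, cc, cb2]
        (by simp only [List.length_cons, List.length_nil]; omega)
      obtain ⟨e11, e12, he11L, he12L, h112, h11a, h12a, hLv1eq1, hLv2eq1, hcb1v1, hcf1v1⟩ :=
        branch ca1 cd1 cb1 cf1 hca1L (hca1F cu (by simp)) (hca1F cc (by simp))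
          hcd1L (hcd1 cu (by simp)) (hcd1 ca1 (by simp)) (hcd1 cc (by simp))
          hcb1L (hcb1 cu (by simp)) (hcb1 ca1 (by simp)) (hcb1 cc (by simp))
          (hcb1 cd1 (by simp))
          hcf1L (hcf1 cv3 (by simp)) (hcf1 cc (by simp)) (hcf1 cb1 (by simp))
      obtain ⟨e21, e22, he21L, he22L, h212, h21a, h22a, hLv1eq2, hLv2eq2, hcb2v1, hcf2v1⟩ :=
        branch ca2 cd2 cb2 cf2 hca2L (hca2F cu (by simp)) (hca2F cc (by simp))
          hcd2L (hcd2 cu (by simp)) (hcd2 ca2 (by simp)) (hcd2 cc (by simp))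
          hcb2L (hcb2 cu (by simp)) (hcb2 ca2 (by simp)) (hcb2 cc (by simp))
          (hcb2 cd2 (by simp))
          hcf2L (hcf2 cv3 (by simp)) (hcf2 cc (by simp)) (hcf2 cb2 (by simp))
      have hca1v1 : ca1 ∈ Lv1 := by rw [hLv1eq1]; simp
      have hca1mem : ca1 = cu ∨ ca1 = ca2 ∨ ca1 = e21 ∨ ca1 = e22 := by
        have hm : ca1 ∈ Lv1 := hca1v1
        rw [hLv1eq2] at hm
        simpa using hm
      have hca1Lv2 : ca1 ∈ Lv2 := by
        rcases hca1mem with h | h | h | h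
        · exact absurd h (hca1F cu (by simp))
        · exact absurd h hca12
        · rw [hLv2eq2]; simp [h]
        · rw [hLv2eq2]; simp [h]
      rw [hLv2eq1] at hca1Lv2
      simp only [Finset.mem_insert, Finset.mem_singleton] at hca1Lv2
      rcases hca1Lv2 with h | h | h | h | h | h
      · exact hca1F cu (by simp) h
      · exact h12a h.symm
      · exact hA ca1 hca1v1 (by rw [h]; exact hv3L)
      · exact hcb1v1 (by rw [← h]; exact hca1v1)
      · exact h11a h.symm
      · exact hcf1v1 (by rw [← h]; exact hca1v1)
end
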